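/- arXiv:2310.05880 — 6 statements merged into one kernel-verified Lean document; each statement's English description precedes it below -/
import Mathlib

section
/- Let l ≥ 1 and work in the polynomial ring ℂ[a_1,…,a_l]. Define elements c_1, …, c_{2l} ∈ ℂ[a_1,…,a_l] by the identity (u^l + a_1 u^{l−1} + … + a_l)² = u^{2l} + Σ_{k=1}^{2l} c_k u^{2l−k} in ℂ[a_1,…,a_l][u]. Then the ℂ-subalgebra of ℂ[a_1,…,a_l] generated by c_1, …, c_l is the whole ring ℂ[a_1,…,a_l]; in particular the subalgebra generated by all of c_1, …, c_{2l} equals ℂ[a_1,…,a_l]. -/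
open MvPolynomial Finset

/-- `aElem l j` is `a_j`, with `a_0 = 1` and `a_j = 0` for `j > l`. -/
noncomputable def aElem (l j : ℕ) : MvPolynomial (Fin l) ℂ :=
  if _h0 : j = 0 then 1 else if h : j ≤ l then MvPolynomial.X ⟨j - 1, by omega⟩ else 0

/-- The base polynomial `u^l + a_1 u^{l-1} + ⋯ + a_l`. -/
noncomputable def pElem (l : ℕ) : Polynomial (MvPolynomial (Fin l) ℂ) :=
  (Polynomial.X : Polynomial (MvPolynomial (Fin l) ℂ)) ^ l
    + ∑ i : Fin l, Polynomial.C (MvPolynomial.X i) * Polynomial.X ^ (l - ((i : ℕ) + 1))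

lemma coeff_pElem (l n : ℕ) :
    (pElem l).coeff n = if n ≤ l then aElem l (l - n) else 0 := by
  simp only [pElem, Polynomial.coeff_add, Polynomial.coeff_X_pow,
    Polynomial.finset_sum_coeff, Polynomial.coeff_C_mul, mul_ite, mul_one, mul_zero]
  rcases lt_trichotomy n l with h | h | h
  · rw [if_neg (by omega), if_pos (by omega), zero_add]
    rw [Finset.sum_eq_single (⟨l - n - 1, by omega⟩ : Fin l)]
    · rw [if_pos (by simp; omega)]
      rw [aElem, dif_neg (by omega), dif_pos (by omega)]
    · intro i _ hi
      rw [if_neg]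
      intro hn
      apply hi
      apply Fin.ext
      simp only
      omega
    · simp
  · subst h
    rw [if_pos rfl, if_pos le_rfl, Nat.sub_self, aElem, dif_pos rfl]
    rw [Finset.sum_eq_zero, add_zero]
    intro i _
    rw [if_neg (by omega)]
  · rw [if_neg (by omega), if_neg (by omega), zero_add]
    apply Finset.sum_eq_zero
    intro i _
    rw [if_neg (by omega)]

/-- The coefficients `c_1, …, c_{2l}` of the square
`(u^l + a_1 u^{l-1} + ⋯ + a_l)² = u^{2l} + Σ_k c_k u^{2l-k}`,
as elements of `ℂ[a_1, …, a_l]`: `cElem l k` is `c_k` (the coefficient of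
`u^{2l - k}`). -/
noncomputable def cElem (l : ℕ) (k : ℕ) : MvPolynomial (Fin l) ℂ :=
  (((Polynomial.X : Polynomial (MvPolynomial (Fin l) ℂ)) ^ l
      + ∑ i : Fin l, Polynomial.C (MvPolynomial.X i)
          * Polynomial.X ^ (l - ((i : ℕ) + 1))) ^ 2).coeff (l + l - k)

lemma cElem_eq (l k : ℕ) (hk : k ≤ l) :
    cElem l k = ∑ i ∈ Finset.range (k + 1), aElem l i * aElem l (k - i) := by
  have h0 : cElem l k = ∑ m ∈ Finset.range (l + l - k + 1),
      (if m ≤ l then aElem l (l - m) else 0) *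
      (if l + l - k - m ≤ l then aElem l (l - (l + l - k - m)) else 0) := by
    have h1 : cElem l k = ((pElem l) ^ 2).coeff (l + l - k) := rfl
    rw [h1, sq, Polynomial.coeff_mul, Finset.Nat.sum_antidiagonal_eq_sum_range_succ_mk]
    simp only [coeff_pElem]
  rw [h0]
  have hsub : Finset.Icc (l - k) l ⊆ Finset.range (l + l - k + 1) := by
    intro m hm
    simp only [Finset.mem_Icc] at hm
    simp only [Finset.mem_range]
    omega
  have hz : ∀ m ∈ Finset.range (l + l - k + 1), m ∉ Finset.Icc (l - k) l →
      (if m ≤ l then aElem l (l - m) else 0) *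
      (if l + l - k - m ≤ l then aElem l (l - (l + l - k - m)) else 0) = 0 := by
    intro m hm hm'
    simp only [Finset.mem_range] at hm
    simp only [Finset.mem_Icc, not_and_or, not_le] at hm'
    rcases hm' with h | h
    · have : ¬ (l + l - k - m ≤ l) := by omega
      rw [if_neg this, mul_zero]
    · rw [if_neg (by omega), zero_mul]
  rw [← Finset.sum_subset hsub hz]
  refine Finset.sum_nbij' (fun m => l - m) (fun i => l - i) ?_ ?_ ?_ ?_ ?_
  · intro m hm
    simp only [Finset.mem_Icc] at hm
    simp only [Finset.mem_range]
    omega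
  · intro i hi
    simp only [Finset.mem_range] at hi
    simp only [Finset.mem_Icc]
    omega
  · intro m hm
    simp only [Finset.mem_Icc] at hm
    omega
  · intro i hi
    simp only [Finset.mem_range] at hi
    omega
  · intro m hm
    simp only [Finset.mem_Icc] at hm
    rw [if_pos (by omega), if_pos (by omega)]
    have e1 : l - (l + l - k - m) = k - (l - m) := by omega
    rw [e1]

lemma aElem_zero (l : ℕ) : aElem l 0 = 1 := by
  rw [aElem, dif_pos rfl]

lemma aElem_succ_X (l : ℕ) (i : Fin l) : aElem l ((i : ℕ) + 1) = MvPolynomial.X i := by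
  rw [aElem, dif_neg (by omega), dif_pos (by omega)]
  congr 1

/-- The ℂ-subalgebra of `ℂ[a_1,…,a_l]` generated by the first half `c_1, …, c_l` of
the coefficients of `(u^l + a_1 u^{l-1} + ⋯ + a_l)²` is the whole polynomial ring;
in particular the subalgebra generated by all of `c_1, …, c_{2l}` is everything. -/
theorem half_coefficients_generate (l : ℕ) (hl : 1 ≤ l) :
    Algebra.adjoin ℂ (cElem l '' Set.Icc 1 l) = ⊤ ∧
    Algebra.adjoin ℂ (cElem l '' Set.Icc 1 (2 * l)) = ⊤ := by
  set A := Algebra.adjoin ℂ (cElem l '' Set.Icc 1 l) with hA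
  have key : ∀ k, aElem l k ∈ A := by
    intro k
    induction k using Nat.strong_induction_on with
    | _ k ih =>
      rcases Nat.eq_zero_or_pos k with rfl | hk1
      · rw [aElem, dif_pos rfl]; exact one_mem A
      rcases le_or_gt k l with hkl | hkl
      · obtain ⟨k', rfl⟩ : ∃ k', k = k' + 1 := ⟨k - 1, by omega⟩
        have hc : cElem l (k' + 1) ∈ A :=
          Algebra.subset_adjoin ⟨k' + 1, Set.mem_Icc.mpr ⟨hk1, hkl⟩, rfl⟩
        have hform := cElem_eq l (k' + 1) hkl
        rw [Finset.sum_range_succ, Finset.sum_range_succ'] at hform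
        simp only [Nat.sub_self, Nat.sub_zero, aElem_zero, mul_one, one_mul,
          Nat.succ_sub_succ] at hform
        -- hform : cElem l (k'+1) = (∑ i in range k', aElem l (i+1) * aElem l (k' - i)
        --          + aElem l (k'+1)) + aElem l (k'+1)
        have hS : (∑ i ∈ Finset.range k', aElem l (i + 1) * aElem l (k' - i)) ∈ A := by
          refine Subalgebra.sum_mem A fun i hi => ?_
          simp only [Finset.mem_range] at hi
          exact mul_mem (ih _ (by omega)) (ih _ (by omega))
        have h2 : aElem l (k' + 1) + aElem l (k' + 1) =
            cElem l (k' + 1) - ∑ i ∈ Finset.range k', aElem l (i + 1) * aElem l (k' - i) := by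
          rw [hform]; ring
        have h3 : (2 : ℂ) • aElem l (k' + 1) ∈ A := by
          rw [two_smul, h2]
          exact sub_mem hc hS
        have h4 := A.smul_mem h3 ((2 : ℂ)⁻¹)
        rwa [smul_smul, inv_mul_cancel₀ (two_ne_zero), one_smul] at h4
      · rw [aElem, dif_neg (by omega), dif_neg (by omega)]; exact zero_mem A
  have hX : ∀ i : Fin l, MvPolynomial.X i ∈ A := by
    intro i
    have := key ((i : ℕ) + 1)
    rwa [aElem_succ_X] at this
  have h1 : A = ⊤ := by
    rw [eq_top_iff, ← MvPolynomial.adjoin_range_X]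
    apply Algebra.adjoin_le
    rintro x ⟨i, rfl⟩
    exact hX i
  refine ⟨h1, ?_⟩
  rw [eq_top_iff, ← h1]
  exact Algebra.adjoin_mono (Set.image_mono (Set.Icc_subset_Icc_right (by omega)))
end

section
/- Let l ≥ 1 and let A = ℂ[a_1,…,a_l,b] be a polynomial ring. Define c_0, …, c_{2l} ∈ A by the identity (a_1 u^l + a_2 u^{l−1} + … + a_l u + b)² = Σ_{k=0}^{2l} c_k u^{2l−k} in A[u] (so c_0 = a_1² and c_{2l} = b²). Let R be the ℂ-subalgebra of A generated by c_0, c_1, …, c_{2l−1} together with b. Then R and A have the same field of fractions ℂ(a_1,…,a_l,b), A is integral over R, and A is the integral closure of R in this fraction field. -/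
/-- The polynomial `a₁ u^l + a₂ u^{l-1} + ⋯ + a_l u + b` over
`A = ℂ[a₁, …, a_l, b]`, where the variables `a₁, …, a_l` are `X 0, …, X (l-1)` and
`b` is `X l`. -/
noncomputable def genPoly (l : ℕ) : Polynomial (MvPolynomial (Fin (l + 1)) ℂ) :=
  ∑ k : Fin (l + 1), Polynomial.C (MvPolynomial.X k) * Polynomial.X ^ (l - (k : ℕ))

/-- `c_k`, the coefficient of `u^{2l-k}` in `(a₁ u^l + ⋯ + a_l u + b)²`,
so that `c 0 = a₁²` and `c (2l) = b²`. -/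
noncomputable def cOf (l : ℕ) (k : ℕ) : MvPolynomial (Fin (l + 1)) ℂ :=
  ((genPoly l) ^ 2).coeff (2 * l - k)

/-- The subalgebra `R` of `A = ℂ[a₁,…,a_l,b]` generated by `c₀, c₁, …, c_{2l-1}`
together with `b`. -/
noncomputable def subR (l : ℕ) : Subalgebra ℂ (MvPolynomial (Fin (l + 1)) ℂ) :=
  Algebra.adjoin ℂ ((cOf l '' Set.Iic (2 * l - 1)) ∪ {MvPolynomial.X (Fin.last l)})

/-!
Write `f = a₁ u^l + ⋯ + a_l u + b`. All coefficients of `f²` lie in `R` (the constant one is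
`b²`), so `u^{l+1} - f` is a monic factor of the monic polynomial `u^{2l+2} - f²` with coefficients
in `R`, and the coefficients of `f` are integral over `R`.

For the fraction fields, let `F ⊆ Frac A` be the subfield generated by `R` and
`g = 1 + (a₂/a₁) u + ⋯ + (b/a₁) u^l` the reversal of `f / a₁`. The coefficients of `g²` in degrees
`≤ l` are `c_m / c₀ ∈ F`; as `g` has constant term `1` and `2 ≠ 0`, they determine the
coefficients of `g` one after another, so `a_k / a₁ ∈ F`, and then `a₁ = b / (b / a₁) ∈ F`.
Finally `A`, a polynomial ring over a field, is integrally closed.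
-/

open Polynomial

namespace Polynomial

theorem isIntegral_coeff_of_coeff_sq_mem_range {R S : Type*} [CommRing R] [CommRing S]
    [Algebra R S] (p : S[X]) (hp : ∀ m, (p ^ 2).coeff m ∈ Set.range (algebraMap R S))
    (k : ℕ) : IsIntegral R (p.coeff k) := by
  set n := p.natDegree + 1
  obtain ⟨Q, hQ, hQdeg⟩ := exists_degree_eq_of_mem_lifts ((lifts_iff_coeff_lifts _).2 hp)
  have hpdeg : p.degree < n :=
    degree_le_natDegree.trans_lt (by exact_mod_cast Nat.lt_succ_self _)
  have hQdeg' : Q.degree < ↑(n + n) := by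
    rw [hQdeg]
    refine degree_le_natDegree.trans_lt ?_
    have := natDegree_pow_le (p := p) (n := 2)
    exact_mod_cast (by omega : (p ^ 2).natDegree < n + n)
  have hdvd : X ^ n - p ∣ (X ^ (n + n) - Q).map (algebraMap R S) :=
    ⟨X ^ n + p, by rw [Polynomial.map_sub, hQ, Polynomial.map_pow, map_X]; ring⟩
  have hfactor := isIntegral_coeff_of_dvd _ _ (monic_X_pow_sub hQdeg') (monic_X_pow_sub hpdeg)
    hdvd k
  have hXn : IsIntegral R ((X ^ n : S[X]).coeff k) := by
    rw [coeff_X_pow]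
    split_ifs
    exacts [isIntegral_one, isIntegral_zero]
  simpa using hXn.sub hfactor

theorem coeff_mem_of_coeff_sq_mem {L : Type*} [Field L] (F : Subfield L) (h2 : (2 : L) ≠ 0)
    {q : L[X]} (hq0 : q.coeff 0 ∈ F) (hq0' : q.coeff 0 ≠ 0) {n : ℕ}
    (hsq : ∀ m ≤ n, (q ^ 2).coeff m ∈ F) {m : ℕ} (hm : m ≤ n) : q.coeff m ∈ F := by
  induction m using Nat.strong_induction_on with
  | _ m ih =>
    cases m with
    | zero => exact hq0
    | succ k =>
      have hsplit : (q ^ 2).coeff (k + 1) = 2 * q.coeff 0 * q.coeff (k + 1)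
          + ∑ i ∈ Finset.range k, q.coeff (i + 1) * q.coeff (k - i) := by
        rw [sq, coeff_mul, Finset.Nat.sum_antidiagonal_eq_sum_range_succ
          (fun i j ↦ q.coeff i * q.coeff j), Finset.sum_range_succ, Finset.sum_range_succ']
        simp only [Nat.add_sub_add_right, Nat.sub_zero, Nat.sub_self]
        ring
      have hmid : ∑ i ∈ Finset.range k, q.coeff (i + 1) * q.coeff (k - i) ∈ F :=
        sum_mem fun i hi ↦ by
          have := Finset.mem_range.mp hi
          exact mul_mem (ih _ (by omega) (by omega)) (ih _ (by omega) (by omega))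
      have hsolve : q.coeff (k + 1)
          = ((q ^ 2).coeff (k + 1) - ∑ i ∈ Finset.range k, q.coeff (i + 1) * q.coeff (k - i))
            / (2 * q.coeff 0) := by
        rw [hsplit]
        field_simp
        ring
      rw [hsolve]
      exact div_mem (sub_mem (hsq _ hm) hmid) (mul_mem (ofNat_mem F 2) hq0)

theorem reflect_sum {R ι : Type*} [Semiring R] (N : ℕ) (s : Finset ι) (f : ι → R[X]) :
    reflect N (∑ i ∈ s, f i) = ∑ i ∈ s, reflect N (f i) :=
  map_sum (⟨⟨reflect N, reflect_zero⟩, fun p q ↦ reflect_add p q N⟩ : R[X] →+ R[X]) f s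

end Polynomial

theorem Subfield.exists_mul_eq_of_mem_closure_image {A K : Type*} [CommRing A] [Field K]
    (φ : A →+* K) (S : Subring A) {x : K} (hx : x ∈ Subfield.closure (φ '' S)) :
    ∃ r ∈ S, ∃ s ∈ S, φ s ≠ 0 ∧ x * φ s = φ r := by
  rw [Subfield.mem_closure_iff, ← Subring.coe_map, Subring.closure_eq] at hx
  obtain ⟨_, ⟨r, hr, rfl⟩, _, ⟨s, hs, rfl⟩, rfl⟩ := hx
  by_cases hs0 : φ s = 0
  · exact ⟨0, zero_mem S, 1, one_mem S, by simp, by simp [hs0]⟩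
  · exact ⟨r, hr, s, hs, hs0, div_mul_cancel₀ _ hs0⟩

section

variable (l : ℕ)

local notation "A" => MvPolynomial (Fin (l + 1)) ℂ
local notation "K" => FractionRing (MvPolynomial (Fin (l + 1)) ℂ)

noncomputable def genPolyRev : A[X] :=
  ∑ k : Fin (l + 1), C (MvPolynomial.X k) * X ^ (k : ℕ)

theorem coeff_genPolyRev (k : Fin (l + 1)) : (genPolyRev l).coeff k = MvPolynomial.X k := by
  simp [genPolyRev, coeff_C_mul, coeff_X_pow, Fin.val_inj]

theorem natDegree_genPolyRev_le : (genPolyRev l).natDegree ≤ l :=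
  natDegree_sum_le_of_forall_le _ _ fun k _ ↦
    (natDegree_C_mul_X_pow_le _ _).trans (Nat.lt_succ_iff.mp k.2)

theorem genPoly_eq_reflect : genPoly l = reflect l (genPolyRev l) := by
  simp [genPoly, genPolyRev, reflect_sum, revAt_le (Fin.is_le _)]

theorem cOf_eq_coeff_sq {m : ℕ} (hm : m ≤ 2 * l) : cOf l m = ((genPolyRev l) ^ 2).coeff m := by
  have h := natDegree_genPolyRev_le l
  rw [cOf, genPoly_eq_reflect, sq, sq, ← reflect_mul _ _ h h, coeff_reflect,
    revAt_le (by omega)]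
  congr 1
  omega

theorem b_mem_subR : MvPolynomial.X (Fin.last l) ∈ subR l :=
  Algebra.subset_adjoin (Set.mem_union_right _ rfl)

theorem cOf_mem_subR {m : ℕ} (hm : m ≤ 2 * l - 1) : cOf l m ∈ subR l :=
  Algebra.subset_adjoin (Set.mem_union_left _ ⟨m, hm, rfl⟩)

theorem coeff_sq_genPolyRev_mem_subR (m : ℕ) : ((genPolyRev l) ^ 2).coeff m ∈ subR l := by
  have h := natDegree_genPolyRev_le l
  rcases lt_trichotomy m (2 * l) with hm | rfl | hm
  · rw [← cOf_eq_coeff_sq l hm.le]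
    exact cOf_mem_subR l (by omega)
  · rw [coeff_pow_of_natDegree_le h, ← Fin.val_last l, coeff_genPolyRev]
    exact pow_mem (b_mem_subR l) 2
  · rw [coeff_eq_zero_of_natDegree_lt ((natDegree_pow_le).trans_lt (by omega))]
    exact zero_mem _

theorem isIntegral_subR (a : A) : IsIntegral (subR l) a := by
  have hX (k : Fin (l + 1)) : IsIntegral (subR l) (MvPolynomial.X k : A) := by
    rw [← coeff_genPolyRev]
    exact isIntegral_coeff_of_coeff_sq_mem_range _
      (fun m ↦ ⟨⟨_, coeff_sq_genPolyRev_mem_subR l m⟩, rfl⟩) _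
  induction a using MvPolynomial.induction_on with
  | C a => exact isIntegral_algebraMap (x := (⟨_, (subR l).algebraMap_mem a⟩ : subR l))
  | add p q hp hq => exact hp.add hq
  | mul_X p k hp => exact hp.mul (hX k)

noncomputable def fracSubR : Subfield K :=
  Subfield.closure (algebraMap A K '' subR l)

theorem algebraMap_mem_fracSubR {a : A} (ha : a ∈ subR l) : algebraMap A K a ∈ fracSubR l :=
  Subfield.subset_closure ⟨a, ha, rfl⟩

theorem algebraMap_X_mem_fracSubR (k : Fin (l + 1)) :
    algebraMap A K (MvPolynomial.X k) ∈ fracSubR l := by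
  set φ := algebraMap A K
  have hφX (j : Fin (l + 1)) : φ (MvPolynomial.X j) ≠ 0 :=
    (map_ne_zero_iff _ (IsFractionRing.injective A K)).2 (MvPolynomial.X_ne_zero j)
  set x₀ := φ (MvPolynomial.X 0)
  set q : K[X] := C x₀⁻¹ * (genPolyRev l).map φ
  have hq (j : Fin (l + 1)) : q.coeff j = φ (MvPolynomial.X j) / x₀ := by
    simp [q, coeff_C_mul, coeff_genPolyRev, div_eq_inv_mul]
  have hq0 : q.coeff 0 = 1 := by simpa [x₀, hφX 0] using hq 0
  have hc₀ : φ (cOf l 0) = x₀ ^ 2 := by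
    rw [cOf_eq_coeff_sq l (Nat.zero_le _), sq, sq, mul_coeff_zero, ← Fin.val_zero (l + 1),
      coeff_genPolyRev, map_mul]
  have hsq (m : ℕ) (hm : m ≤ l) : (q ^ 2).coeff m ∈ fracSubR l := by
    have : (q ^ 2).coeff m = φ (cOf l m) / φ (cOf l 0) := by
      rw [hc₀, cOf_eq_coeff_sq l (by omega), mul_pow, ← C_pow, ← Polynomial.map_pow,
        coeff_C_mul, coeff_map, inv_pow, div_eq_inv_mul]
    rw [this]
    exact div_mem (algebraMap_mem_fracSubR l (cOf_mem_subR l (by omega)))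
      (algebraMap_mem_fracSubR l (cOf_mem_subR l (by omega)))
  have hratio (j : Fin (l + 1)) : φ (MvPolynomial.X j) / x₀ ∈ fracSubR l := by
    rw [← hq]
    exact coeff_mem_of_coeff_sq_mem _ two_ne_zero (hq0 ▸ one_mem _) (by simp [hq0]) hsq j.is_le
  have hx₀ : x₀ ∈ fracSubR l := by
    have : x₀ = φ (MvPolynomial.X (Fin.last l)) / (φ (MvPolynomial.X (Fin.last l)) / x₀) := by
      field_simp [hφX]
    rw [this]
    exact div_mem (algebraMap_mem_fracSubR l (b_mem_subR l)) (hratio _)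
  rw [← div_mul_cancel₀ (φ (MvPolynomial.X k)) (hφX 0)]
  exact mul_mem (hratio k) hx₀

theorem mem_fracSubR (x : K) : x ∈ fracSubR l := by
  have hA (a : A) : algebraMap A K a ∈ fracSubR l := by
    induction a using MvPolynomial.induction_on with
    | C a => exact algebraMap_mem_fracSubR l ((subR l).algebraMap_mem a)
    | add p q hp hq => rw [map_add]; exact add_mem hp hq
    | mul_X p k hp => rw [map_mul]; exact mul_mem hp (algebraMap_X_mem_fracSubR l k)
  obtain ⟨p, q, -, rfl⟩ := IsFractionRing.div_surjective A x
  exact div_mem (hA p) (hA q)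

end

theorem end_block_normalization_general (l : ℕ) :
    (∀ x : FractionRing (MvPolynomial (Fin (l + 1)) ℂ),
      ∃ r s : MvPolynomial (Fin (l + 1)) ℂ, r ∈ subR l ∧ s ∈ subR l ∧ s ≠ 0 ∧
        x * algebraMap (MvPolynomial (Fin (l + 1)) ℂ)
              (FractionRing (MvPolynomial (Fin (l + 1)) ℂ)) s
          = algebraMap (MvPolynomial (Fin (l + 1)) ℂ)
              (FractionRing (MvPolynomial (Fin (l + 1)) ℂ)) r) ∧
    (∀ x : MvPolynomial (Fin (l + 1)) ℂ,
      ((Subalgebra.val (subR l)).toRingHom).IsIntegralElem x) ∧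
    (∀ x : FractionRing (MvPolynomial (Fin (l + 1)) ℂ),
      ((algebraMap (MvPolynomial (Fin (l + 1)) ℂ)
            (FractionRing (MvPolynomial (Fin (l + 1)) ℂ))).comp
          (Subalgebra.val (subR l)).toRingHom).IsIntegralElem x →
        ∃ a : MvPolynomial (Fin (l + 1)) ℂ,
          algebraMap (MvPolynomial (Fin (l + 1)) ℂ)
              (FractionRing (MvPolynomial (Fin (l + 1)) ℂ)) a = x) := by
  refine ⟨fun x ↦ ?_, isIntegral_subR l, fun x ⟨p, hp, hpx⟩ ↦ ?_⟩
  · obtain ⟨r, hr, s, hs, hs0, h⟩ :=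
      Subfield.exists_mul_eq_of_mem_closure_image _ (subR l).toSubring (mem_fracSubR l x)
    exact ⟨r, s, hr, hs, ne_zero_of_map hs0, h⟩
  · refine IsIntegrallyClosed.isIntegral_iff.mp ⟨p.map (subR l).val.toRingHom, hp.map _, ?_⟩
    rwa [eval₂_map]

/-- Let `A = ℂ[a₁,…,a_l,b]` and let `R` be the subalgebra generated by the
coefficients `c₀, …, c_{2l-1}` of `(a₁ u^l + ⋯ + a_l u + b)²` together with `b`.
Then `R` and `A` have the same field of fractions `ℂ(a₁,…,a_l,b)`, `A` is integral
over `R`, and `A` is the integral closure of `R` in this fraction field. -/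
theorem end_block_normalization (l : ℕ) (hl : 1 ≤ l) :
    (∀ x : FractionRing (MvPolynomial (Fin (l + 1)) ℂ),
      ∃ r s : MvPolynomial (Fin (l + 1)) ℂ, r ∈ subR l ∧ s ∈ subR l ∧ s ≠ 0 ∧
        x * algebraMap (MvPolynomial (Fin (l + 1)) ℂ)
              (FractionRing (MvPolynomial (Fin (l + 1)) ℂ)) s
          = algebraMap (MvPolynomial (Fin (l + 1)) ℂ)
              (FractionRing (MvPolynomial (Fin (l + 1)) ℂ)) r) ∧
    (∀ x : MvPolynomial (Fin (l + 1)) ℂ,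
      ((Subalgebra.val (subR l)).toRingHom).IsIntegralElem x) ∧
    (∀ x : FractionRing (MvPolynomial (Fin (l + 1)) ℂ),
      ((algebraMap (MvPolynomial (Fin (l + 1)) ℂ)
            (FractionRing (MvPolynomial (Fin (l + 1)) ℂ))).comp
          (Subalgebra.val (subR l)).toRingHom).IsIntegralElem x →
        ∃ a : MvPolynomial (Fin (l + 1)) ℂ,
          algebraMap (MvPolynomial (Fin (l + 1)) ℂ)
              (FractionRing (MvPolynomial (Fin (l + 1)) ℂ)) a = x) :=
  end_block_normalization_general l
end

section
/- Let l ≥ 1 and let A = ℂ[a_0,…,a_l] be a polynomial ring, with the ℂ-algebra involution ι defined by ι(a_i) = −a_i for all i. Define c_k = Σ_{i+j=k, 0≤i,j≤l} a_i a_j for 0 ≤ k ≤ 2l (the coefficients of the square (Σ_{i=0}^{l} a_i u^{l−i})²), and let R be the ℂ-subalgebra of A generated by c_0, …, c_{2l}. Let A^ι be the subring of ι-invariants (the polynomials all of whose monomials have even total degree). Then R ⊆ A^ι, R and A^ι have the same field of fractions, A^ι is integral over R, A^ι is integrally closed in its fraction field, and hence A^ι is the integral closure of R in its fraction field. -/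
/-!
Write `P(u) = ∑ aᵢ uⁱ`, so that `c_k` is the coefficient of `uᵏ` in `P²`.

Reading `c₀, c₁, c₂, …` in turn: `c_k = 2 a₀ a_k + ∑ aᵢ aⱼ` over `i + j = k` with `0 < i, j < k`,
and `c₀ · aᵢ aⱼ = (a₀ aᵢ)(a₀ aⱼ)`. By induction every `a₀ a_k`, hence every `aᵢ aⱼ`, lies in
`R[1/c₀]`. The invariants are spanned by the monomials of even degree, i.e. by products of the
`aᵢ aⱼ`, so `A^ι ⊆ R[1/c₀]` and `R`, `A^ι` have the same fraction field.

Reading `c₀, c₂, c₄, …` instead: modulo the `aᵢ` with `i < k`, `c_{2k} ≡ a_k²`, so every `a_k`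
lies in the radical of `(c₀, …, c_{2l})`. As the `c_k` are homogeneous of positive degree, a
graded Nakayama argument makes `A` a finite `R`-module: a homogeneous polynomial of large degree
is a combination of the `c_k` with coefficients of smaller degree. So `A` is integral over `R`.

Finally `A` is a UFD, hence integrally closed, and an element `a ∈ A` with `a s = r` for
invariant `r` and `s ≠ 0` is itself invariant.
-/

/-- The ℂ-algebra involution `ι` of `A = ℂ[a₀, …, a_l]` with `ι (aᵢ) = -aᵢ`. -/
noncomputable def negInvolution (l : ℕ) :
    MvPolynomial (Fin (l + 1)) ℂ →ₐ[ℂ] MvPolynomial (Fin (l + 1)) ℂ :=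
  MvPolynomial.aeval (fun i : Fin (l + 1) => -MvPolynomial.X i)

/-- The invariant subring `A^ι`. -/
noncomputable def invSub (l : ℕ) : Subalgebra ℂ (MvPolynomial (Fin (l + 1)) ℂ) :=
  AlgHom.equalizer (negInvolution l) (AlgHom.id ℂ (MvPolynomial (Fin (l + 1)) ℂ))

/-- `c_k = Σ_{i+j=k} aᵢ aⱼ`, the coefficients of `(Σ_{i=0}^{l} aᵢ u^{l-i})²`. -/
noncomputable def cSym (l : ℕ) (k : ℕ) : MvPolynomial (Fin (l + 1)) ℂ :=
  ∑ i : Fin (l + 1), ∑ j : Fin (l + 1),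
    if (i : ℕ) + (j : ℕ) = k then MvPolynomial.X i * MvPolynomial.X j else 0

/-- The subalgebra `R` of `A` generated by `c₀, …, c_{2l}`. -/
noncomputable def cSubR (l : ℕ) : Subalgebra ℂ (MvPolynomial (Fin (l + 1)) ℂ) :=
  Algebra.adjoin ℂ (cSym l '' Set.Iic (2 * l))

open Finset
open scoped Polynomial

namespace Subalgebra

variable {K A : Type*} [CommRing K] [CommRing A] [Algebra K A]

theorem mem_of_two_mul_mem [Invertible (2 : K)] {S : Subalgebra K A} {x : A} (h : 2 * x ∈ S) :
    x ∈ S := by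
  have h' := S.smul_mem h (⅟2 : K)
  rwa [Algebra.smul_def, ← mul_assoc, ← map_ofNat (algebraMap K A) 2, ← map_mul, invOf_mul_self,
    map_one, one_mul] at h'

/-- `S[1/s] ∩ A`. -/
def awaySaturation (S : Subalgebra K A) {s : A} (hs : s ∈ S) : Subalgebra K A where
  carrier := {x | ∃ n : ℕ, s ^ n * x ∈ S}
  mul_mem' := by
    rintro x y ⟨n, hx⟩ ⟨m, hy⟩
    refine ⟨n + m, ?_⟩
    rw [show s ^ (n + m) * (x * y) = (s ^ n * x) * (s ^ m * y) by ring]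
    exact mul_mem hx hy
  add_mem' := by
    rintro x y ⟨n, hx⟩ ⟨m, hy⟩
    refine ⟨n + m, ?_⟩
    rw [show s ^ (n + m) * (x + y) = s ^ m * (s ^ n * x) + s ^ n * (s ^ m * y) by ring]
    exact add_mem (mul_mem (pow_mem hs m) hx) (mul_mem (pow_mem hs n) hy)
  algebraMap_mem' c := ⟨0, by simpa only [pow_zero, one_mul] using S.algebraMap_mem c⟩

variable {S : Subalgebra K A} {s : A} {hs : s ∈ S} {x : A}

theorem mem_awaySaturation : x ∈ S.awaySaturation hs ↔ ∃ n : ℕ, s ^ n * x ∈ S := Iff.rfl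

theorem le_awaySaturation : S ≤ S.awaySaturation hs :=
  fun _ hx => ⟨0, by rwa [pow_zero, one_mul]⟩

theorem mem_awaySaturation_of_mul_mem (h : s * x ∈ S.awaySaturation hs) :
    x ∈ S.awaySaturation hs := by
  obtain ⟨n, hn⟩ := h
  exact ⟨n + 1, by rwa [pow_succ, mul_assoc]⟩

end Subalgebra

namespace Polynomial

variable {A : Type*} [CommRing A]

theorem coeff_mem_radical_of_coeff_sq_mem {I : Ideal A} {p : A[X]} {n : ℕ}
    (h : ∀ k ≤ 2 * n, (p ^ 2).coeff k ∈ I) : ∀ i ≤ n, p.coeff i ∈ I.radical := by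
  intro i
  induction i using Nat.strong_induction_on with
  | _ i ih =>
  intro hi
  have hdiag : (i, i) ∈ antidiagonal (2 * i) :=
    HasAntidiagonal.mem_antidiagonal.2 (two_mul i).symm
  have hrest : ∀ q ∈ (antidiagonal (2 * i)).erase (i, i),
      p.coeff q.1 * p.coeff q.2 ∈ I.radical := by
    rintro ⟨a, b⟩ hq
    rw [mem_erase, HasAntidiagonal.mem_antidiagonal, Ne, Prod.mk.injEq] at hq
    rcases lt_or_ge a i with ha | ha
    · exact Ideal.mul_mem_right _ _ (ih a ha (by omega))
    · exact Ideal.mul_mem_left _ _ (ih b (by omega) (by omega))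
  have hsq : p.coeff i ^ 2 ∈ I.radical := by
    have hk := Ideal.le_radical (h (2 * i) (by omega))
    rw [sq p, coeff_mul, ← add_sum_erase _ _ hdiag] at hk
    simpa only [sq, add_sub_cancel_right] using I.radical.sub_mem hk (sum_mem hrest)
  exact Ideal.mem_radical_of_pow_mem hsq

theorem coeff_mul_coeff_mem_of_coeff_sq_mem {K : Type*} [CommRing K] [Algebra K A]
    [Invertible (2 : K)] {S : Subalgebra K A} {p : A[X]} {n : ℕ}
    (hS : ∀ y, p.coeff 0 ^ 2 * y ∈ S → y ∈ S) (h : ∀ k ≤ n, (p ^ 2).coeff k ∈ S) :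
    ∀ i ≤ n, ∀ j ≤ n, p.coeff i * p.coeff j ∈ S := by
  have hprod : ∀ i j, p.coeff 0 * p.coeff i ∈ S → p.coeff 0 * p.coeff j ∈ S →
      p.coeff i * p.coeff j ∈ S := fun i j hi hj =>
    hS _ (by simpa only [sq, mul_mul_mul_comm] using mul_mem hi hj)
  have h0 : ∀ k ≤ n, p.coeff 0 * p.coeff k ∈ S := by
    intro k
    induction k using Nat.strong_induction_on with
    | _ k ih =>
    intro hk
    have hck := h k hk
    rw [sq, coeff_mul] at hck
    match k, ih, hck with
    | 0, _, hck => simpa using hck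
    | 1, _, hck =>
      refine Subalgebra.mem_of_two_mul_mem (K := K) ?_
      simpa [Nat.sum_antidiagonal_succ, two_mul, mul_comm] using hck
    | m + 2, ih, hck =>
      rw [Nat.sum_antidiagonal_succ, Nat.sum_antidiagonal_succ'] at hck
      have hmid : ∑ q ∈ antidiagonal m, p.coeff (q.1 + 1) * p.coeff (q.2 + 1) ∈ S :=
        sum_mem fun q hq => by
          rw [HasAntidiagonal.mem_antidiagonal] at hq
          exact hprod _ _ (ih _ (by omega) (by omega)) (ih _ (by omega) (by omega))
      refine Subalgebra.mem_of_two_mul_mem (K := K) ?_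
      convert sub_mem hck hmid using 1
      ring
  exact fun i hi j hj => hprod i j (h0 i hi) (h0 j hj)

end Polynomial

namespace MvPolynomial

variable {σ R : Type*}

section CommSemiring

variable [CommSemiring R]

theorem monomial_one_mem_of_even_degree {S : Subalgebra R (MvPolynomial σ R)}
    (hS : ∀ i j, X i * X j ∈ S) {m : σ →₀ ℕ} (hm : Even m.degree) : monomial m (1 : R) ∈ S := by
  classical
  suffices key : ∀ t : Multiset σ,
      (Even (Multiset.card t) → monomial (Multiset.toFinsupp t) (1 : R) ∈ S) ∧
      (Odd (Multiset.card t) → ∀ i, X i * monomial (Multiset.toFinsupp t) (1 : R) ∈ S) by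
    have h := (key (Finsupp.toMultiset m)).1
    rw [Finsupp.card_toMultiset, Finsupp.toMultiset_toFinsupp] at h
    exact h hm
  intro t
  induction t using Multiset.induction_on with
  | empty => simp
  | cons a t ih =>
    have hcons : monomial (Multiset.toFinsupp (a ::ₘ t)) (1 : R) =
        X a * monomial (Multiset.toFinsupp t) 1 := by
      rw [← Multiset.singleton_add, Multiset.toFinsupp_add, Multiset.toFinsupp_singleton, X,
        monomial_mul, one_mul]
    rw [hcons, Multiset.card_cons, Nat.even_add_one, Nat.odd_add_one, Nat.not_even_iff_odd,
      Nat.not_odd_iff_even]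
    refine ⟨(ih.2 · a), fun he i => ?_⟩
    rw [← mul_assoc]
    exact mul_mem (hS i a) (ih.1 he)

theorem mem_of_forall_even_degree {S : Subalgebra R (MvPolynomial σ R)}
    (hS : ∀ i j, X i * X j ∈ S) {f : MvPolynomial σ R}
    (hf : ∀ m ∈ f.support, Even m.degree) : f ∈ S := by
  rw [f.as_sum]
  refine sum_mem fun m hm => ?_
  rw [← mul_one (coeff m f), ← smul_eq_mul, ← smul_monomial]
  exact S.smul_mem (monomial_one_mem_of_even_degree hS (hf m hm)) _

end CommSemiring

section CommRing

variable [CommRing R]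

section
attribute [local instance] gradedAlgebra

theorem homogeneousComponent_mul_of_isHomogeneous {p : MvPolynomial σ R} {e : ℕ}
    (hp : p.IsHomogeneous e) (g : MvPolynomial σ R) (n : ℕ) :
    homogeneousComponent n (g * p) =
      if e ≤ n then homogeneousComponent (n - e) g * p else 0 := by
  have hdec : ∀ (x : MvPolynomial σ R) k,
      (DirectSum.decompose (homogeneousSubmodule σ R) x k : MvPolynomial σ R) =
        homogeneousComponent k x :=
    decomposition.decompose'_apply
  simpa only [hdec] using
    DirectSum.coe_decompose_mul_of_right_mem (homogeneousSubmodule σ R) n (a := g)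
      ((mem_homogeneousSubmodule e p).mpr hp)

end

theorem IsHomogeneous.mem_pow_idealOfVars {p : MvPolynomial σ R} {n N : ℕ}
    (hp : p.IsHomogeneous n) (hN : N ≤ n) : p ∈ idealOfVars σ R ^ N :=
  (mem_pow_idealOfVars_iff N p).2 fun v hv => by
    rw [Finsupp.degree_eq_weight_one]
    exact hN.trans_eq (hp (mem_support_iff.mp hv)).symm

variable {s : Set (MvPolynomial σ R)}

theorem homogeneousComponent_mem_span_of_mem_ideal_span
    (hs : ∀ p ∈ s, ∃ e, 0 < e ∧ p.IsHomogeneous e) {q : MvPolynomial σ R}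
    (hq : q ∈ Ideal.span s) (n : ℕ) :
    homogeneousComponent n q ∈
      Submodule.span (Algebra.adjoin R s) {g | g.totalDegree < n} := by
  obtain ⟨c, hc, rfl⟩ := Submodule.mem_span_set.mp hq
  rw [Finsupp.sum, map_sum]
  refine Submodule.sum_mem _ fun p hp => ?_
  obtain ⟨e, he, hpe⟩ := hs p (hc hp)
  rw [smul_eq_mul, homogeneousComponent_mul_of_isHomogeneous hpe]
  split_ifs with hen
  · rw [mul_comm, ← smul_eq_mul]
    exact Submodule.smul_mem _ (⟨p, Algebra.subset_adjoin (hc hp)⟩ : Algebra.adjoin R s)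
      (Submodule.subset_span
        ((homogeneousComponent_isHomogeneous _ _).totalDegree_le.trans_lt (by omega)))
  · exact zero_mem _

theorem finite_adjoin_of_forall_X_mem_radical [Finite σ]
    (hs : ∀ p ∈ s, ∃ e, 0 < e ∧ p.IsHomogeneous e)
    (hX : ∀ i, X i ∈ (Ideal.span s).radical) :
    Module.Finite (Algebra.adjoin R s) (MvPolynomial σ R) := by
  obtain ⟨N, hN⟩ := Ideal.exists_pow_le_of_le_radical_of_fg
    (Ideal.span_le.2 (Set.range_subset_iff.2 hX)) (idealOfVars_fg σ R)
  set W := Submodule.span (Algebra.adjoin R s)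
    ((monomial · (1 : R)) '' {v : σ →₀ ℕ | v.degree < N})
  have hlow : ∀ g : MvPolynomial σ R, g.totalDegree < N → g ∈ W := by
    intro g hg
    rw [g.as_sum]
    refine Submodule.sum_mem _ fun v hv => ?_
    rw [← mul_one (coeff v g), ← smul_eq_mul, ← smul_monomial]
    exact W.smul_of_tower_mem _
      (Submodule.subset_span ⟨v, (le_totalDegree hv).trans_lt hg, rfl⟩)
  have hall : ∀ n, ∀ g : MvPolynomial σ R, g.totalDegree < n → g ∈ W := by
    intro n
    induction n with
    | zero => simp
    | succ n ih =>
      intro g hg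
      rw [← sum_homogeneousComponent g]
      refine Submodule.sum_mem _ fun m hm => ?_
      have hmn : m ≤ n := by rw [mem_range] at hm; omega
      have hhom := homogeneousComponent_isHomogeneous m g
      by_cases hmN : m < N
      · exact hlow _ (hhom.totalDegree_le.trans_lt hmN)
      · have hmem := hN (hhom.mem_pow_idealOfVars (not_lt.1 hmN))
        rw [← homogeneousComponent_eq_self hhom]
        exact Submodule.span_le.2 (fun f hf => ih f (lt_of_lt_of_le hf hmn))
          (homogeneousComponent_mem_span_of_mem_ideal_span hs hmem m)
  have hfin : {v : σ →₀ ℕ | v.degree < N}.Finite :=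
    (Finsupp.finite_of_degree_le N).subset fun _ (hv : _ < N) => hv.le
  exact ⟨Submodule.fg_def.2 ⟨_, hfin.image _,
    eq_top_iff.2 fun g _ => hall _ g (Nat.lt_succ_self _)⟩⟩

end CommRing

end MvPolynomial

theorem AlgHom.exists_mem_equalizer_algebraMap_eq {K A : Type*} [CommSemiring K] [CommRing A]
    [IsDomain A] [IsIntegrallyClosed A] [Algebra K A] (φ : A →ₐ[K] A) {x : FractionRing A}
    (hx : ∃ r s : A, r ∈ φ.equalizer (AlgHom.id K A) ∧ s ∈ φ.equalizer (AlgHom.id K A) ∧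
      s ≠ 0 ∧ x * algebraMap A (FractionRing A) s = algebraMap A (FractionRing A) r)
    (hint : IsIntegral A x) :
    ∃ a : A, a ∈ φ.equalizer (AlgHom.id K A) ∧ algebraMap A (FractionRing A) a = x := by
  obtain ⟨a, rfl⟩ := IsIntegrallyClosed.isIntegral_iff.mp hint
  obtain ⟨r, s, hr, hs, hs0, h⟩ := hx
  have has : a * s = r := IsFractionRing.injective A (FractionRing A) (by rw [map_mul, h])
  refine ⟨a, mul_right_cancel₀ hs0 ?_, rfl⟩
  simp only [AlgHom.mem_equalizer, AlgHom.id_apply] at hr hs ⊢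
  calc φ a * s = φ (a * s) := by rw [map_mul, hs]
    _ = a * s := by rw [has, hr]

open MvPolynomial

/-- The reversal of `∑ aᵢ u^{l-i}`, so that `c_k` is the coefficient of `uᵏ` in its square. -/
noncomputable def genericPoly (l : ℕ) : (MvPolynomial (Fin (l + 1)) ℂ)[X] :=
  ∑ i : Fin (l + 1), Polynomial.monomial i (X i)

theorem coeff_genericPoly (l : ℕ) (i : Fin (l + 1)) : (genericPoly l).coeff i = X i := by
  rw [genericPoly, Polynomial.finsetSum_coeff, Finset.sum_eq_single i]
  · exact Polynomial.coeff_monomial_same _ _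
  · exact fun j _ hji => Polynomial.coeff_monomial_of_ne _ (Fin.val_injective.ne hji.symm)
  · simp

theorem cSym_eq_coeff_genericPoly_sq (l k : ℕ) : cSym l k = (genericPoly l ^ 2).coeff k := by
  simp only [cSym, genericPoly, sq, Finset.sum_mul_sum, Polynomial.monomial_mul_monomial,
    Polynomial.finsetSum_coeff, Polynomial.coeff_monomial]

theorem coeff_genericPoly_zero_sq (l : ℕ) : (genericPoly l).coeff 0 ^ 2 = cSym l 0 := by
  rw [cSym_eq_coeff_genericPoly_sq, sq, sq, Polynomial.mul_coeff_zero]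

theorem cSym_zero_ne_zero (l : ℕ) : cSym l 0 ≠ 0 := by
  rw [← coeff_genericPoly_zero_sq, ← Fin.val_zero (l + 1), coeff_genericPoly]
  exact pow_ne_zero 2 (X_ne_zero _)

theorem cSym_mem_cSubR {l k : ℕ} (hk : k ≤ 2 * l) : cSym l k ∈ cSubR l :=
  Algebra.subset_adjoin ⟨k, hk, rfl⟩

theorem cSym_isHomogeneous (l k : ℕ) : (cSym l k).IsHomogeneous 2 :=
  IsHomogeneous.sum _ _ _ fun _ _ => IsHomogeneous.sum _ _ _ fun _ _ => by
    split_ifs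
    · exact (isHomogeneous_X _ _).mul (isHomogeneous_X _ _)
    · exact isHomogeneous_zero _ _ _

theorem X_mem_radical_span_cSym (l : ℕ) (i : Fin (l + 1)) :
    X i ∈ (Ideal.span (cSym l '' Set.Iic (2 * l))).radical := by
  rw [← coeff_genericPoly]
  refine Polynomial.coeff_mem_radical_of_coeff_sq_mem (n := l) (fun k hk => ?_) i
    (Nat.le_of_lt_succ i.isLt)
  rw [← cSym_eq_coeff_genericPoly_sq]
  exact Ideal.subset_span ⟨k, hk, rfl⟩

theorem module_finite_cSubR (l : ℕ) :
    Module.Finite (cSubR l) (MvPolynomial (Fin (l + 1)) ℂ) := by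
  refine finite_adjoin_of_forall_X_mem_radical ?_ (X_mem_radical_span_cSym l)
  rintro _ ⟨k, -, rfl⟩
  exact ⟨2, two_pos, cSym_isHomogeneous l k⟩

theorem X_mul_X_mem_awaySaturation (l : ℕ) (i j : Fin (l + 1)) :
    X i * X j ∈ (cSubR l).awaySaturation (cSym_mem_cSubR (Nat.zero_le _)) := by
  rw [← coeff_genericPoly, ← coeff_genericPoly]
  refine Polynomial.coeff_mul_coeff_mem_of_coeff_sq_mem (K := ℂ) (n := l) (fun y hy => ?_)
    (fun k hk => ?_) i (Nat.le_of_lt_succ i.isLt) j (Nat.le_of_lt_succ j.isLt)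
  · rw [coeff_genericPoly_zero_sq] at hy
    exact Subalgebra.mem_awaySaturation_of_mul_mem hy
  · rw [← cSym_eq_coeff_genericPoly_sq]
    exact Subalgebra.le_awaySaturation (cSym_mem_cSubR (by omega))

theorem negInvolution_monomial (l : ℕ) (m : Fin (l + 1) →₀ ℕ) (c : ℂ) :
    negInvolution l (monomial m c) = monomial m ((-1) ^ m.degree * c) := by
  rw [negInvolution, aeval_monomial, monomial_eq, Finsupp.prod, Finsupp.prod,
    Finset.prod_congr rfl fun i _ => neg_pow (X i : MvPolynomial _ ℂ) (m i),
    Finset.prod_mul_distrib, Finset.prod_pow_eq_pow_sum, ← Finsupp.degree_apply]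
  simp only [map_mul, map_pow, map_neg, map_one, MvPolynomial.algebraMap_eq]
  ring

theorem coeff_negInvolution (l : ℕ) (f : MvPolynomial (Fin (l + 1)) ℂ)
    (m : Fin (l + 1) →₀ ℕ) : coeff m (negInvolution l f) = (-1) ^ m.degree * coeff m f := by
  induction f using MvPolynomial.induction_on' with
  | monomial v c =>
    rw [negInvolution_monomial, coeff_monomial, coeff_monomial]
    split_ifs with hvm
    · rw [hvm]
    · rw [mul_zero]
  | add p q hp hq => rw [map_add, coeff_add, coeff_add, hp, hq, mul_add]

theorem even_degree_of_mem_invSub {l : ℕ} {f : MvPolynomial (Fin (l + 1)) ℂ}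
    (hf : f ∈ invSub l) {m : Fin (l + 1) →₀ ℕ} (hm : m ∈ f.support) : Even m.degree := by
  by_contra hodd
  have h := coeff_negInvolution l f m
  rw [(AlgHom.mem_equalizer ..).1 hf, AlgHom.id_apply, (Nat.not_even_iff_odd.1 hodd).neg_one_pow,
    neg_one_mul, eq_neg_iff_add_eq_zero, ← two_mul, mul_eq_zero] at h
  exact mem_support_iff.1 hm (h.resolve_left two_ne_zero)

theorem cSym_mem_invSub (l k : ℕ) : cSym l k ∈ invSub l := by
  simp only [invSub, AlgHom.mem_equalizer, AlgHom.id_apply, cSym, map_sum, apply_ite, map_mul,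
    map_zero, negInvolution, MvPolynomial.aeval_X, neg_mul_neg]

theorem cSubR_le_invSub (l : ℕ) : cSubR l ≤ invSub l :=
  Algebra.adjoin_le fun _ ⟨k, _, hk⟩ => hk ▸ cSym_mem_invSub l k

theorem invSub_le_awaySaturation (l : ℕ) :
    invSub l ≤ (cSubR l).awaySaturation (cSym_mem_cSubR (Nat.zero_le _)) := fun _ hf =>
  mem_of_forall_even_degree (X_mul_X_mem_awaySaturation l) fun _ => even_degree_of_mem_invSub hf

theorem middle_block_invariants_general (l : ℕ) :
    cSubR l ≤ invSub l ∧
    (∀ x : MvPolynomial (Fin (l + 1)) ℂ, x ∈ invSub l →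
      ∃ r s : MvPolynomial (Fin (l + 1)) ℂ, r ∈ cSubR l ∧ s ∈ cSubR l ∧ s ≠ 0 ∧
        s * x = r) ∧
    (∀ x : MvPolynomial (Fin (l + 1)) ℂ, x ∈ invSub l →
      ((Subalgebra.val (cSubR l)).toRingHom).IsIntegralElem x) ∧
    (∀ x : FractionRing (MvPolynomial (Fin (l + 1)) ℂ),
      (∃ r s : MvPolynomial (Fin (l + 1)) ℂ, r ∈ invSub l ∧ s ∈ invSub l ∧ s ≠ 0 ∧
        x * algebraMap (MvPolynomial (Fin (l + 1)) ℂ)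
              (FractionRing (MvPolynomial (Fin (l + 1)) ℂ)) s
          = algebraMap (MvPolynomial (Fin (l + 1)) ℂ)
              (FractionRing (MvPolynomial (Fin (l + 1)) ℂ)) r) →
      ((algebraMap (MvPolynomial (Fin (l + 1)) ℂ)
            (FractionRing (MvPolynomial (Fin (l + 1)) ℂ))).comp
          (Subalgebra.val (invSub l)).toRingHom).IsIntegralElem x →
      ∃ a : MvPolynomial (Fin (l + 1)) ℂ, a ∈ invSub l ∧
        algebraMap (MvPolynomial (Fin (l + 1)) ℂ)
            (FractionRing (MvPolynomial (Fin (l + 1)) ℂ)) a = x) ∧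
    (∀ x : FractionRing (MvPolynomial (Fin (l + 1)) ℂ),
      (∃ r s : MvPolynomial (Fin (l + 1)) ℂ, r ∈ invSub l ∧ s ∈ invSub l ∧ s ≠ 0 ∧
        x * algebraMap (MvPolynomial (Fin (l + 1)) ℂ)
              (FractionRing (MvPolynomial (Fin (l + 1)) ℂ)) s
          = algebraMap (MvPolynomial (Fin (l + 1)) ℂ)
              (FractionRing (MvPolynomial (Fin (l + 1)) ℂ)) r) →
      ((algebraMap (MvPolynomial (Fin (l + 1)) ℂ)
            (FractionRing (MvPolynomial (Fin (l + 1)) ℂ))).comp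
          (Subalgebra.val (cSubR l)).toRingHom).IsIntegralElem x →
      ∃ a : MvPolynomial (Fin (l + 1)) ℂ, a ∈ invSub l ∧
        algebraMap (MvPolynomial (Fin (l + 1)) ℂ)
            (FractionRing (MvPolynomial (Fin (l + 1)) ℂ)) a = x) := by
  refine ⟨cSubR_le_invSub l, fun x hx => ?_, fun x _ => ?_, fun x hx hint => ?_,
    fun x hx hint => ?_⟩
  · obtain ⟨n, hn⟩ := Subalgebra.mem_awaySaturation.1 (invSub_le_awaySaturation l hx)
    exact ⟨_, _, hn, pow_mem (cSym_mem_cSubR (Nat.zero_le _)) n,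
      pow_ne_zero n (cSym_zero_ne_zero l), rfl⟩
  · have := module_finite_cSubR l
    exact Algebra.IsIntegral.isIntegral x
  · exact (negInvolution l).exists_mem_equalizer_algebraMap_eq hx hint.of_comp
  · exact (negInvolution l).exists_mem_equalizer_algebraMap_eq hx hint.of_comp

/-- Let `A = ℂ[a₀,…,a_l]` with the involution `ι : aᵢ ↦ -aᵢ`, let
`c_k = Σ_{i+j=k} aᵢ aⱼ` and let `R` be the subalgebra generated by `c₀, …, c_{2l}`.
Then `R ⊆ A^ι`, `R` and `A^ι` have the same field of fractions, `A^ι` is integral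
over `R`, `A^ι` is integrally closed in its fraction field, and hence `A^ι` is the
integral closure of `R` in its fraction field. -/
theorem middle_block_invariants (l : ℕ) (hl : 1 ≤ l) :
    cSubR l ≤ invSub l ∧
    (∀ x : MvPolynomial (Fin (l + 1)) ℂ, x ∈ invSub l →
      ∃ r s : MvPolynomial (Fin (l + 1)) ℂ, r ∈ cSubR l ∧ s ∈ cSubR l ∧ s ≠ 0 ∧
        s * x = r) ∧
    (∀ x : MvPolynomial (Fin (l + 1)) ℂ, x ∈ invSub l →
      ((Subalgebra.val (cSubR l)).toRingHom).IsIntegralElem x) ∧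
    (∀ x : FractionRing (MvPolynomial (Fin (l + 1)) ℂ),
      (∃ r s : MvPolynomial (Fin (l + 1)) ℂ, r ∈ invSub l ∧ s ∈ invSub l ∧ s ≠ 0 ∧
        x * algebraMap (MvPolynomial (Fin (l + 1)) ℂ)
              (FractionRing (MvPolynomial (Fin (l + 1)) ℂ)) s
          = algebraMap (MvPolynomial (Fin (l + 1)) ℂ)
              (FractionRing (MvPolynomial (Fin (l + 1)) ℂ)) r) →
      ((algebraMap (MvPolynomial (Fin (l + 1)) ℂ)
            (FractionRing (MvPolynomial (Fin (l + 1)) ℂ))).comp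
          (Subalgebra.val (invSub l)).toRingHom).IsIntegralElem x →
      ∃ a : MvPolynomial (Fin (l + 1)) ℂ, a ∈ invSub l ∧
        algebraMap (MvPolynomial (Fin (l + 1)) ℂ)
            (FractionRing (MvPolynomial (Fin (l + 1)) ℂ)) a = x) ∧
    (∀ x : FractionRing (MvPolynomial (Fin (l + 1)) ℂ),
      (∃ r s : MvPolynomial (Fin (l + 1)) ℂ, r ∈ invSub l ∧ s ∈ invSub l ∧ s ≠ 0 ∧
        x * algebraMap (MvPolynomial (Fin (l + 1)) ℂ)
              (FractionRing (MvPolynomial (Fin (l + 1)) ℂ)) s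
          = algebraMap (MvPolynomial (Fin (l + 1)) ℂ)
              (FractionRing (MvPolynomial (Fin (l + 1)) ℂ)) r) →
      ((algebraMap (MvPolynomial (Fin (l + 1)) ℂ)
            (FractionRing (MvPolynomial (Fin (l + 1)) ℂ))).comp
          (Subalgebra.val (cSubR l)).toRingHom).IsIntegralElem x →
      ∃ a : MvPolynomial (Fin (l + 1)) ℂ, a ∈ invSub l ∧
        algebraMap (MvPolynomial (Fin (l + 1)) ℂ)
            (FractionRing (MvPolynomial (Fin (l + 1)) ℂ)) a = x) :=
  middle_block_invariants_general l
end

section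
/- Let p be a special D-partition of 2N. Then the number of marked pairs of p is at most s(d(p)), where d(p) = D(p^T) is the Spaltenstein dual of p. That is, for every marked pair of p there is an independent non-special degeneration of the dual special partition d(p). -/
/-- `p : ℕ → ℕ` represents a partition of `n`: `p i` is the `i`-th part (1-indexed),
non-increasing, with `p 0 = 0` and `p i = 0` for `i` beyond the number of parts. -/
def IsPartitionFn (n : ℕ) (p : ℕ → ℕ) : Prop :=
  p 0 = 0 ∧ (∀ i j, 1 ≤ i → i ≤ j → p j ≤ p i) ∧ (∀ i, n < i → p i = 0) ∧
    ∑ i ∈ Finset.Icc 1 n, p i = n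

/-- The multiplicity of `k` as a part of `p`. -/
noncomputable def partMult (p : ℕ → ℕ) (k : ℕ) : ℕ :=
  {i : ℕ | 1 ≤ i ∧ p i = k}.ncard

/-- The transpose (conjugate) partition: `(p^T)_k = #{i ≥ 1 : p_i ≥ k}`. -/
noncomputable def transposeFn (p : ℕ → ℕ) : ℕ → ℕ :=
  fun k => {i : ℕ | 1 ≤ i ∧ k ≤ p i}.ncard

/-- A D-partition of `n`: every even part occurs with even multiplicity. -/
def IsDPartition (n : ℕ) (p : ℕ → ℕ) : Prop :=
  IsPartitionFn n p ∧ ∀ k, Even k → Even (partMult p k)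

/-- A special D-partition: a D-partition whose transpose is a C-partition
(every odd part occurs with even multiplicity). -/
def IsSpecialDPartition (n : ℕ) (p : ℕ → ℕ) : Prop :=
  IsDPartition n p ∧ ∀ k, Odd k → Even (partMult (transposeFn p) k)
/-- `lam` dominates `mu` (componentwise partial sums). -/
def DominatesFn (lam mu : ℕ → ℕ) : Prop :=
  ∀ m, ∑ i ∈ Finset.Icc 1 m, mu i ≤ ∑ i ∈ Finset.Icc 1 m, lam i

/-- `mu` is the D-collapse of `lam`: the greatest (in dominance order)
D-partition of `n` dominated by `lam`. -/
def IsDCollapseOf (n : ℕ) (lam mu : ℕ → ℕ) : Prop :=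
  IsDPartition n mu ∧ DominatesFn lam mu ∧
    ∀ nu, IsDPartition n nu → DominatesFn lam nu → DominatesFn mu nu

open Classical in
/-- The D-collapse of `lam`, as a function. -/
noncomputable def Dcollapse (n : ℕ) (lam : ℕ → ℕ) : ℕ → ℕ :=
  if h : ∃ mu, IsDCollapseOf n lam mu then h.choose else fun _ => 0

/-- The Spaltenstein dual `d(p) = D(pᵀ)`. -/
noncomputable def spaltDual (n : ℕ) (p : ℕ → ℕ) : ℕ → ℕ :=
  Dcollapse n (transposeFn p)

/-- A marked pair of `p`: an index `j ≥ 1` such that `p (2j)` and `p (2j+1)` are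
both odd and `p (2j) > p (2j+1)`. -/
def markedSet (p : ℕ → ℕ) : Set ℕ :=
  {j : ℕ | 1 ≤ j ∧ Odd (p (2 * j)) ∧ Odd (p (2 * j + 1)) ∧ p (2 * j + 1) < p (2 * j)}

/-- The set of positions at which a non-special degeneration of `σ` occurs:
`σ (2j) = 2r+1`, `σ (2j+1) = ⋯ = σ (2j+2m) = 2r`, `σ (2j+2m+1) = 2r-1`. -/
def nsdSet (σ : ℕ → ℕ) : Set ℕ :=
  {j : ℕ | 1 ≤ j ∧ ∃ r m : ℕ, 1 ≤ r ∧ σ (2 * j) = 2 * r + 1 ∧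
    (∀ i, 2 * j + 1 ≤ i → i ≤ 2 * j + 2 * m → σ i = 2 * r) ∧
    σ (2 * j + 2 * m + 1) = 2 * r - 1}


namespace MPLND

open Finset

/-- Partial sum of the first `m` parts. -/
def Scur (lam : ℕ → ℕ) (m : ℕ) : ℕ := ∑ i ∈ Finset.Icc 1 m, lam i

/-- Number of positions `i ∈ [1,m]` where `lam i` is even. -/
def Ecnt (lam : ℕ → ℕ) (m : ℕ) : ℕ :=
  ((Finset.Icc 1 m).filter (fun i => lam i % 2 = 0)).card

/-- The deficit indicator of the D-collapse. -/
def eps (lam : ℕ → ℕ) (m : ℕ) : ℕ :=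
  if Ecnt lam m % 2 = 1 ∧ (lam m % 2 = 1 ∨ lam (m+1) < lam m) then 1 else 0

/-- The D-collapse of `lam`, explicitly. -/
def mustar (lam : ℕ → ℕ) (i : ℕ) : ℕ := lam i + eps lam (i-1) - eps lam i

lemma Scur_zero (lam : ℕ → ℕ) : Scur lam 0 = 0 := by simp [Scur]

lemma Scur_succ (lam : ℕ → ℕ) (m : ℕ) : Scur lam (m+1) = Scur lam m + lam (m+1) :=
  Finset.sum_Icc_succ_top (by omega) lam

lemma sum_split (f : ℕ → ℕ) (a b : ℕ) (h : a ≤ b) :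
    ∑ i ∈ Finset.Icc 1 b, f i = (∑ i ∈ Finset.Icc 1 a, f i) + ∑ i ∈ Finset.Icc (a+1) b, f i := by
  rw [show Finset.Icc 1 b = Finset.Ioc 0 b from Finset.Icc_add_one_left_eq_Ioc 0 b,
      show Finset.Icc 1 a = Finset.Ioc 0 a from Finset.Icc_add_one_left_eq_Ioc 0 a,
      show Finset.Icc (a+1) b = Finset.Ioc a b from Finset.Icc_add_one_left_eq_Ioc a b]
  exact (Finset.sum_Ioc_consecutive f (Nat.zero_le a) h).symm

lemma sum_mod_two (s : Finset ℕ) (f : ℕ → ℕ) :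
    (∑ i ∈ s, f i) % 2 = (s.filter (fun i => f i % 2 = 1)).card % 2 := by
  induction s using Finset.cons_induction with
  | empty => simp
  | cons a s ha ih =>
    rw [Finset.sum_cons, Finset.filter_cons]
    by_cases h : f a % 2 = 1
    · rw [if_pos h, Finset.card_cons]; omega
    · rw [if_neg h]; omega

lemma filter_parity_compl (s : Finset ℕ) (f : ℕ → ℕ) :
    (s.filter (fun i => f i % 2 = 1)).card + (s.filter (fun i => f i % 2 = 0)).card = s.card := by
  have h := Finset.card_filter_add_card_filter_not
    (s := s) (p := fun i => f i % 2 = 1)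
  have h2 : s.filter (fun a => ¬ f a % 2 = 1) = s.filter (fun i => f i % 2 = 0) :=
    Finset.filter_congr (by intro x _; constructor <;> (intro h'; omega))
  rw [h2] at h
  exact h

lemma partMult_eq_card (ν : ℕ → ℕ) (n : ℕ) (hvan : ∀ i, n < i → ν i = 0) (w : ℕ)
    (hw : 1 ≤ w) :
    partMult ν w = ((Finset.Icc 1 n).filter (fun i => ν i = w)).card := by
  have hset : {i : ℕ | 1 ≤ i ∧ ν i = w}
      = (((Finset.Icc 1 n).filter (fun i => ν i = w) : Finset ℕ) : Set ℕ) := by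
    ext i
    simp only [Set.mem_setOf_eq, Finset.coe_filter, Finset.mem_Icc, Set.mem_setOf_eq]
    constructor
    · rintro ⟨h1, h2⟩
      refine ⟨⟨h1, ?_⟩, h2⟩
      by_contra hc
      have := hvan i (by omega)
      omega
    · rintro ⟨⟨h1, _⟩, h2⟩; exact ⟨h1, h2⟩
  rw [partMult, hset, Set.ncard_coe_finset]

lemma partMult_zero (ν : ℕ → ℕ) (n : ℕ) (hvan : ∀ i, n < i → ν i = 0) :
    partMult ν 0 = 0 := by
  apply Set.Infinite.ncard
  apply Set.Infinite.mono (s := Set.Ici (n+1))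
  · intro i hi
    simp only [Set.mem_Ici] at hi
    exact ⟨by omega, hvan i (by omega)⟩
  · exact Set.Ici_infinite _

lemma even_card_val_filter (ν : ℕ → ℕ) (n : ℕ) (hvan : ∀ i, n < i → ν i = 0)
    (hD : ∀ k, Even k → Even (partMult ν k)) (Q : ℕ → Prop) [DecidablePred Q]
    (hQ : ∀ w, Q w → w % 2 = 0 ∧ 1 ≤ w) :
    ((Finset.Icc 1 n).filter (fun i => Q (ν i))).card % 2 = 0 := by
  classical
  set s := (Finset.Icc 1 n).filter (fun i => Q (ν i)) with hs
  rw [Finset.card_eq_sum_card_fiberwise (f := ν) (t := s.image ν)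
      (fun x hx => Finset.mem_image_of_mem _ hx)]
  rw [Finset.sum_nat_mod]
  have hterm : ∀ w ∈ s.image ν, (s.filter (fun a => ν a = w)).card % 2 = 0 := by
    intro w hw
    obtain ⟨i, hi, rfl⟩ := Finset.mem_image.mp hw
    have hQi : Q (ν i) := (Finset.mem_filter.mp hi).2
    have hfib : s.filter (fun a => ν a = ν i) = (Finset.Icc 1 n).filter (fun a => ν a = ν i) := by
      ext a
      simp only [hs, Finset.mem_filter, Finset.mem_Icc]
      constructor
      · rintro ⟨⟨h1, _⟩, h2⟩; exact ⟨h1, h2⟩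
      · rintro ⟨h1, h2⟩
        exact ⟨⟨h1, by rw [h2]; exact hQi⟩, h2⟩
    rw [hfib, ← partMult_eq_card ν n hvan (ν i) (hQ _ hQi).2]
    have := hD (ν i) (Nat.even_iff.mpr (hQ _ hQi).1)
    exact Nat.even_iff.mp this
  rw [Finset.sum_congr rfl hterm]
  simp

end MPLND

namespace MPLND

open Finset

section Collapse

variable {n : ℕ} {lam : ℕ → ℕ}

lemma Ecnt_succ (lam : ℕ → ℕ) (m : ℕ) :
    Ecnt lam (m+1) = Ecnt lam m + (if lam (m+1) % 2 = 0 then 1 else 0) := by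
  unfold Ecnt
  rw [Finset.card_filter, Finset.card_filter, Finset.sum_Icc_succ_top (by omega)]

lemma eps_le_one (lam : ℕ → ℕ) (m : ℕ) : eps lam m ≤ 1 := by
  unfold eps; split <;> omega

lemma eps_zero (lam : ℕ → ℕ) : eps lam 0 = 0 := by
  unfold eps Ecnt
  simp

lemma eps_pos (m : ℕ) (h : eps lam m = 1) :
    Ecnt lam m % 2 = 1 ∧ (lam m % 2 = 1 ∨ lam (m+1) < lam m) ∧ 1 ≤ lam m ∧ 1 ≤ m := by
  unfold eps at h
  split at h
  · rename_i hc
    refine ⟨hc.1, hc.2, by omega, ?_⟩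
    by_contra hm
    have : m = 0 := by omega
    subst this
    have : Ecnt lam 0 = 0 := by unfold Ecnt; simp
    omega
  · omega

lemma eps_cases (lam : ℕ → ℕ) (m : ℕ) : eps lam m = 0 ∨ eps lam m = 1 := by
  unfold eps; split <;> omega

lemma lam_mono (hlam : IsPartitionFn n lam) : ∀ i j, 1 ≤ i → i ≤ j → lam j ≤ lam i :=
  hlam.2.1

/-- L1 : a deficit starting at `m+1` forces an even part and a strict drop after it. -/
lemma L1 (hlam : IsPartitionFn n lam) (m : ℕ) (h1 : eps lam (m+1) = 1) (h0 : eps lam m = 0) :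
    lam (m+1) % 2 = 0 ∧ lam (m+2) < lam (m+1) ∧ 2 ≤ lam (m+1) := by
  obtain ⟨hE1, hcl1, hpos1, _⟩ := eps_pos (m+1) h1
  have heven : lam (m+1) % 2 = 0 := by
    by_contra hodd
    have hodd' : lam (m+1) % 2 = 1 := by omega
    have hEm : Ecnt lam m % 2 = 1 := by
      have := Ecnt_succ lam m
      rw [if_neg (by omega)] at this
      omega
    -- eps m = 0 with Ecnt odd forces the clause at m to fail
    have hm0 : m = 0 ∨ 1 ≤ m := by omega
    rcases hm0 with hm0 | hm0
    · subst hm0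
      have : Ecnt lam 0 = 0 := by unfold Ecnt; simp
      omega
    · have hclm : ¬ (lam m % 2 = 1 ∨ lam (m+1) < lam m) := by
        by_contra hc
        unfold eps at h0
        rw [if_pos ⟨hEm, hc⟩] at h0
        omega
      push_neg at hclm
      have hle : lam (m+1) ≤ lam m := lam_mono hlam m (m+1) hm0 (by omega)
      omega
  refine ⟨heven, ?_, by omega⟩
  rcases hcl1 with h | h
  · omega
  · exact h

lemma L2 (m : ℕ) (h1 : eps lam m = 1) (hodd : lam (m+1) % 2 = 1) : eps lam (m+1) = 1 := by
  obtain ⟨hE, _, _, _⟩ := eps_pos m h1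
  have hE1 : Ecnt lam (m+1) % 2 = 1 := by
    have := Ecnt_succ lam m
    rw [if_neg (by omega)] at this
    omega
  unfold eps
  rw [if_pos ⟨hE1, Or.inl hodd⟩]

lemma mustar_adj (hlam : IsPartitionFn n lam) (k : ℕ) :
    mustar lam (k+2) ≤ mustar lam (k+1) := by
  have hle : lam (k+2) ≤ lam (k+1) := lam_mono hlam (k+1) (k+2) (by omega) (by omega)
  have e1 := eps_cases lam k
  have e2 := eps_cases lam (k+1)
  have e3 := eps_cases lam (k+2)
  unfold mustar
  simp only [show k + 1 - 1 = k from rfl, show k + 2 - 1 = k + 1 from rfl]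
  rcases e2 with e2 | e2
  · rcases e3 with e3 | e3 <;> omega
  · have hpos := eps_pos (k+1) e2
    rcases e3 with e3 | e3
    · -- eps (k+2) = 0 : lam (k+2) is even (or we'd contradict L2)
      have heven2 : lam (k+2) % 2 = 0 := by
        by_contra h
        have hL2 := L2 (k+1) e2 (show lam (k+1+1) % 2 = 1 by
          simp only [show k+1+1 = k+2 from rfl]; omega)
        simp only [show k+1+1 = k+2 from rfl] at hL2
        omega
      rcases e1 with e1 | e1
      · obtain ⟨heven1, hlt, h2⟩ := L1 hlam k e2 e1
        omega
      · -- eps k = 1 : Ecnt equal parities force lam (k+1) odd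
        obtain ⟨hEk, _, _, _⟩ := eps_pos k e1
        obtain ⟨hEk1, _, _, _⟩ := eps_pos (k+1) e2
        have hES := Ecnt_succ lam k
        have hodd1 : lam (k+1) % 2 = 1 := by
          by_cases hh : lam (k+1) % 2 = 0
          · rw [if_pos hh] at hES; omega
          · omega
        omega
    · rcases e1 with e1 | e1
      · obtain ⟨heven1, hlt, h2⟩ := L1 hlam k e2 e1
        omega
      · omega

lemma mustar_mono (hlam : IsPartitionFn n lam) :
    ∀ i j, 1 ≤ i → i ≤ j → mustar lam j ≤ mustar lam i := by
  intro i j hi hij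
  induction j, hij using Nat.le_induction with
  | base => exact le_refl _
  | succ j hj ih =>
    have h1j : 1 ≤ j := by omega
    obtain ⟨k, rfl⟩ : ∃ k, j = k + 1 := ⟨j - 1, by omega⟩
    exact le_trans (mustar_adj hlam k) ih

lemma eps_at_n (hlam : IsPartitionFn n lam) : eps lam n = 0 := by
  rcases eps_cases lam n with h0 | h1
  · exact h0
  obtain ⟨hE, hcl, hpos, hm1⟩ := eps_pos n h1
  exfalso
  -- all parts on [1,n] equal 1
  have hall : ∀ i ∈ Finset.Icc 1 n, (fun _ => (1:ℕ)) i ≤ lam i := by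
    intro i hi
    rw [Finset.mem_Icc] at hi
    exact le_trans hpos (lam_mono hlam i n hi.1 hi.2)
  have hone : ∀ i ∈ Finset.Icc 1 n, lam i = 1 := by
    have hsum : ∑ i ∈ Finset.Icc 1 n, (fun _ => (1:ℕ)) i = ∑ i ∈ Finset.Icc 1 n, lam i := by
      rw [hlam.2.2.2, Finset.sum_const, smul_eq_mul, mul_one, Nat.card_Icc]
      omega
    intro i hi
    exact ((Finset.sum_eq_sum_iff_of_le hall).mp hsum i hi).symm
  have hcnt : Ecnt lam n = 0 := by
    unfold Ecnt
    rw [Finset.card_eq_zero]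
    apply Finset.filter_false_of_mem
    intro i hi
    rw [hone i hi]
    omega
  omega

lemma eps_big (hlam : IsPartitionFn n lam) (m : ℕ) (h : n ≤ m) : eps lam m = 0 := by
  rcases Nat.eq_or_lt_of_le h with he | hlt
  · rw [← he]
    exact eps_at_n hlam
  · rcases eps_cases lam m with h0 | h1
    · exact h0
    · obtain ⟨_, _, hpos, _⟩ := eps_pos m h1
      have := hlam.2.2.1 m hlt
      omega

lemma mustar_zero (hlam : IsPartitionFn n lam) : mustar lam 0 = 0 := by
  unfold mustar
  simp [hlam.1]

lemma mustar_van (hlam : IsPartitionFn n lam) : ∀ i, n < i → mustar lam i = 0 := by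
  intro i hi
  unfold mustar
  rw [hlam.2.2.1 i hi, eps_big hlam i (by omega), eps_big hlam (i-1) (by omega)]

lemma eps_le_Scur (hlam : IsPartitionFn n lam) (m : ℕ) : eps lam m ≤ Scur lam m := by
  rcases eps_cases lam m with h | h
  · omega
  obtain ⟨_, _, hpos, hm1⟩ := eps_pos m h
  calc eps lam m = 1 := h
    _ ≤ lam m := hpos
    _ ≤ Scur lam m := Finset.single_le_sum (f := lam) (fun i _ => Nat.zero_le _)
        (Finset.mem_Icc.mpr ⟨hm1, le_refl m⟩)

lemma Ssum (hlam : IsPartitionFn n lam) (m : ℕ) :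
    Scur (mustar lam) m = Scur lam m - eps lam m := by
  induction m with
  | zero => rw [Scur_zero, Scur_zero, eps_zero]
  | succ m ih =>
    rw [Scur_succ, Scur_succ, ih]
    have h1 := eps_le_one lam m
    have h2 := eps_le_one lam (m+1)
    have h3 := eps_le_Scur hlam m
    have h4 : eps lam (m+1) = 1 → 1 ≤ lam (m+1) := fun h => (eps_pos (m+1) h).2.2.1
    unfold mustar
    simp only [show m + 1 - 1 = m from rfl]
    omega

lemma mustar_partition (hlam : IsPartitionFn n lam) : IsPartitionFn n (mustar lam) := by
  refine ⟨mustar_zero hlam, mustar_mono hlam, mustar_van hlam, ?_⟩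
  have := Ssum hlam n
  rw [eps_big hlam n (le_refl n)] at this
  unfold Scur at this
  rw [this, hlam.2.2.2]
  omega

lemma mustar_dominates (hlam : IsPartitionFn n lam) : DominatesFn lam (mustar lam) := by
  intro m
  have := Ssum hlam m
  unfold Scur at this
  omega

end Collapse

end MPLND

namespace MPLND

open Finset

section Collapse2

variable {n : ℕ} {lam : ℕ → ℕ}

lemma Ecnt_zero (lam : ℕ → ℕ) : Ecnt lam 0 = 0 := by unfold Ecnt; simp

lemma sum_split' (f : ℕ → ℕ) (a b c : ℕ) (h1 : a ≤ b) (h2 : b ≤ c) :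
    ∑ i ∈ Finset.Icc (a+1) c, f i
      = (∑ i ∈ Finset.Icc (a+1) b, f i) + ∑ i ∈ Finset.Icc (b+1) c, f i := by
  rw [show Finset.Icc (a+1) c = Finset.Ioc a c from Finset.Icc_add_one_left_eq_Ioc a c,
      show Finset.Icc (a+1) b = Finset.Ioc a b from Finset.Icc_add_one_left_eq_Ioc a b,
      show Finset.Icc (b+1) c = Finset.Ioc b c from Finset.Icc_add_one_left_eq_Ioc b c]
  exact (Finset.sum_Ioc_consecutive f h1 h2).symm

lemma mustar_filter_eq (hlam : IsPartitionFn n lam) (w : ℕ) (hw : w % 2 = 0) (hw1 : 1 ≤ w) :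
    (Finset.Icc 1 n).filter (fun i => mustar lam i = w)
      = (Finset.Icc 1 n).filter (fun i => lam i = w ∧ eps lam i = eps lam (i-1)) := by
  apply Finset.filter_congr
  intro i hi
  rw [Finset.mem_Icc] at hi
  obtain ⟨k, rfl⟩ : ∃ k, i = k + 1 := ⟨i - 1, by omega⟩
  unfold mustar
  simp only [show k+1-1 = k from rfl]
  have e1 := eps_cases lam k
  have e2 := eps_cases lam (k+1)
  have h4 : eps lam (k+1) = 1 → 1 ≤ lam (k+1) := fun h => (eps_pos (k+1) h).2.2.1
  constructor
  · intro hv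
    rcases e1 with e1|e1 <;> rcases e2 with e2|e2
    · exact ⟨by omega, by omega⟩
    · exfalso
      obtain ⟨hev, _, _⟩ := L1 hlam k e2 e1
      omega
    · exfalso
      have hodd : lam (k+1) % 2 = 1 := by omega
      have := L2 k e1 hodd
      omega
    · exact ⟨by omega, by omega⟩
  · rintro ⟨hv, he⟩
    omega

lemma mustar_mult_even (hlam : IsPartitionFn n lam) (w : ℕ) (hw : w % 2 = 0) (hw1 : 1 ≤ w) :
    ((Finset.Icc 1 n).filter (fun i => mustar lam i = w)).card % 2 = 0 := by
  rw [mustar_filter_eq hlam w hw hw1]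
  set V := (Finset.Icc 1 n).filter (fun i => lam i = w) with hV
  by_cases hne : V.Nonempty
  case neg =>
    have hempty : (Finset.Icc 1 n).filter (fun i => lam i = w ∧ eps lam i = eps lam (i-1)) = ∅ := by
      rw [Finset.eq_empty_iff_forall_notMem]
      intro i hi
      rw [Finset.mem_filter] at hi
      exact hne ⟨i, by rw [hV, Finset.mem_filter]; exact ⟨hi.1, hi.2.1⟩⟩
    rw [hempty]; simp
  case pos =>
  obtain ⟨u, huV, humin⟩ : ∃ u ∈ V, ∀ x ∈ V, u ≤ x :=
    ⟨V.min' hne, V.min'_mem hne, fun x => V.min'_le x⟩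
  obtain ⟨v, hvV, hvmax⟩ : ∃ v ∈ V, ∀ x ∈ V, x ≤ v :=
    ⟨V.max' hne, V.max'_mem hne, fun x => V.le_max' x⟩
  have hu := Finset.mem_filter.mp huV
  have hv := Finset.mem_filter.mp hvV
  rw [Finset.mem_Icc] at hu hv
  obtain ⟨⟨hu1, hun⟩, hlu⟩ := hu
  obtain ⟨⟨hv1, hvn⟩, hlv⟩ := hv
  have huv : u ≤ v := humin v hvV
  have hrun : ∀ i, u ≤ i → i ≤ v → lam i = w := by
    intro i h1 h2
    have ha : lam i ≤ lam u := lam_mono hlam u i hu1 h1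
    have hb : lam v ≤ lam i := lam_mono hlam i v (by omega) h2
    omega
  have hT : (Finset.Icc 1 n).filter (fun i => lam i = w ∧ eps lam i = eps lam (i-1))
      = (Finset.Icc u v).filter (fun i => eps lam i = eps lam (i-1)) := by
    ext i
    simp only [Finset.mem_filter, Finset.mem_Icc]
    constructor
    · rintro ⟨⟨h1, h2⟩, hlw, he⟩
      have hiV : i ∈ V := by rw [hV, Finset.mem_filter, Finset.mem_Icc]; exact ⟨⟨h1, h2⟩, hlw⟩
      exact ⟨⟨humin i hiV, hvmax i hiV⟩, he⟩
    · rintro ⟨⟨h1, h2⟩, he⟩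
      exact ⟨⟨by omega, by omega⟩, hrun i h1 h2, he⟩
  rw [hT]
  have f_mid : ∀ i, u ≤ i → i < v → eps lam i = 0 := by
    intro i h1 h2
    unfold eps
    rw [if_neg]
    rintro ⟨_, hor⟩
    have hi1 : lam i = w := hrun i h1 (by omega)
    have hi2 : lam (i+1) = w := hrun (i+1) (by omega) (by omega)
    rcases hor with h|h <;> omega
  have hlo : u = 1 ∨ (2 ≤ u ∧ w < lam (u-1)) := by
    rcases Nat.eq_or_lt_of_le hu1 with h|h
    · exact Or.inl h.symm
    · refine Or.inr ⟨by omega, ?_⟩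
      have ha : lam u ≤ lam (u-1) := lam_mono hlam (u-1) u (by omega) (by omega)
      have hb : lam (u-1) ≠ w := by
        intro hc
        have : u - 1 ∈ V := by rw [hV, Finset.mem_filter, Finset.mem_Icc]; exact ⟨⟨by omega, by omega⟩, hc⟩
        have := humin _ this
        omega
      omega
  have hhi : lam (v+1) < w := by
    by_cases hvv : v + 1 ≤ n
    · have ha : lam (v+1) ≤ lam v := lam_mono hlam v (v+1) hv1 (by omega)
      have hb : lam (v+1) ≠ w := by
        intro hc
        have : v + 1 ∈ V := by rw [hV, Finset.mem_filter, Finset.mem_Icc]; exact ⟨⟨by omega, hvv⟩, hc⟩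
        have := hvmax _ this
        omega
      omega
    · have := hlam.2.2.1 (v+1) (by omega)
      omega
  have eu : eps lam (u-1) = (if Ecnt lam (u-1) % 2 = 1 then 1 else 0) := by
    rcases hlo with h1 | ⟨h2, hlt⟩
    · rw [h1]
      simp only [show (1:ℕ)-1 = 0 from rfl, eps_zero, Ecnt_zero]
      simp
    · unfold eps
      by_cases hE : Ecnt lam (u-1) % 2 = 1
      · rw [if_pos ⟨hE, Or.inr (by rw [show u-1+1 = u from by omega]; omega)⟩, if_pos hE]
      · rw [if_neg (fun hc => hE hc.1), if_neg hE]
  have ev : eps lam v = (if Ecnt lam v % 2 = 1 then 1 else 0) := by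
    unfold eps
    by_cases hE : Ecnt lam v % 2 = 1
    · rw [if_pos ⟨hE, Or.inr (by omega)⟩, if_pos hE]
    · rw [if_neg (fun hc => hE hc.1), if_neg hE]
  have eE : Ecnt lam v = Ecnt lam (u-1) + (v + 1 - u) := by
    unfold Ecnt
    rw [Finset.card_filter, Finset.card_filter, sum_split _ (u-1) v (by omega),
        show u - 1 + 1 = u from by omega]
    have hmid : ∀ i ∈ Finset.Icc u v, (if lam i % 2 = 0 then (1:ℕ) else 0) = 1 := by
      intro i hi
      rw [Finset.mem_Icc] at hi
      rw [if_pos (by rw [hrun i hi.1 hi.2]; omega)]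
    rw [Finset.sum_congr rfl hmid, Finset.sum_const, smul_eq_mul, mul_one, Nat.card_Icc]
  have hval1 : eps lam (u-1) = Ecnt lam (u-1) % 2 := by
    rw [eu]
    by_cases h : Ecnt lam (u-1) % 2 = 1
    · rw [if_pos h]; omega
    · rw [if_neg h]; omega
  have hval2 : eps lam v = Ecnt lam v % 2 := by
    rw [ev]
    by_cases h : Ecnt lam v % 2 = 1
    · rw [if_pos h]; omega
    · rw [if_neg h]; omega
  rcases Nat.eq_or_lt_of_le huv with heqv | hltv
  · -- single-element run : the filter is empty
    have hne2 : eps lam v ≠ eps lam (u-1) := by omega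
    have hempty : (Finset.Icc u v).filter (fun i => eps lam i = eps lam (i-1)) = ∅ := by
      rw [Finset.eq_empty_iff_forall_notMem]
      intro i hi
      rw [Finset.mem_filter, Finset.mem_Icc] at hi
      have hiu : i = u := by omega
      subst hiu
      rw [← heqv] at hne2
      exact hne2 hi.2
    rw [hempty]; simp
  · -- u < v
    have hepsu : eps lam u = 0 := f_mid u (le_refl u) hltv
    have hepsv1 : eps lam (v-1) = 0 := f_mid (v-1) (by omega) (by omega)
    have hcard : ((Finset.Icc u v).filter (fun i => eps lam i = eps lam (i-1))).card
        = (1 - eps lam (u-1)) + (v - u - 1) + (1 - eps lam v) := by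
      rw [Finset.card_filter]
      rw [show Finset.Icc u v = Finset.Icc ((u-1)+1) v from by rw [show u-1+1 = u from by omega]]
      rw [sum_split' _ (u-1) u v (by omega) (by omega)]
      rw [show u - 1 + 1 = u from by omega]
      rw [show (∑ i ∈ Finset.Icc u u, (if eps lam i = eps lam (i-1) then (1:ℕ) else 0))
          = (if eps lam u = eps lam (u-1) then (1:ℕ) else 0) from by
        rw [Finset.Icc_self, Finset.sum_singleton]]
      rw [show v = (v-1)+1 from by omega, Finset.sum_Icc_succ_top (by omega),
          show v - 1 + 1 = v from by omega]
      have hmid2 : ∀ i ∈ Finset.Icc (u+1) (v-1),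
          (if eps lam i = eps lam (i-1) then (1:ℕ) else 0) = 1 := by
        intro i hi
        rw [Finset.mem_Icc] at hi
        rw [if_pos]
        rw [f_mid i (by omega) (by omega), f_mid (i-1) (by omega) (by omega)]
      rw [Finset.sum_congr rfl hmid2, Finset.sum_const, smul_eq_mul, mul_one, Nat.card_Icc]
      have hterm1 : (if eps lam u = eps lam (u-1) then (1:ℕ) else 0) = 1 - eps lam (u-1) := by
        have := eps_le_one lam (u-1)
        by_cases h : eps lam (u-1) = 0
        · rw [if_pos (by omega)]; omega
        · rw [if_neg (by omega)]; omega
      have hterm2 : (if eps lam v = eps lam (v-1) then (1:ℕ) else 0) = 1 - eps lam v := by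
        have := eps_le_one lam v
        by_cases h : eps lam v = 0
        · rw [if_pos (by omega)]; omega
        · rw [if_neg (by omega)]; omega
      rw [hterm1, hterm2]
      omega
    rw [hcard]
    omega

lemma mustar_D (hlam : IsPartitionFn n lam) : IsDPartition n (mustar lam) := by
  refine ⟨mustar_partition hlam, ?_⟩
  intro k hk
  rcases Nat.eq_zero_or_pos k with rfl | hk1
  · rw [partMult_zero (mustar lam) n (mustar_van hlam)]
    exact Even.zero
  · rw [partMult_eq_card (mustar lam) n (mustar_van hlam) k hk1, Nat.even_iff]
    exact mustar_mult_even hlam k (Nat.even_iff.mp hk) hk1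

end Collapse2

end MPLND

namespace MPLND

open Finset

section Collapse3

variable {n : ℕ} {lam : ℕ → ℕ}

/-- The key obstruction: at a deficit position no D-partition dominated by `lam`
can achieve the full partial sum of `lam`. -/
lemma obs (hlam : IsPartitionFn n lam) (hn2 : n % 2 = 0) (ν : ℕ → ℕ)
    (hν : IsDPartition n ν) (hdom : DominatesFn lam ν) (m : ℕ) (hm : 1 ≤ m)
    (heq : Scur ν m = Scur lam m) (hE : Ecnt lam m % 2 = 1)
    (hcl : lam m % 2 = 1 ∨ lam (m+1) < lam m) : False := by
  classical
  obtain ⟨k, rfl⟩ : ∃ k, m = k + 1 := ⟨m - 1, by omega⟩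
  simp only [show k+1+1 = k+2 from rfl] at hcl
  have hνmono := hν.1.2.1
  have s1 : 1 ≤ lam (k+1) := by rcases hcl with h|h <;> omega
  have hmn : k + 1 ≤ n := by
    by_contra hc
    have := hlam.2.2.1 (k+1) (by omega)
    omega
  have e1 : Scur ν (k+1) = Scur ν k + ν (k+1) := Scur_succ ν k
  have e2 : Scur lam (k+1) = Scur lam k + lam (k+1) := Scur_succ lam k
  have e3 : Scur ν (k+2) = Scur ν (k+1) + ν (k+2) := by
    have := Scur_succ ν (k+1)
    simpa [show k+1+1 = k+2 from rfl] using this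
  have e4 : Scur lam (k+2) = Scur lam (k+1) + lam (k+2) := by
    have := Scur_succ lam (k+1)
    simpa [show k+1+1 = k+2 from rfl] using this
  have hdk : Scur ν k ≤ Scur lam k := hdom k
  have hdk2 : Scur ν (k+2) ≤ Scur lam (k+2) := hdom (k+2)
  have s2 : lam (k+1) ≤ ν (k+1) := by omega
  have s4 : ν (k+2) ≤ lam (k+2) := by omega
  have sνi : ∀ i, 1 ≤ i → i ≤ k+1 → lam (k+1) ≤ ν i :=
    fun i h1 h2 => le_trans s2 (hνmono i (k+1) h1 h2)
  have hmono1 : lam (k+2) ≤ lam (k+1) := lam_mono hlam (k+1) (k+2) (by omega) (by omega)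
  have hAB : (Finset.Icc 1 n).filter (fun i => ν i % 2 = 0 ∧ lam (k+2) < ν i)
      = (Finset.Icc 1 (k+1)).filter (fun i => ν i % 2 = 0) := by
    ext i
    simp only [Finset.mem_filter, Finset.mem_Icc]
    constructor
    · rintro ⟨⟨h1, h2⟩, hev, hgt⟩
      refine ⟨⟨h1, ?_⟩, hev⟩
      by_contra hc
      have : ν i ≤ ν (k+2) := hνmono (k+2) i (by omega) (by omega)
      omega
    · rintro ⟨⟨h1, h2⟩, hev⟩
      refine ⟨⟨h1, le_trans h2 hmn⟩, hev, ?_⟩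
      have hbig := sνi i h1 h2
      rcases hcl with hodd | hlt <;> omega
  have hA : ((Finset.Icc 1 n).filter (fun i => ν i % 2 = 0 ∧ lam (k+2) < ν i)).card % 2 = 0 :=
    even_card_val_filter ν n hν.1.2.2.1 hν.2 (fun w => w % 2 = 0 ∧ lam (k+2) < w)
      (fun w hw => ⟨hw.1, by omega⟩)
  have hcards : ((Finset.Icc 1 n).filter (fun i => ν i % 2 = 0 ∧ lam (k+2) < ν i)).card
      = ((Finset.Icc 1 (k+1)).filter (fun i => ν i % 2 = 0)).card := by rw [hAB]
  have hp1 := sum_mod_two (Finset.Icc 1 (k+1)) ν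
  have hp2 := sum_mod_two (Finset.Icc 1 (k+1)) lam
  have hc1 := filter_parity_compl (Finset.Icc 1 (k+1)) ν
  have hc2 := filter_parity_compl (Finset.Icc 1 (k+1)) lam
  have hEdef : Ecnt lam (k+1) = ((Finset.Icc 1 (k+1)).filter (fun i => lam i % 2 = 0)).card := rfl
  have heq' : (∑ i ∈ Finset.Icc 1 (k+1), ν i) = ∑ i ∈ Finset.Icc 1 (k+1), lam i := heq
  omega

lemma mustar_greatest (hlam : IsPartitionFn n lam) (hn2 : n % 2 = 0) :
    ∀ ν, IsDPartition n ν → DominatesFn lam ν → DominatesFn (mustar lam) ν := by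
  intro ν hν hdom m
  have hS : Scur (mustar lam) m = Scur lam m - eps lam m := Ssum hlam m
  have hd : Scur ν m ≤ Scur lam m := hdom m
  show (∑ i ∈ Finset.Icc 1 m, ν i) ≤ ∑ i ∈ Finset.Icc 1 m, mustar lam i
  have h1 : Scur ν m = ∑ i ∈ Finset.Icc 1 m, ν i := rfl
  have h2 : Scur (mustar lam) m = ∑ i ∈ Finset.Icc 1 m, mustar lam i := rfl
  rcases eps_cases lam m with h0 | h1'
  · omega
  · obtain ⟨hE, hcl, _, hm1⟩ := eps_pos m h1'
    have hne : Scur ν m ≠ Scur lam m := fun hc => obs hlam hn2 ν hν hdom m hm1 hc hE hcl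
    omega

lemma mustar_collapse (hlam : IsPartitionFn n lam) (hn2 : n % 2 = 0) :
    IsDCollapseOf n lam (mustar lam) :=
  ⟨mustar_D hlam, mustar_dominates hlam, mustar_greatest hlam hn2⟩

lemma collapse_eq_mustar (hlam : IsPartitionFn n lam) (hn2 : n % 2 = 0) (mu : ℕ → ℕ)
    (hmu : IsDCollapseOf n lam mu) : mu = mustar lam := by
  have h1 : ∀ m, Scur mu m = Scur (mustar lam) m := by
    intro m
    have ha : Scur mu m ≤ Scur (mustar lam) m := mustar_greatest hlam hn2 mu hmu.1 hmu.2.1 m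
    have hb : Scur (mustar lam) m ≤ Scur mu m :=
      hmu.2.2 (mustar lam) (mustar_D hlam) (mustar_dominates hlam) m
    omega
  funext i
  rcases Nat.eq_zero_or_pos i with rfl | hi
  · rw [hmu.1.1.1, mustar_zero hlam]
  · obtain ⟨k, rfl⟩ : ∃ k, i = k+1 := ⟨i-1, by omega⟩
    have ha := h1 k
    have hb := h1 (k+1)
    have hc := Scur_succ mu k
    have hd := Scur_succ (mustar lam) k
    omega

end Collapse3

end MPLND

namespace MPLND

open Finset

section Transpose

variable {n : ℕ} {p : ℕ → ℕ}

lemma p_le_n (hp : IsPartitionFn n p) : ∀ i, p i ≤ n := by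
  intro i
  rcases Nat.eq_zero_or_pos i with rfl | h1
  · rw [hp.1]
    exact Nat.zero_le n
  · by_cases h2 : i ≤ n
    · calc p i ≤ ∑ j ∈ Finset.Icc 1 n, p j :=
            Finset.single_le_sum (fun j _ => Nat.zero_le _) (Finset.mem_Icc.mpr ⟨h1, h2⟩)
        _ = n := hp.2.2.2
    · rw [hp.2.2.1 i (by omega)]
      exact Nat.zero_le n

lemma tp_card (hp : IsPartitionFn n p) (k : ℕ) (hk : 1 ≤ k) :
    transposeFn p k = ((Finset.Icc 1 n).filter (fun i => k ≤ p i)).card := by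
  have hset : {i : ℕ | 1 ≤ i ∧ k ≤ p i}
      = (((Finset.Icc 1 n).filter (fun i => k ≤ p i) : Finset ℕ) : Set ℕ) := by
    ext i
    simp only [Set.mem_setOf_eq, Finset.coe_filter, Finset.mem_Icc, Set.mem_setOf_eq]
    constructor
    · rintro ⟨h1, h2⟩
      refine ⟨⟨h1, ?_⟩, h2⟩
      by_contra hc
      rw [hp.2.2.1 i (by omega)] at h2
      omega
    · rintro ⟨⟨h1, _⟩, h2⟩
      exact ⟨h1, h2⟩
  unfold transposeFn
  rw [hset, Set.ncard_coe_finset]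

lemma sum_ite_le (x c : ℕ) :
    ∑ k ∈ Finset.Icc 1 c, (if k ≤ x then (1:ℕ) else 0) = min x c := by
  induction c with
  | zero => simp
  | succ c ih =>
    rw [Finset.sum_Icc_succ_top (by omega), ih]
    by_cases h : c + 1 ≤ x
    · rw [if_pos h]; omega
    · rw [if_neg h]; omega

lemma tp_min_sum (hp : IsPartitionFn n p) (c : ℕ) :
    Scur (transposeFn p) c = ∑ i ∈ Finset.Icc 1 n, min (p i) c := by
  unfold Scur
  have h1 : ∀ k ∈ Finset.Icc 1 c, transposeFn p k
      = ∑ i ∈ Finset.Icc 1 n, (if k ≤ p i then (1:ℕ) else 0) := by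
    intro k hk
    rw [Finset.mem_Icc] at hk
    rw [tp_card hp k hk.1, Finset.card_filter]
  rw [Finset.sum_congr rfl h1, Finset.sum_comm]
  exact Finset.sum_congr rfl (fun i _ => sum_ite_le (p i) c)

lemma tp_partition (hp : IsPartitionFn n p) : IsPartitionFn n (transposeFn p) := by
  refine ⟨?_, ?_, ?_, ?_⟩
  · unfold transposeFn
    apply Set.Infinite.ncard
    apply Set.Infinite.mono (s := Set.Ici 1)
    · intro i hi
      exact ⟨hi, Nat.zero_le _⟩
    · exact Set.Ici_infinite _
  · intro i j h1 hij
    rw [tp_card hp i h1, tp_card hp j (by omega)]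
    apply Finset.card_le_card
    intro x hx
    rw [Finset.mem_filter] at hx ⊢
    exact ⟨hx.1, by omega⟩
  · intro k hk
    rw [tp_card hp k (by omega), Finset.card_eq_zero, Finset.eq_empty_iff_forall_notMem]
    intro i hi
    rw [Finset.mem_filter] at hi
    have := p_le_n hp i
    omega
  · have hms := tp_min_sum hp n
    unfold Scur at hms
    rw [hms]
    have h2 : ∀ i ∈ Finset.Icc 1 n, min (p i) n = p i := fun i _ => by
      have := p_le_n hp i; omega
    rw [Finset.sum_congr rfl h2, hp.2.2.2]

lemma tp_galois (hp : IsPartitionFn n p) (k i : ℕ) (hk : 1 ≤ k) (hi : 1 ≤ i) :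
    k ≤ p i ↔ i ≤ transposeFn p k := by
  constructor
  · intro h
    rw [tp_card hp k hk]
    have hsub : Finset.Icc 1 i ⊆ (Finset.Icc 1 n).filter (fun j => k ≤ p j) := by
      intro x hx
      rw [Finset.mem_Icc] at hx
      have hpx : p i ≤ p x := hp.2.1 x i hx.1 hx.2
      have hin : i ≤ n := by
        by_contra hc
        rw [hp.2.2.1 i (by omega)] at h
        omega
      rw [Finset.mem_filter, Finset.mem_Icc]
      exact ⟨⟨hx.1, by omega⟩, by omega⟩
    calc i = (Finset.Icc 1 i).card := by rw [Nat.card_Icc]; omega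
      _ ≤ _ := Finset.card_le_card hsub
  · intro h
    by_contra hc
    rw [tp_card hp k hk] at h
    have hsub : (Finset.Icc 1 n).filter (fun j => k ≤ p j) ⊆ Finset.Icc 1 (i-1) := by
      intro x hx
      rw [Finset.mem_filter, Finset.mem_Icc] at hx
      rw [Finset.mem_Icc]
      refine ⟨hx.1.1, ?_⟩
      by_contra hcx
      have : p x ≤ p i := hp.2.1 i x hi (by omega)
      omega
    have := Finset.card_le_card hsub
    rw [Nat.card_Icc] at this
    omega

lemma tp_sum_odd (hp : IsPartitionFn n p) (hn2 : n % 2 = 0)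
    (hD : ∀ k, Even k → Even (partMult p k)) (c : ℕ) (hc : c % 2 = 1) :
    Scur (transposeFn p) c % 2 = 0 := by
  classical
  rw [tp_min_sum hp c, sum_mod_two]
  have hsplit : (Finset.Icc 1 n).filter (fun i => min (p i) c % 2 = 1)
      = ((Finset.Icc 1 n).filter (fun i => p i % 2 = 1))
        ∪ ((Finset.Icc 1 n).filter (fun i => p i % 2 = 0 ∧ c ≤ p i)) := by
    ext i
    simp only [Finset.mem_union, Finset.mem_filter, Finset.mem_Icc]
    constructor
    · rintro ⟨h1, h2⟩
      by_cases h : p i % 2 = 1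
      · exact Or.inl ⟨h1, h⟩
      · exact Or.inr ⟨h1, by omega, by omega⟩
    · rintro (⟨h1, h2⟩ | ⟨h1, h2, h3⟩)
      · exact ⟨h1, by omega⟩
      · exact ⟨h1, by omega⟩
  rw [hsplit, Finset.card_union_of_disjoint]
  · have hodd : ((Finset.Icc 1 n).filter (fun i => p i % 2 = 1)).card % 2 = 0 := by
      have hsm := sum_mod_two (Finset.Icc 1 n) p
      rw [hp.2.2.2] at hsm
      omega
    have heven : ((Finset.Icc 1 n).filter (fun i => p i % 2 = 0 ∧ c ≤ p i)).card % 2 = 0 :=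
      even_card_val_filter p n hp.2.2.1 hD (fun w => w % 2 = 0 ∧ c ≤ w)
        (fun w hw => ⟨hw.1, by omega⟩)
    omega
  · rw [Finset.disjoint_left]
    intro x hx hy
    rw [Finset.mem_filter] at hx hy
    omega

end Transpose

end MPLND

namespace MPLND

open Finset

lemma marked_nsd {N : ℕ} {p : ℕ → ℕ} (hp : IsSpecialDPartition (2*N) p) (j : ℕ)
    (hj : j ∈ markedSet p) :
    (p (2*j+1) + 1) / 2 ∈ nsdSet (mustar (transposeFn p)) := by
  obtain ⟨hj1, ho1, ho2, hlt⟩ := hj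
  have hpart := hp.1.1
  have hlam : IsPartitionFn (2*N) (transposeFn p) := tp_partition hpart
  set lam := transposeFn p with hlamdef
  set a := p (2*j) with hadef
  set b := p (2*j+1) with hbdef
  have hoa : a % 2 = 1 := Nat.odd_iff.mp ho1
  have hob : b % 2 = 1 := Nat.odd_iff.mp ho2
  have hab : b + 2 ≤ a := by omega
  have hb1 : 1 ≤ b := by omega
  have han : a ≤ 2*N := p_le_n hpart (2*j)
  have g1 : ∀ k, b+1 ≤ k → k ≤ a → lam k = 2*j := by
    intro k h1 h2
    have hge : 2*j ≤ lam k := (tp_galois hpart k (2*j) (by omega) (by omega)).mp (by omega)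
    have hle : ¬ (2*j+1 ≤ lam k) := by
      intro hc
      have := (tp_galois hpart k (2*j+1) (by omega) (by omega)).mpr hc
      omega
    omega
  have g2 : 2*j+1 ≤ lam b := (tp_galois hpart b (2*j+1) hb1 (by omega)).mp (le_refl b)
  have g3 : lam (a+1) < 2*j := by
    by_contra hc
    have h2 : a + 1 ≤ p (2*j) := (tp_galois hpart (a+1) (2*j) (by omega) (by omega)).mpr
      (show 2*j ≤ lam (a+1) by omega)
    omega
  have hSa : Scur lam a % 2 = 0 := tp_sum_odd hpart (by omega) hp.1.2 a hoa
  have hEa : Ecnt lam a % 2 = 1 := by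
    have h1 := sum_mod_two (Finset.Icc 1 a) lam
    have h2 := filter_parity_compl (Finset.Icc 1 a) lam
    have h3 : (Finset.Icc 1 a).card = a := by rw [Nat.card_Icc]; omega
    have h4 : Scur lam a = ∑ i ∈ Finset.Icc 1 a, lam i := rfl
    have h5 : Ecnt lam a = ((Finset.Icc 1 a).filter (fun i => lam i % 2 = 0)).card := rfl
    omega
  have hEb : Ecnt lam b % 2 = 1 := by
    have hsplit2 : Ecnt lam a = Ecnt lam b + (a - b) := by
      unfold Ecnt
      rw [Finset.card_filter, Finset.card_filter, sum_split _ b a (by omega)]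
      have hmid : ∀ i ∈ Finset.Icc (b+1) a, (if lam i % 2 = 0 then (1:ℕ) else 0) = 1 := by
        intro i hi
        rw [Finset.mem_Icc] at hi
        rw [if_pos (by rw [g1 i hi.1 hi.2]; omega)]
      rw [Finset.sum_congr rfl hmid, Finset.sum_const, smul_eq_mul, mul_one, Nat.card_Icc]
      omega
    omega
  have geb : eps lam b = 1 := by
    unfold eps
    rw [if_pos ⟨hEb, Or.inr (by rw [g1 (b+1) (le_refl _) (by omega)]; omega)⟩]
  have gmid : ∀ i, b+1 ≤ i → i ≤ a-1 → eps lam i = 0 := by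
    intro i h1 h2
    unfold eps
    rw [if_neg]
    rintro ⟨_, h | h⟩
    · rw [g1 i h1 (by omega)] at h
      omega
    · rw [g1 i h1 (by omega), g1 (i+1) (by omega) (by omega)] at h
      omega
  have gea : eps lam a = 1 := by
    unfold eps
    rw [if_pos ⟨hEa, Or.inr (by rw [g1 a (by omega) (le_refl a)]; omega)⟩]
  have v1 : mustar lam (b+1) = 2*j+1 := by
    unfold mustar
    simp only [show b+1-1 = b from rfl]
    rw [g1 (b+1) (le_refl _) (by omega), geb, gmid (b+1) (le_refl _) (by omega)]
    omega
  have v2 : ∀ i, b+2 ≤ i → i ≤ a-1 → mustar lam i = 2*j := by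
    intro i h1 h2
    unfold mustar
    rw [g1 i (by omega) (by omega), gmid i (by omega) h2, gmid (i-1) (by omega) (by omega)]
    omega
  have v3 : mustar lam a = 2*j - 1 := by
    unfold mustar
    rw [g1 a (by omega) (le_refl a), gea, gmid (a-1) (by omega) (le_refl _)]
    omega
  have hj2 : 2 * ((b+1)/2) = b + 1 := by omega
  have h2m : 2 * ((a - b - 2)/2) = a - b - 2 := by omega
  refine ⟨by omega, j, (a - b - 2)/2, by omega, ?_, ?_, ?_⟩
  · rw [hj2]
    exact v1
  · intro i h1 h2
    rw [hj2] at h1 h2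
    rw [h2m] at h2
    exact v2 i (by omega) (by omega)
  · rw [hj2, h2m, show b + 1 + (a - b - 2) + 1 = a from by omega]
    exact v3

end MPLND

/-- For a special D-partition `p` of `2N`, the number of marked pairs of `p` is at
most the number of (independent) non-special degenerations of the Spaltenstein
dual `d(p) = D(pᵀ)`. -/
theorem marked_pairs_le_nonspecial_degenerations (N : ℕ) (p : ℕ → ℕ)
    (hp : IsSpecialDPartition (2 * N) p) :
    (markedSet p).ncard ≤ (nsdSet (spaltDual (2 * N) p)).ncard := by
  classical
  have hpart := hp.1.1
  have hlam : IsPartitionFn (2*N) (transposeFn p) := MPLND.tp_partition hpart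
  have hn2 : (2*N) % 2 = 0 := by omega
  have hex : ∃ mu, IsDCollapseOf (2*N) (transposeFn p) mu :=
    ⟨MPLND.mustar (transposeFn p), MPLND.mustar_collapse hlam hn2⟩
  have hsd : spaltDual (2*N) p = MPLND.mustar (transposeFn p) := by
    rw [spaltDual, Dcollapse, dif_pos hex]
    exact MPLND.collapse_eq_mustar hlam hn2 _ hex.choose_spec
  rw [hsd]
  have hfin : (nsdSet (MPLND.mustar (transposeFn p))).Finite := by
    apply Set.Finite.subset (Set.finite_Icc 1 N)
    intro j hj
    obtain ⟨h1, r, m, hr, hval, _, _⟩ := hj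
    rw [Set.mem_Icc]
    refine ⟨h1, ?_⟩
    by_contra hc
    have hz : MPLND.mustar (transposeFn p) (2*j) = 0 := MPLND.mustar_van hlam (2*j) (by omega)
    omega
  apply Set.ncard_le_ncard_of_injOn (fun j => (p (2*j+1) + 1) / 2) ?_ ?_ hfin
  · intro j hj
    exact MPLND.marked_nsd hp j hj
  · intro j1 h1 j2 h2 heq
    have heq' : (p (2*j1+1) + 1) / 2 = (p (2*j2+1) + 1) / 2 := heq
    by_contra hne
    obtain ⟨hj1, ho11, ho12, hlt1⟩ := h1
    obtain ⟨hj2, ho21, ho22, hlt2⟩ := h2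
    rw [Nat.odd_iff] at ho11 ho12 ho21 ho22
    rcases Nat.lt_or_ge j1 j2 with h | h
    · have hmono : p (2*j2) ≤ p (2*j1+1) := hpart.2.1 (2*j1+1) (2*j2) (by omega) (by omega)
      omega
    · have hj21 : j2 < j1 := by omega
      have hmono : p (2*j1) ≤ p (2*j2+1) := hpart.2.1 (2*j2+1) (2*j1) (by omega) (by omega)
      omega
end

section
/- Let σ be a special D-partition of 2N that admits a non-special degeneration at position j with data (r, m), i.e., σ_{2j} = 2r+1, σ_{2j+1} = … = σ_{2j+2m} = 2r, and σ_{2j+2m+1} = 2r−1. Then the Spaltenstein dual τ = d(σ) = D(σ^T) satisfies τ_{2r} = 2j+2m+1 and τ_{2r+1} = 2j−1; in particular, r is a marked pair of τ. Moreover, distinct positions j ∈ S'(σ) give distinct values of r, so s(σ) is at most the number of marked pairs of d(σ). -/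
section AuxBasic

lemma sum_Icc_one_succ (f : ℕ → ℕ) (k : ℕ) :
    ∑ i ∈ Finset.Icc 1 (k+1), f i = (∑ i ∈ Finset.Icc 1 k, f i) + f (k+1) :=
  Finset.sum_Icc_succ_top (by omega) f

lemma part_le_total {n : ℕ} {p : ℕ → ℕ} (hp : IsPartitionFn n p) {i : ℕ} (hi : 1 ≤ i) :
    p i ≤ n := by
  rcases le_or_gt i n with h | h
  · calc p i ≤ ∑ a ∈ Finset.Icc 1 n, p a :=
        Finset.single_le_sum (fun _ _ => Nat.zero_le _) (by simp [Finset.mem_Icc]; omega)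
    _ = n := hp.2.2.2
  · rw [hp.2.2.1 i h]; exact Nat.zero_le n

lemma downward_closed_eq_Icc {S : Set ℕ} {n : ℕ} (hsub : S ⊆ Set.Icc 1 n)
    (hdc : ∀ a ∈ S, ∀ b, 1 ≤ b → b ≤ a → b ∈ S) : S = Set.Icc 1 S.ncard := by
  have hfin : S.Finite := (Set.finite_Icc 1 n).subset hsub
  rcases S.eq_empty_or_nonempty with h | h
  · simp [h]
  · have hbdd : BddAbove S := hfin.bddAbove
    have hmem : sSup S ∈ S := Nat.sSup_mem h hbdd
    have hS : S = Set.Icc 1 (sSup S) := by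
      apply Set.eq_of_subset_of_subset
      · intro a ha; exact ⟨(hsub ha).1, le_csSup hbdd ha⟩
      · intro b hb; exact hdc _ hmem b hb.1 hb.2
    have hn : S.ncard = sSup S := by
      conv_lhs => rw [hS]
      rw [← Finset.coe_Icc, Set.ncard_coe_finset, Nat.card_Icc]; omega
    rw [hn]; exact hS

end AuxBasic

section Transpose

variable {n : ℕ} {p : ℕ → ℕ}

lemma tp_set (hp : IsPartitionFn n p) {i : ℕ} (hi : 1 ≤ i) :
    {a : ℕ | 1 ≤ a ∧ i ≤ p a} = Set.Icc 1 (transposeFn p i) := by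
  have hsub : {a : ℕ | 1 ≤ a ∧ i ≤ p a} ⊆ Set.Icc 1 n := by
    rintro a ⟨h1, h2⟩
    refine ⟨h1, ?_⟩
    by_contra h
    rw [hp.2.2.1 a (by omega)] at h2; omega
  exact downward_closed_eq_Icc hsub
    (fun a ha b hb1 hb2 => ⟨hb1, le_trans ha.2 (hp.2.1 b a hb1 hb2)⟩)

lemma tp_le_iff (hp : IsPartitionFn n p) {i a : ℕ} (hi : 1 ≤ i) (ha : 1 ≤ a) :
    i ≤ p a ↔ a ≤ transposeFn p i := by
  constructor
  · intro h
    have hm : a ∈ {x : ℕ | 1 ≤ x ∧ i ≤ p x} := ⟨ha, h⟩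
    rw [tp_set hp hi] at hm; exact hm.2
  · intro h
    have hm : a ∈ Set.Icc 1 (transposeFn p i) := ⟨ha, h⟩
    rw [← tp_set hp hi] at hm; exact hm.2

lemma tp_zero (p : ℕ → ℕ) : transposeFn p 0 = 0 := by
  have hs : {i : ℕ | 1 ≤ i ∧ 0 ≤ p i} = Set.Ici 1 := by ext x; simp
  show ({i : ℕ | 1 ≤ i ∧ 0 ≤ p i}).ncard = 0
  rw [hs]
  exact (Set.Ici_infinite 1).ncard

lemma tp_fin (hp : IsPartitionFn n p) {i : ℕ} (hi : 1 ≤ i) :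
    {a : ℕ | 1 ≤ a ∧ i ≤ p a}.Finite := by
  rw [tp_set hp hi]; exact Set.finite_Icc _ _

lemma tp_mono (hp : IsPartitionFn n p) : ∀ i j, 1 ≤ i → i ≤ j →
    transposeFn p j ≤ transposeFn p i := by
  intro i j hi hij
  apply Set.ncard_le_ncard _ (tp_fin hp hi)
  rintro a ⟨h1, h2⟩; exact ⟨h1, by omega⟩

lemma tp_vanish (hp : IsPartitionFn n p) : ∀ i, n < i → transposeFn p i = 0 := by
  intro i hi
  show ({a : ℕ | 1 ≤ a ∧ i ≤ p a}).ncard = 0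
  have : {a : ℕ | 1 ≤ a ∧ i ≤ p a} = ∅ := by
    ext a
    simp only [Set.mem_setOf_eq, Set.mem_empty_iff_false, iff_false]
    rintro ⟨h1, h2⟩
    have := part_le_total hp h1
    omega
  rw [this, Set.ncard_empty]

lemma tp_finset (hp : IsPartitionFn n p) {i : ℕ} (hi : 1 ≤ i) :
    transposeFn p i = ((Finset.Icc 1 n).filter (fun a => i ≤ p a)).card := by
  rw [← Set.ncard_coe_finset]
  show ({a : ℕ | 1 ≤ a ∧ i ≤ p a}).ncard = _
  congr 1
  ext a
  simp only [Set.mem_setOf_eq, Finset.coe_filter, Finset.mem_Icc]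
  constructor
  · rintro ⟨h1, h2⟩
    refine ⟨⟨h1, ?_⟩, h2⟩
    by_contra h
    rw [hp.2.2.1 a (by omega)] at h2; omega
  · rintro ⟨⟨h1, _⟩, h2⟩; exact ⟨h1, h2⟩

lemma filter_le_Icc (K v : ℕ) :
    (Finset.Icc 1 K).filter (fun i => i ≤ v) = Finset.Icc 1 (min v K) := by
  ext x; simp only [Finset.mem_filter, Finset.mem_Icc]; omega

lemma tp_sum_min (hp : IsPartitionFn n p) (K : ℕ) :
    ∑ k ∈ Finset.Icc 1 K, transposeFn p k = ∑ a ∈ Finset.Icc 1 n, min (p a) K := by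
  have h1 : ∀ k ∈ Finset.Icc 1 K,
      transposeFn p k = ∑ a ∈ Finset.Icc 1 n, (if k ≤ p a then 1 else 0) := by
    intro k hk
    rw [tp_finset hp (Finset.mem_Icc.mp hk).1, Finset.card_filter]
  rw [Finset.sum_congr rfl h1, Finset.sum_comm]
  apply Finset.sum_congr rfl
  intro a _
  rw [show (∑ k ∈ Finset.Icc 1 K, if k ≤ p a then 1 else 0)
      = ((Finset.Icc 1 K).filter (fun k => k ≤ p a)).card from (Finset.card_filter _ _).symm,
    filter_le_Icc, Nat.card_Icc]
  omega

lemma tp_partition (hp : IsPartitionFn n p) : IsPartitionFn n (transposeFn p) := by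
  refine ⟨tp_zero p, tp_mono hp, tp_vanish hp, ?_⟩
  rw [tp_sum_min hp n]
  have : ∀ a ∈ Finset.Icc 1 n, min (p a) n = p a := by
    intro a ha
    have := part_le_total hp (Finset.mem_Icc.mp ha).1
    omega
  rw [Finset.sum_congr rfl this]
  exact hp.2.2.2

lemma tp_tp (hp : IsPartitionFn n p) {k : ℕ} (hk : 1 ≤ k) :
    transposeFn (transposeFn p) k = p k := by
  show ({i : ℕ | 1 ≤ i ∧ k ≤ transposeFn p i}).ncard = p k
  have hset : {i : ℕ | 1 ≤ i ∧ k ≤ transposeFn p i} = Set.Icc 1 (p k) := by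
    ext i
    simp only [Set.mem_setOf_eq, Set.mem_Icc]
    constructor
    · rintro ⟨h1, h2⟩
      exact ⟨h1, (tp_le_iff hp h1 hk).mpr h2⟩
    · rintro ⟨h1, h2⟩
      exact ⟨h1, (tp_le_iff hp h1 hk).mp h2⟩
  rw [hset, ← Finset.coe_Icc, Set.ncard_coe_finset, Nat.card_Icc]
  omega

lemma mult_set_eq (hp : IsPartitionFn n p) {v : ℕ} (hv : 1 ≤ v) :
    {i : ℕ | 1 ≤ i ∧ p i = v} = Set.Ioc (transposeFn p (v+1)) (transposeFn p v) := by
  ext i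
  simp only [Set.mem_setOf_eq, Set.mem_Ioc]
  constructor
  · rintro ⟨h1, h2⟩
    constructor
    · by_contra h
      push_neg at h
      have := (tp_le_iff hp (show 1 ≤ v+1 by omega) h1).mpr h
      omega
    · exact (tp_le_iff hp hv h1).mp (by omega)
  · rintro ⟨h1, h2⟩
    have hi1 : 1 ≤ i := by omega
    have hv1 : v ≤ p i := (tp_le_iff hp hv hi1).mpr h2
    have hv2 : ¬ (v+1 ≤ p i) := by
      intro h
      have := (tp_le_iff hp (show 1 ≤ v+1 by omega) hi1).mp h
      omega
    exact ⟨hi1, by omega⟩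

lemma mult_eq (hp : IsPartitionFn n p) {v : ℕ} (hv : 1 ≤ v) :
    partMult p v = transposeFn p v - transposeFn p (v+1) := by
  rw [partMult, mult_set_eq hp hv, ← Finset.coe_Ioc, Set.ncard_coe_finset, Nat.card_Ioc]

lemma mult_finset (hp : IsPartitionFn n p) {v : ℕ} (hv : 1 ≤ v) :
    partMult p v = ((Finset.Icc 1 n).filter (fun i => p i = v)).card := by
  rw [partMult, ← Set.ncard_coe_finset]
  congr 1
  ext i
  simp only [Set.mem_setOf_eq, Finset.coe_filter, Finset.mem_Icc]
  constructor
  · rintro ⟨h1, h2⟩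
    refine ⟨⟨h1, ?_⟩, h2⟩
    by_contra h
    rw [hp.2.2.1 i (by omega)] at h2; omega
  · rintro ⟨⟨h1, _⟩, h2⟩; exact ⟨h1, h2⟩

end Transpose

lemma even_finset_sum {s : Finset ℕ} {f : ℕ → ℕ} (h : ∀ i ∈ s, Even (f i)) :
    Even (∑ i ∈ s, f i) :=
  Finset.sum_induction f Even (fun _ _ ha hb => ha.add hb) Even.zero h


section Collapse

def Ssum (p : ℕ → ℕ) (k : ℕ) : ℕ := ∑ i ∈ Finset.Icc 1 k, p i

def epsF (p : ℕ → ℕ) (k : ℕ) : ℕ :=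
  if (Ssum p k + k) % 2 = 1 ∧ ¬(p k = p (k+1) ∧ p k % 2 = 0) then 1 else 0

def nuF (p : ℕ → ℕ) (k : ℕ) : ℕ := if k = 0 then 0 else p k + epsF p (k-1) - epsF p k

variable {n : ℕ} {p : ℕ → ℕ}

lemma Ssum_succ (p : ℕ → ℕ) (k : ℕ) : Ssum p (k+1) = Ssum p k + p (k+1) :=
  sum_Icc_one_succ p k

lemma Ssum_zero (p : ℕ → ℕ) : Ssum p 0 = 0 := by
  rw [Ssum, Finset.Icc_eq_empty (by omega), Finset.sum_empty]

lemma epsF_le_one (p : ℕ → ℕ) (k : ℕ) : epsF p k ≤ 1 := by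
  rw [epsF]; split <;> omega

lemma epsF_zero (p : ℕ → ℕ) : epsF p 0 = 0 := by
  rw [epsF, if_neg]
  rw [Ssum_zero]
  rintro ⟨h, _⟩; omega

lemma epsF_pos_facts {k : ℕ} (h : epsF p k = 1) :
    (Ssum p k + k) % 2 = 1 ∧ ¬(p k = p (k+1) ∧ p k % 2 = 0) := by
  rw [epsF] at h
  split at h
  · assumption
  · omega

lemma epsF_one_pos (hp : IsPartitionFn n p) {k : ℕ} (h : epsF p k = 1) : 1 ≤ p k := by
  rcases Nat.eq_zero_or_pos k with rfl | hk
  · rw [epsF_zero] at h; omega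
  obtain ⟨_, hcl⟩ := epsF_pos_facts h
  by_contra h0
  have h1 : p k = 0 := by omega
  have h2 : p (k+1) = 0 := by have := hp.2.1 k (k+1) hk (by omega); omega
  exact hcl ⟨by omega, by omega⟩

lemma epsF_parity_next {k : ℕ} (h : epsF p k = 1) :
    ((Ssum p (k+1) + (k+1)) % 2 = 1 ↔ p (k+1) % 2 = 1) := by
  have h1 := (epsF_pos_facts h).1
  have h2 := Ssum_succ p k
  omega

lemma epsF_next_even {k : ℕ} (h : epsF p k = 1) (he : p (k+1) % 2 = 0) :
    epsF p (k+1) = 0 := by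
  rw [epsF, if_neg]
  rintro ⟨hpar, _⟩
  have := (epsF_parity_next h).mp hpar
  omega

lemma epsF_next_odd {k : ℕ} (h : epsF p k = 1) (ho : p (k+1) % 2 = 1) :
    epsF p (k+1) = 1 := by
  rw [epsF, if_pos]
  exact ⟨(epsF_parity_next h).mpr ho, by rintro ⟨_, h2⟩; omega⟩

lemma epsF_entry (hp : IsPartitionFn n p) {k : ℕ}
    (h0 : epsF p k = 0) (h1 : epsF p (k+1) = 1) :
    p (k+1) % 2 = 0 ∧ p (k+2) < p (k+1) := by
  obtain ⟨hpar, hcl⟩ := epsF_pos_facts h1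
  have hS := Ssum_succ p k
  have hev : p (k+1) % 2 = 0 := by
    by_contra hodd
    have hpar' : (Ssum p k + k) % 2 = 1 := by omega
    rw [epsF] at h0
    split at h0
    · omega
    · rename_i hnot
      push_neg at hnot
      have h3 := hnot hpar'
      omega
  have hmono := hp.2.1 (k+1) (k+2) (by omega) (by omega)
  have hne : ¬(p (k+1) = p (k+2)) := fun he => hcl ⟨he, hev⟩
  exact ⟨hev, by omega⟩

lemma epsF_entry' (hp : IsPartitionFn n p) {k : ℕ} (hk : 1 ≤ k)
    (h0 : epsF p (k-1) = 0) (h1 : epsF p k = 1) :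
    p k % 2 = 0 ∧ p (k+1) < p k := by
  obtain ⟨k', rfl⟩ : ∃ k', k = k' + 1 := ⟨k - 1, by omega⟩
  simp only [Nat.add_sub_cancel] at h0
  exact epsF_entry hp h0 h1

lemma epsF_both' {k : ℕ} (hk : 1 ≤ k) (h1 : epsF p (k-1) = 1) (h2 : epsF p k = 1) :
    p k % 2 = 1 := by
  obtain ⟨k', rfl⟩ : ∃ k', k = k' + 1 := ⟨k - 1, by omega⟩
  simp only [Nat.add_sub_cancel] at h1
  exact (epsF_parity_next h1).mp (epsF_pos_facts h2).1

lemma epsF_exit' {k : ℕ} (hk : 1 ≤ k) (h1 : epsF p (k-1) = 1) (h0 : epsF p k = 0) :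
    p k % 2 = 0 := by
  obtain ⟨k', rfl⟩ : ∃ k', k = k' + 1 := ⟨k - 1, by omega⟩
  simp only [Nat.add_sub_cancel] at h1
  by_contra h
  have := epsF_next_odd h1 (by omega)
  omega

lemma nuF_add (hp : IsPartitionFn n p) {k : ℕ} (hk : 1 ≤ k) :
    nuF p k + epsF p k = p k + epsF p (k-1) := by
  rw [nuF, if_neg (by omega)]
  have h1 := epsF_le_one p k
  rcases Nat.eq_zero_or_pos (epsF p k) with h | h
  · omega
  · have h2 : epsF p k = 1 := by omega
    have := epsF_one_pos hp h2
    omega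

lemma nuF_mono_succ (hp : IsPartitionFn n p) {k : ℕ} (hk : 1 ≤ k) :
    nuF p (k+1) ≤ nuF p k := by
  have ea := epsF_le_one p (k-1)
  have eb := epsF_le_one p k
  have ec := epsF_le_one p (k+1)
  have hm1 : p (k+1) ≤ p k := hp.2.1 k (k+1) hk (by omega)
  have hm2 : p (k+2) ≤ p (k+1) := hp.2.1 (k+1) (k+2) (by omega) (by omega)
  have hA := nuF_add hp hk
  have hB := nuF_add hp (show 1 ≤ k+1 by omega)
  rw [show k + 1 - 1 = k by omega] at hB
  rcases Nat.eq_zero_or_pos (epsF p k) with hb0 | hbpos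
  · omega
  · have hb1 : epsF p k = 1 := by omega
    rcases Nat.eq_zero_or_pos (epsF p (k-1)) with ha0 | hapos
    · have hent := epsF_entry' hp hk ha0 hb1
      rcases Nat.eq_zero_or_pos (epsF p (k+1)) with hc0 | hcpos
      · have hex : p (k+1) % 2 = 0 := epsF_exit' (show 1 ≤ k+1 by omega)
          (by rw [Nat.add_sub_cancel]; exact hb1) hc0
        omega
      · omega
    · have ha1 : epsF p (k-1) = 1 := by omega
      have hodd : p k % 2 = 1 := epsF_both' hk ha1 hb1
      rcases Nat.eq_zero_or_pos (epsF p (k+1)) with hc0 | hcpos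
      · have hex : p (k+1) % 2 = 0 := epsF_exit' (show 1 ≤ k+1 by omega)
          (by rw [Nat.add_sub_cancel]; exact hb1) hc0
        omega
      · omega

lemma nuF_sum (hp : IsPartitionFn n p) (k : ℕ) :
    (∑ i ∈ Finset.Icc 1 k, nuF p i) + epsF p k = Ssum p k := by
  induction k with
  | zero =>
    rw [Ssum_zero, epsF_zero, Finset.Icc_eq_empty (by omega), Finset.sum_empty]
  | succ k ih =>
    rw [sum_Icc_one_succ, Ssum_succ]
    have hadd := nuF_add hp (k := k+1) (by omega)
    rw [show k+1-1 = k by omega] at hadd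
    omega

lemma epsF_ge_n (hp : IsPartitionFn n p) {k : ℕ} (hk : n ≤ k) : epsF p k = 0 := by
  rcases eq_or_lt_of_le hk with heq | hlt
  · rw [epsF, if_neg]
    rintro ⟨h1, _⟩
    have hSn : Ssum p n = n := hp.2.2.2
    rw [← heq] at h1
    omega
  · rw [epsF, if_neg]
    rintro ⟨_, h2⟩
    exact h2 ⟨by rw [hp.2.2.1 k hlt, hp.2.2.1 (k+1) (by omega)], by rw [hp.2.2.1 k hlt]⟩

lemma nuF_partition (hp : IsPartitionFn n p) : IsPartitionFn n (nuF p) := by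
  refine ⟨by rw [nuF, if_pos rfl], ?_, ?_, ?_⟩
  · intro i j hi hij
    induction j, hij using Nat.le_induction with
    | base => exact le_rfl
    | succ j hij ih => exact le_trans (nuF_mono_succ hp (by omega)) ih
  · intro i hi
    rw [nuF, if_neg (by omega), hp.2.2.1 i hi,
      epsF_ge_n hp (show n ≤ i-1 by omega), epsF_ge_n hp (show n ≤ i by omega)]
  · have h1 := nuF_sum hp n
    rw [epsF_ge_n hp le_rfl] at h1
    have hSn : Ssum p n = n := hp.2.2.2
    omega

lemma nuF_dominated (hp : IsPartitionFn n p) : DominatesFn p (nuF p) := by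
  intro m
  have h1 := nuF_sum hp m
  have h2 : Ssum p m = ∑ i ∈ Finset.Icc 1 m, p i := rfl
  omega

lemma signchange (e : ℕ → ℕ) (he : ∀ i, e i ≤ 1) (a : ℕ) :
    ∀ b, a ≤ b →
    ((Finset.Ioc a b).filter (fun i => ¬ (e (i-1) = e i))).card % 2 = (e a + e b) % 2 := by
  intro b hab
  induction b, hab using Nat.le_induction with
  | base =>
    rw [Finset.Ioc_self, Finset.filter_empty, Finset.card_empty]
    have := he a; omega
  | succ b hab ih =>
    have hins : Finset.Ioc a (b+1) = insert (b+1) (Finset.Ioc a b) := by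
      ext x; simp only [Finset.mem_Ioc, Finset.mem_insert]; omega
    rw [hins, Finset.filter_insert]
    have hnm : (b+1) ∉ (Finset.Ioc a b).filter (fun i => ¬ (e (i-1) = e i)) := by
      simp only [Finset.mem_filter, Finset.mem_Ioc]; omega
    have hb1 : b + 1 - 1 = b := by omega
    by_cases hc : e (b+1-1) = e (b+1)
    · rw [if_neg (by rw [hb1] at hc ⊢; exact (not_not_intro hc))]
      rw [hb1] at hc
      have := he b; have := he (b+1); omega
    · rw [if_pos hc, Finset.card_insert_of_notMem hnm]
      rw [hb1] at hc
      have := he a; have := he b; have := he (b+1); omega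
end Collapse

section LemO

lemma lemO {n : ℕ} {q : ℕ → ℕ} (hq : IsDPartition n q) (t : ℕ)
    (hcl : ¬(q t = q (t+1) ∧ q (t+1) % 2 = 0)) :
    (∑ i ∈ Finset.Icc 1 t, q i) % 2 = t % 2 := by
  rcases Nat.eq_zero_or_pos t with rfl | ht
  · rw [Finset.Icc_eq_empty (by omega), Finset.sum_empty]
  have hpart := hq.1
  set F := Finset.Icc 1 t with hF
  have hsplit : ((F.filter (fun i => q i % 2 = 0)).card
      + (F.filter (fun i => ¬ (q i % 2 = 0))).card = F.card) :=
    Finset.card_filter_add_card_filter_not _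
  have hcardF : F.card = t := by rw [hF, Nat.card_Icc]; omega
  have hsum : (∑ i ∈ F, q i) % 2 = (F.filter (fun i => ¬(q i % 2 = 0))).card % 2 := by
    rw [Finset.card_filter, Finset.sum_nat_mod, Finset.sum_nat_mod F 2
      (fun i => if ¬ (q i % 2 = 0) then 1 else 0)]
    congr 1
    apply Finset.sum_congr rfl
    intro i _
    split <;> omega
  have heven : Even (F.filter (fun i => q i % 2 = 0)).card := by
    set E := F.filter (fun i => q i % 2 = 0) with hE
    have hmap : ∀ x ∈ E, q x ∈ E.image q := fun x hx => Finset.mem_image_of_mem _ hx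
    rw [Finset.card_eq_sum_card_fiberwise hmap]
    apply even_finset_sum
    intro w hw
    obtain ⟨i0, hi0E, hi0⟩ := Finset.mem_image.mp hw
    have hi0' := Finset.mem_filter.mp hi0E
    obtain ⟨hi01, hi0t⟩ := Finset.mem_Icc.mp hi0'.1
    have hi0ev : q i0 % 2 = 0 := hi0'.2
    have hwev : w % 2 = 0 := by omega
    have hw1 : 1 ≤ w := by
      by_contra h
      have hw0 : w = 0 := by omega
      have hqt : q t = 0 := by
        have := hpart.2.1 i0 t hi01 hi0t; omega
      have hqt1 : q (t+1) = 0 := by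
        have := hpart.2.1 t (t+1) ht (by omega); omega
      exact hcl ⟨by omega, by omega⟩
    have hfib : (E.filter (fun x => q x = w)) = (Finset.Icc 1 n).filter (fun i => q i = w) := by
      ext i
      simp only [hE, hF, Finset.mem_filter, Finset.mem_Icc]
      constructor
      · rintro ⟨⟨⟨ha1, ha2⟩, _⟩, h4⟩
        refine ⟨⟨ha1, ?_⟩, h4⟩
        by_contra h
        rw [hpart.2.2.1 i (by omega)] at h4; omega
      · rintro ⟨⟨ha1, _⟩, h4⟩
        have hile : i ≤ t := by
          by_contra h
          push_neg at h
          have e1 : q i ≤ q (t+1) := hpart.2.1 (t+1) i (by omega) (by omega)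
          have e2 : q (t+1) ≤ q t := hpart.2.1 t (t+1) ht (by omega)
          have e3 : q t ≤ q i0 := hpart.2.1 i0 t hi01 hi0t
          exact hcl ⟨by omega, by omega⟩
        exact ⟨⟨⟨ha1, hile⟩, by omega⟩, h4⟩
    rw [hfib, ← mult_finset hpart hw1]
    exact hq.2 w (Nat.even_iff.mpr hwev)
  obtain ⟨c, hc⟩ := heven
  omega

end LemO

section NuD

variable {n : ℕ} {p : ℕ → ℕ}

lemma nuF_D (hp : IsPartitionFn n p) : IsDPartition n (nuF p) := by
  refine ⟨nuF_partition hp, ?_⟩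
  intro w hwev
  rcases Nat.eq_zero_or_pos w with rfl | hw1
  · have hinf : {i : ℕ | 1 ≤ i ∧ nuF p i = 0}.Infinite := by
      apply Set.Infinite.mono (s := Set.Ici (n+1))
      · intro i hi
        simp only [Set.mem_Ici] at hi
        exact ⟨by omega, (nuF_partition hp).2.2.1 i (by omega)⟩
      · exact Set.Ici_infinite _
    rw [partMult, Set.Infinite.ncard hinf]
    exact Even.zero
  · have hwe : w % 2 = 0 := Nat.even_iff.mp hwev
    set a := transposeFn p (w+1) with hadef
    set b := transposeFn p w with hbdef
    have hab : a ≤ b := tp_mono hp w (w+1) hw1 (by omega)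
    have hconst : ∀ i, a < i → i ≤ b → p i = w := by
      intro i hia hib
      have hg : w ≤ p i := (tp_le_iff hp hw1 (by omega)).mpr hib
      have hl : ¬(w+1 ≤ p i) := by
        intro h
        have := (tp_le_iff hp (show 1 ≤ w+1 by omega) (show 1 ≤ i by omega)).mp h
        omega
      omega
    have hblock : {i : ℕ | 1 ≤ i ∧ nuF p i = w} =
        ↑((Finset.Ioc a b).filter (fun i => epsF p (i-1) = 0 ∧ epsF p i = 0)) := by
      ext i
      simp only [Set.mem_setOf_eq, Finset.coe_filter, Finset.mem_Ioc]
      constructor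
      · rintro ⟨h1, h2⟩
        have hea := epsF_le_one p (i-1)
        have heb := epsF_le_one p i
        have hadd := nuF_add hp h1
        have hee : epsF p (i-1) = 0 ∧ epsF p i = 0 := by
          rcases Nat.eq_zero_or_pos (epsF p (i-1)) with ha0 | hapos
          · rcases Nat.eq_zero_or_pos (epsF p i) with hb0 | hbpos
            · exact ⟨ha0, hb0⟩
            · have hb1 : epsF p i = 1 := by omega
              have hent := epsF_entry' hp h1 ha0 hb1
              omega
          · have ha1 : epsF p (i-1) = 1 := by omega
            rcases Nat.eq_zero_or_pos (epsF p i) with hb0 | hbpos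
            · have hex := epsF_exit' h1 ha1 hb0
              omega
            · have hb1 : epsF p i = 1 := by omega
              have hodd := epsF_both' h1 ha1 hb1
              omega
        have hpi : p i = w := by omega
        refine ⟨⟨?_, ?_⟩, hee⟩
        · by_contra hle
          push_neg at hle
          have := (tp_le_iff hp (show 1 ≤ w+1 by omega) h1).mpr hle
          omega
        · exact (tp_le_iff hp hw1 h1).mp (by omega)
      · rintro ⟨⟨hai, hib⟩, ha0, hb0⟩
        have h1 : 1 ≤ i := by omega
        have hpi : p i = w := hconst i hai hib
        have hadd := nuF_add hp h1
        exact ⟨h1, by omega⟩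
    rw [partMult, hblock, Set.ncard_coe_finset]
    rcases eq_or_lt_of_le hab with heq | hlt
    · rw [← heq, Finset.Ioc_self, Finset.filter_empty, Finset.card_empty]
      exact Even.zero
    · -- block nonempty: a < b
      have hpb : p b = w := hconst b hlt le_rfl
      have hpb1 : p (b+1) < w := by
        by_contra h
        push_neg at h
        have := (tp_le_iff hp hw1 (show 1 ≤ b+1 by omega)).mp h
        omega
      have heb : epsF p b = (Ssum p b + b) % 2 := by
        rw [epsF]
        by_cases hc : (Ssum p b + b) % 2 = 1
        · rw [if_pos ⟨hc, by rintro ⟨hx, _⟩; omega⟩]; omega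
        · rw [if_neg (by rintro ⟨hx, _⟩; omega)]; omega
      have hea : epsF p a = (Ssum p a + a) % 2 := by
        rcases Nat.eq_zero_or_pos a with ha0 | ha1
        · rw [ha0, epsF_zero, Ssum_zero]
        · have hpa : w + 1 ≤ p a := (tp_le_iff hp (show 1 ≤ w+1 by omega) ha1).mpr le_rfl
          have hpa1 : p (a+1) = w := hconst (a+1) (by omega) (by omega)
          rw [epsF]
          by_cases hc : (Ssum p a + a) % 2 = 1
          · rw [if_pos ⟨hc, by rintro ⟨hx, _⟩; omega⟩]; omega
          · rw [if_neg (by rintro ⟨hx, _⟩; omega)]; omega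
      have hIoc : ∀ x : ℕ, Finset.Icc 1 x = Finset.Ioc 0 x := by
        intro x; ext y; simp only [Finset.mem_Icc, Finset.mem_Ioc]; omega
      have hSab : Ssum p b = Ssum p a + (b - a) * w := by
        have hsplit := Finset.sum_Ioc_consecutive p (Nat.zero_le a) hab
        have hcst : ∑ i ∈ Finset.Ioc a b, p i = (b - a) * w := by
          have hcg : ∑ i ∈ Finset.Ioc a b, p i = ∑ _i ∈ Finset.Ioc a b, w :=
            Finset.sum_congr rfl (fun i hi => by
              rw [Finset.mem_Ioc] at hi
              exact hconst i hi.1 hi.2)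
          rw [hcg, Finset.sum_const, Nat.card_Ioc, smul_eq_mul]
        rw [Ssum, Ssum, hIoc, hIoc, ← hsplit, hcst]
      have hfc : (Finset.Ioc a b).filter (fun i => epsF p (i-1) = 0 ∧ epsF p i = 0)
            = (Finset.Ioc a b).filter (fun i => epsF p (i-1) = epsF p i) := by
        apply Finset.filter_congr
        intro i hi
        rw [Finset.mem_Ioc] at hi
        have hpi : p i = w := hconst i hi.1 hi.2
        have hx := epsF_le_one p (i-1)
        have hy := epsF_le_one p i
        constructor
        · rintro ⟨u, v⟩; omega
        · intro hxy
          rcases Nat.eq_zero_or_pos (epsF p i) with h | h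
          · omega
          · have hb1 : epsF p i = 1 := by omega
            have ha1 : epsF p (i-1) = 1 := by omega
            have := epsF_both' (show 1 ≤ i by omega) ha1 hb1
            omega
      have hcards := Finset.card_filter_add_card_filter_not
        (s := Finset.Ioc a b) (fun i => epsF p (i-1) = epsF p i)
      have hsc := signchange (epsF p) (epsF_le_one p) a b hab
      have hcIoc : (Finset.Ioc a b).card = b - a := Nat.card_Ioc a b
      have hbw : ((b - a) * w) % 2 = 0 := by
        have : Even ((b - a) * w) := (Nat.even_iff.mpr hwe).mul_left _
        exact Nat.even_iff.mp this
      rw [hfc, Nat.even_iff]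
      omega

end NuD

section NuMax

variable {n : ℕ} {p : ℕ → ℕ}

lemma nuF_max (hp : IsPartitionFn n p) :
    ∀ q, IsDPartition n q → DominatesFn p q → DominatesFn (nuF p) q := by
  intro q hq hdom k
  have hnusum := nuF_sum hp k
  have hS : Ssum p k = ∑ i ∈ Finset.Icc 1 k, p i := rfl
  rcases Nat.eq_zero_or_pos (epsF p k) with h0 | hpos
  · have := hdom k
    omega
  · have he1 : epsF p k = 1 := by
      have := epsF_le_one p k; omega
    obtain ⟨hpar, hcl⟩ := epsF_pos_facts he1
    have hk1 : 1 ≤ k := by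
      rcases Nat.eq_zero_or_pos k with rfl | h
      · rw [epsF_zero] at he1; omega
      · exact h
    have hdk := hdom k
    have hdk1 := hdom (k-1)
    have hdk2 := hdom (k+1)
    have hS1 : Ssum p (k-1) = ∑ i ∈ Finset.Icc 1 (k-1), p i := rfl
    have hS2 : Ssum p (k+1) = ∑ i ∈ Finset.Icc 1 (k+1), p i := rfl
    by_contra hcon
    push_neg at hcon
    have hqk : ∑ i ∈ Finset.Icc 1 k, q i = Ssum p k := by omega
    have hqpar : (∑ i ∈ Finset.Icc 1 k, q i) % 2 ≠ k % 2 := by omega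
    have hqcl : q k = q (k+1) ∧ q (k+1) % 2 = 0 := by
      by_contra h
      exact hqpar (lemO hq k h)
    have hsq : ∑ i ∈ Finset.Icc 1 k, q i = (∑ i ∈ Finset.Icc 1 (k-1), q i) + q k := by
      have := sum_Icc_one_succ q (k-1)
      rw [show k-1+1 = k by omega] at this
      exact this
    have hsp : Ssum p k = Ssum p (k-1) + p k := by
      have := Ssum_succ p (k-1)
      rw [show k-1+1 = k by omega] at this
      exact this
    have hsq2 : ∑ i ∈ Finset.Icc 1 (k+1), q i = (∑ i ∈ Finset.Icc 1 k, q i) + q (k+1) :=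
      sum_Icc_one_succ q k
    have hsp2 : Ssum p (k+1) = Ssum p k + p (k+1) := Ssum_succ p k
    have hmono : p (k+1) ≤ p k := hp.2.1 k (k+1) hk1 (by omega)
    exact hcl ⟨by omega, by omega⟩

lemma nuF_collapse (hp : IsPartitionFn n p) : IsDCollapseOf n p (nuF p) :=
  ⟨nuF_D hp, nuF_dominated hp, nuF_max hp⟩

lemma Dcollapse_eq_nuF (hp : IsPartitionFn n p) {k : ℕ} (hk : 1 ≤ k) :
    Dcollapse n p k = nuF p k := by
  have hex : ∃ mu, IsDCollapseOf n p mu := ⟨nuF p, nuF_collapse hp⟩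
  rw [Dcollapse, dif_pos hex]
  have hspec := hex.choose_spec
  have h1 : DominatesFn hex.choose (nuF p) := hspec.2.2 (nuF p) (nuF_D hp) (nuF_dominated hp)
  have h2 : DominatesFn (nuF p) hex.choose := (nuF_collapse hp).2.2 hex.choose hspec.1 hspec.2.1
  have e1 : ∑ i ∈ Finset.Icc 1 k, hex.choose i = ∑ i ∈ Finset.Icc 1 k, nuF p i :=
    le_antisymm (h2 k) (h1 k)
  have e0 : ∑ i ∈ Finset.Icc 1 (k-1), hex.choose i = ∑ i ∈ Finset.Icc 1 (k-1), nuF p i :=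
    le_antisymm (h2 (k-1)) (h1 (k-1))
  have g1 : ∑ i ∈ Finset.Icc 1 k, hex.choose i
      = (∑ i ∈ Finset.Icc 1 (k-1), hex.choose i) + hex.choose k := by
    have := sum_Icc_one_succ hex.choose (k-1)
    rw [show k-1+1 = k by omega] at this
    exact this
  have g2 : ∑ i ∈ Finset.Icc 1 k, nuF p i
      = (∑ i ∈ Finset.Icc 1 (k-1), nuF p i) + nuF p k := by
    have := sum_Icc_one_succ (nuF p) (k-1)
    rw [show k-1+1 = k by omega] at this
    exact this
  omega

end NuMax


section App

lemma sum_pair (g : ℕ → ℕ) (j : ℕ) :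
    ∑ a ∈ Finset.Icc 1 (2*j), g a = ∑ i ∈ Finset.Icc 1 j, (g (2*i-1) + g (2*i)) := by
  induction j with
  | zero => simp
  | succ j ih =>
    have e1 : 2 * (j+1) = (2*j + 1) + 1 := by ring
    rw [e1, sum_Icc_one_succ g (2*j+1), sum_Icc_one_succ g (2*j), ih,
      sum_Icc_one_succ (fun i => g (2*i-1) + g (2*i)) j]
    have e2 : 2*(j+1)-1 = 2*j+1 := by omega
    have e3 : 2*(j+1) = 2*j+1+1 := by omega
    rw [e2, e3]
    omega

lemma main_vals {N j r m : ℕ} {σ : ℕ → ℕ}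
    (hσ : IsSpecialDPartition (2 * N) σ) (hj : 1 ≤ j) (hr : 1 ≤ r)
    (h1 : σ (2 * j) = 2 * r + 1)
    (h2 : ∀ i, 2 * j + 1 ≤ i → i ≤ 2 * j + 2 * m → σ i = 2 * r)
    (h3 : σ (2 * j + 2 * m + 1) = 2 * r - 1) :
    spaltDual (2 * N) σ (2 * r) = 2 * j + 2 * m + 1 ∧
    spaltDual (2 * N) σ (2 * r + 1) = 2 * j - 1 := by
  have hpσ : IsPartitionFn (2*N) σ := hσ.1.1
  have hpl : IsPartitionFn (2*N) (transposeFn σ) := tp_partition hpσ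
  have hb : 2*j+2*m+1 ≤ 2*N := by
    by_contra h
    have := hpσ.2.2.1 (2*j+2*m+1) (by omega)
    omega
  have hσ2j1 : σ (2*j+1) ≤ 2*r := by
    rcases Nat.eq_zero_or_pos m with rfl | hm
    · have : 2*j+2*0+1 = 2*j+1 := by omega
      rw [this] at h3
      omega
    · have := h2 (2*j+1) le_rfl (by omega)
      omega
  have hσ2jm : 2*r ≤ σ (2*j+2*m) := by
    rcases Nat.eq_zero_or_pos m with rfl | hm
    · have : 2*j+2*0 = 2*j := by omega
      rw [this]
      omega
    · have := h2 (2*j+2*m) (by omega) le_rfl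
      omega
  -- value lemmas
  have hset_r1 : {a : ℕ | 1 ≤ a ∧ 2*r+1 ≤ σ a} = Set.Icc 1 (2*j) := by
    ext a
    simp only [Set.mem_setOf_eq, Set.mem_Icc]
    constructor
    · rintro ⟨ha1, ha2⟩
      refine ⟨ha1, ?_⟩
      by_contra h
      have := hpσ.2.1 (2*j+1) a (by omega) (by omega)
      omega
    · rintro ⟨ha1, ha2⟩
      have := hpσ.2.1 a (2*j) ha1 ha2
      omega
  have hl2r1 : transposeFn σ (2*r+1) = 2*j := by
    show ({a : ℕ | 1 ≤ a ∧ 2*r+1 ≤ σ a}).ncard = 2*j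
    rw [hset_r1, ← Finset.coe_Icc, Set.ncard_coe_finset, Nat.card_Icc]
    omega
  have hset_r : {a : ℕ | 1 ≤ a ∧ 2*r ≤ σ a} = Set.Icc 1 (2*j+2*m) := by
    ext a
    simp only [Set.mem_setOf_eq, Set.mem_Icc]
    constructor
    · rintro ⟨ha1, ha2⟩
      refine ⟨ha1, ?_⟩
      by_contra h
      have := hpσ.2.1 (2*j+2*m+1) a (by omega) (by omega)
      omega
    · rintro ⟨ha1, ha2⟩
      have := hpσ.2.1 a (2*j+2*m) ha1 ha2
      omega
  have hl2r : transposeFn σ (2*r) = 2*j+2*m := by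
    show ({a : ℕ | 1 ≤ a ∧ 2*r ≤ σ a}).ncard = 2*j+2*m
    rw [hset_r, ← Finset.coe_Icc, Set.ncard_coe_finset, Nat.card_Icc]
    omega
  have hl2r2 : transposeFn σ (2*r+2) < 2*j := by
    have hsub : {a : ℕ | 1 ≤ a ∧ 2*r+2 ≤ σ a} ⊆ Set.Icc 1 (2*j-1) := by
      rintro a ⟨ha1, ha2⟩
      refine ⟨ha1, ?_⟩
      by_contra h
      have := hpσ.2.1 (2*j) a (by omega) (by omega)
      omega
    have hle : ({a : ℕ | 1 ≤ a ∧ 2*r+2 ≤ σ a}).ncard ≤ (Set.Icc 1 (2*j-1)).ncard :=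
      Set.ncard_le_ncard hsub (Set.finite_Icc _ _)
    rw [← Finset.coe_Icc, Set.ncard_coe_finset, Nat.card_Icc] at hle
    have : transposeFn σ (2*r+2) = ({a : ℕ | 1 ≤ a ∧ 2*r+2 ≤ σ a}).ncard := rfl
    omega
  have hl2rm1 : 2*j+2*m+1 ≤ transposeFn σ (2*r-1) := by
    apply (tp_le_iff hpσ (show 1 ≤ 2*r-1 by omega) (show 1 ≤ 2*j+2*m+1 by omega)).mp
    omega
  -- parity of odd parts count
  have hcardO : ((Finset.Icc 1 (2*N)).filter (fun a => σ a % 2 = 1)).card % 2 = 0 := by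
    have hs : (∑ a ∈ Finset.Icc 1 (2*N), σ a) % 2 = 0 := by
      rw [hpσ.2.2.2]; omega
    rw [Finset.card_filter]
    have he : (∑ a ∈ Finset.Icc 1 (2*N), if σ a % 2 = 1 then 1 else 0) % 2
        = (∑ a ∈ Finset.Icc 1 (2*N), σ a) % 2 := by
      rw [Finset.sum_nat_mod, Finset.sum_nat_mod _ 2 σ]
      congr 1
      apply Finset.sum_congr rfl
      intro a _
      split <;> omega
    omega
  -- even parts ≥ K have even total count
  have hEgeK : ∀ K, 1 ≤ K →
      ((Finset.Icc 1 (2*N)).filter (fun a => σ a % 2 = 0 ∧ K ≤ σ a)).card % 2 = 0 := by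
    intro K hK
    set s := (Finset.Icc 1 (2*N)).filter (fun a => σ a % 2 = 0 ∧ K ≤ σ a) with hs
    have hmap : ∀ x ∈ s, σ x ∈ s.image σ := fun x hx => Finset.mem_image_of_mem _ hx
    rw [Finset.card_eq_sum_card_fiberwise hmap]
    apply Nat.even_iff.mp
    apply even_finset_sum
    intro w hw
    obtain ⟨a0, ha0, ha0v⟩ := Finset.mem_image.mp hw
    have ha0' := Finset.mem_filter.mp ha0
    have hfib : s.filter (fun x => σ x = w) = (Finset.Icc 1 (2*N)).filter (fun i => σ i = w) := by
      ext i
      simp only [hs, Finset.mem_filter]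
      constructor
      · tauto
      · rintro ⟨hiI, hival⟩
        refine ⟨⟨hiI, ?_, ?_⟩, hival⟩ <;> omega
    rw [hfib, ← mult_finset hpσ (show 1 ≤ w by omega)]
    exact hσ.1.2 w (Nat.even_iff.mpr (by omega))
  -- parity of partial sums of the transpose at odd indices
  have hS_odd : ∀ K, K % 2 = 1 → Ssum (transposeFn σ) K % 2 = 0 := by
    intro K hK
    have hmin : Ssum (transposeFn σ) K = ∑ a ∈ Finset.Icc 1 (2*N), min (σ a) K :=
      tp_sum_min hpσ K
    have hterm : ∀ a ∈ Finset.Icc 1 (2*N), min (σ a) K % 2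
        = ((if σ a % 2 = 1 then 1 else 0) + (if σ a % 2 = 0 ∧ K ≤ σ a then 1 else 0)) % 2 := by
      intro a _
      split_ifs <;> omega
    have hmod : (∑ a ∈ Finset.Icc 1 (2*N), min (σ a) K) % 2
        = (((Finset.Icc 1 (2*N)).filter (fun a => σ a % 2 = 1)).card
          + ((Finset.Icc 1 (2*N)).filter (fun a => σ a % 2 = 0 ∧ K ≤ σ a)).card) % 2 := by
      rw [Finset.sum_nat_mod]
      rw [Finset.sum_congr rfl hterm]
      rw [← Finset.sum_nat_mod]
      rw [Finset.sum_add_distrib, Finset.card_filter, Finset.card_filter]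
    have := hEgeK K (by omega)
    omega
  -- parity at 2r
  have hS2r : Ssum (transposeFn σ) (2*r) % 2 = 0 := by
    have hmin : Ssum (transposeFn σ) (2*r) = ∑ a ∈ Finset.Icc 1 (2*N), min (σ a) (2*r) :=
      tp_sum_min hpσ (2*r)
    have hterm : ∀ a ∈ Finset.Icc 1 (2*N), min (σ a) (2*r) % 2
        = ((if σ a % 2 = 1 then 1 else 0) + (if σ a % 2 = 1 ∧ 2*r ≤ σ a then 1 else 0)) % 2 := by
      intro a _
      split_ifs <;> omega
    have hmod : (∑ a ∈ Finset.Icc 1 (2*N), min (σ a) (2*r)) % 2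
        = (((Finset.Icc 1 (2*N)).filter (fun a => σ a % 2 = 1)).card
          + ((Finset.Icc 1 (2*N)).filter (fun a => σ a % 2 = 1 ∧ 2*r ≤ σ a)).card) % 2 := by
      rw [Finset.sum_nat_mod]
      rw [Finset.sum_congr rfl hterm]
      rw [← Finset.sum_nat_mod]
      rw [Finset.sum_add_distrib, Finset.card_filter, Finset.card_filter]
    -- the odd-and-large set is the odd rows in [1, 2j]
    have hOset : (Finset.Icc 1 (2*N)).filter (fun a => σ a % 2 = 1 ∧ 2*r ≤ σ a)
        = (Finset.Icc 1 (2*j)).filter (fun a => σ a % 2 = 1) := by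
      ext a
      simp only [Finset.mem_filter, Finset.mem_Icc]
      constructor
      · rintro ⟨⟨ha1, haN⟩, hodd, hge⟩
        have hmem : a ∈ Set.Icc 1 (2*j) := by
          rw [← hset_r1]
          exact ⟨ha1, by omega⟩
        exact ⟨⟨hmem.1, hmem.2⟩, hodd⟩
      · rintro ⟨⟨ha1, haj⟩, hodd⟩
        have hmem : a ∈ {x : ℕ | 1 ≤ x ∧ 2*r+1 ≤ σ x} := by
          rw [hset_r1]
          exact ⟨ha1, haj⟩
        have hge := hmem.2
        exact ⟨⟨ha1, by omega⟩, hodd, by omega⟩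
    -- pairing parity from specialness
    have hpair : ∀ i, 1 ≤ i → σ (2*i-1) % 2 = σ (2*i) % 2 := by
      intro i hi
      have hv : 1 ≤ 2*i-1 := by omega
      have hmult := hσ.2 (2*i-1) (by rw [Nat.odd_iff]; omega)
      rw [mult_eq (tp_partition hpσ) hv] at hmult
      rw [tp_tp hpσ hv, tp_tp hpσ (show 1 ≤ 2*i-1+1 by omega)] at hmult
      have hmono : σ (2*i-1+1) ≤ σ (2*i-1) := hpσ.2.1 _ _ hv (by omega)
      rw [Nat.even_sub hmono] at hmult
      simp only [Nat.even_iff] at hmult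
      rw [show 2*i-1+1 = 2*i by omega] at hmult
      omega
    have hOj : ((Finset.Icc 1 (2*j)).filter (fun a => σ a % 2 = 1)).card % 2 = 0 := by
      rw [Finset.card_filter, sum_pair (fun a => if σ a % 2 = 1 then 1 else 0) j]
      rw [Finset.sum_nat_mod]
      have hz : ∀ i ∈ Finset.Icc 1 j,
          ((if σ (2*i-1) % 2 = 1 then 1 else 0) + (if σ (2*i) % 2 = 1 then 1 else 0)) % 2 = 0 := by
        intro i hi
        have := hpair i (Finset.mem_Icc.mp hi).1
        split_ifs <;> omega
      rw [Finset.sum_congr rfl hz, Finset.sum_const, smul_eq_mul]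
      omega
    rw [hOset] at hmod
    omega
  -- eps values
  have heps2rm1 : epsF (transposeFn σ) (2*r-1) = 1 := by
    rw [epsF, if_pos]
    constructor
    · have := hS_odd (2*r-1) (by omega)
      omega
    · rintro ⟨heq, _⟩
      rw [show 2*r-1+1 = 2*r by omega] at heq
      omega
  have heps2r : epsF (transposeFn σ) (2*r) = 0 := by
    rw [epsF, if_neg]
    rintro ⟨hparx, _⟩
    omega
  have heps2r1 : epsF (transposeFn σ) (2*r+1) = 1 := by
    rw [epsF, if_pos]
    constructor
    · have := hS_odd (2*r+1) (by omega)
      omega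
    · rintro ⟨heq, _⟩
      rw [show 2*r+1+1 = 2*r+2 by omega] at heq
      omega
  constructor
  · rw [spaltDual, Dcollapse_eq_nuF hpl (by omega), nuF, if_neg (by omega)]
    rw [hl2r, heps2rm1, heps2r]
    omega
  · rw [spaltDual, Dcollapse_eq_nuF hpl (by omega), nuF, if_neg (by omega)]
    rw [show 2*r+1-1 = 2*r by omega, hl2r1, heps2r, heps2r1]
    omega

end App


/-- If a special D-partition `σ` of `2N` admits a non-special degeneration at
position `j` with data `(r, m)`, then the Spaltenstein dual `τ = d(σ)` satisfies
`τ (2r) = 2j+2m+1` and `τ (2r+1) = 2j-1`; in particular `r` is a marked pair of `τ`.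
Moreover distinct positions in `S'(σ)` give distinct values of `r`, so
`s(σ)` is at most the number of marked pairs of `d(σ)`. -/
theorem nonspecial_degeneration_gives_marked_pair (N j r m : ℕ) (σ : ℕ → ℕ)
    (hσ : IsSpecialDPartition (2 * N) σ) (hj : 1 ≤ j) (hr : 1 ≤ r)
    (h1 : σ (2 * j) = 2 * r + 1)
    (h2 : ∀ i, 2 * j + 1 ≤ i → i ≤ 2 * j + 2 * m → σ i = 2 * r)
    (h3 : σ (2 * j + 2 * m + 1) = 2 * r - 1) :
    spaltDual (2 * N) σ (2 * r) = 2 * j + 2 * m + 1 ∧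
    spaltDual (2 * N) σ (2 * r + 1) = 2 * j - 1 ∧
    r ∈ markedSet (spaltDual (2 * N) σ) ∧
    Set.InjOn (fun j' => (σ (2 * j') - 1) / 2) (nsdSet σ) ∧
    (nsdSet σ).ncard ≤ (markedSet (spaltDual (2 * N) σ)).ncard := by
  have hpσ : IsPartitionFn (2*N) σ := hσ.1.1
  have hpl : IsPartitionFn (2*N) (transposeFn σ) := tp_partition hpσ
  obtain ⟨hv1, hv2⟩ := main_vals hσ hj hr h1 h2 h3
  -- membership in markedSet from the two computed values
  have hmk : ∀ j' r' m' : ℕ, 1 ≤ j' → 1 ≤ r' →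
      spaltDual (2*N) σ (2*r') = 2*j' + 2*m' + 1 →
      spaltDual (2*N) σ (2*r'+1) = 2*j' - 1 →
      r' ∈ markedSet (spaltDual (2*N) σ) := by
    intro j' r' m' hj' hr' hw1 hw2
    refine ⟨hr', ?_, ?_, ?_⟩
    · rw [hw1, Nat.odd_iff]; omega
    · rw [hw2, Nat.odd_iff]; omega
    · rw [hw1, hw2]; omega
  have hmarked : r ∈ markedSet (spaltDual (2 * N) σ) := hmk j r m hj hr hv1 hv2
  -- helper: larger nsd position has smaller r
  have hlt : ∀ x, x ∈ nsdSet σ → ∀ y, y ∈ nsdSet σ → x < y → σ (2*y) < σ (2*x) := by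
    intro x hx y hy hxy
    obtain ⟨hx1, rx, mx, hrx, hx2, hx3, hx4⟩ := hx
    obtain ⟨hy1, ry, my, hry, hy2, hy3, hy4⟩ := hy
    have hcase : 2*y ≥ 2*x + 2*mx + 1 := by
      by_contra h
      push_neg at h
      have := hx3 (2*y) (by omega) (by omega)
      omega
    have hmono := hpσ.2.1 (2*x+2*mx+1) (2*y) (by omega) hcase
    omega
  have hinj : Set.InjOn (fun j' => (σ (2 * j') - 1) / 2) (nsdSet σ) := by
    intro x hx y hy hxy
    simp only at hxy
    obtain ⟨hx1, rx, mx, hrx, hx2, _, _⟩ := hx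
    obtain ⟨hy1, ry, my, hry, hy2, _, _⟩ := hy
    rcases lt_trichotomy x y with h | h | h
    · have := hlt x (by exact ⟨hx1, rx, mx, hrx, hx2, by assumption, by assumption⟩) y
        (by exact ⟨hy1, ry, my, hry, hy2, by assumption, by assumption⟩) h
      rw [hx2, hy2] at hxy this
      omega
    · exact h
    · have := hlt y (by exact ⟨hy1, ry, my, hry, hy2, by assumption, by assumption⟩) x
        (by exact ⟨hx1, rx, mx, hrx, hx2, by assumption, by assumption⟩) h
      rw [hx2, hy2] at hxy this
      omega
  have hmaps : ∀ x ∈ nsdSet σ, (fun j' => (σ (2 * j') - 1) / 2) x ∈ markedSet (spaltDual (2*N) σ) := by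
    intro x hx
    obtain ⟨hx1, rx, mx, hrx, hx2, hx3, hx4⟩ := hx
    obtain ⟨hw1, hw2⟩ := main_vals hσ hx1 hrx hx2 hx3 hx4
    have hfx : (fun j' => (σ (2 * j') - 1) / 2) x = rx := by
      simp only
      rw [hx2]
      omega
    rw [hfx]
    exact hmk x rx mx hx1 hrx hw1 hw2
  have hmfin : (markedSet (spaltDual (2*N) σ)).Finite := by
    apply Set.Finite.subset (Set.finite_Icc 1 N)
    rintro x ⟨hx1, hodd, _, _⟩
    refine ⟨hx1, ?_⟩
    by_contra h
    have hz : spaltDual (2*N) σ (2*x) = 0 := by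
      rw [spaltDual, Dcollapse_eq_nuF hpl (by omega)]
      exact (nuF_partition hpl).2.2.1 _ (by omega)
    rw [hz, Nat.odd_iff] at hodd
    omega
  have hnfin : (nsdSet σ).Finite := by
    apply Set.Finite.subset (Set.finite_Icc 1 N)
    rintro x ⟨hx1, rx, mx, hrx, hx2, _, _⟩
    refine ⟨hx1, ?_⟩
    by_contra h
    have := hpσ.2.2.1 (2*x) (by omega)
    omega
  have hcard : (nsdSet σ).ncard ≤ (markedSet (spaltDual (2 * N) σ)).ncard := by
    rw [← Set.ncard_image_of_injOn hinj]
    apply Set.ncard_le_ncard _ hmfin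
    rintro _ ⟨x, hx, rfl⟩
    exact hmaps x hx
  exact ⟨hv1, hv2, hmarked, hinj, hcard⟩
end

section
/- Let p be a special D-partition of 2N. Then the number of marked pairs of p equals s(d(p)), the number of (independent) non-special degenerations of the Spaltenstein dual d(p) = D(p^T). Equivalently, for every special D-partition σ of 2N, s(σ) equals the number of marked pairs of d(σ). -/
private lemma downclosed_eq_Icc {S : Set ℕ} (hfin : S.Finite) (h1 : ∀ i ∈ S, 1 ≤ i)
    (hdc : ∀ i j, 1 ≤ i → i ≤ j → j ∈ S → i ∈ S) : S = Set.Icc 1 S.ncard := by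
  ext i
  simp only [Set.mem_Icc]
  constructor
  · intro hi
    have h1i := h1 i hi
    refine ⟨h1i, ?_⟩
    have hsub : Set.Icc 1 i ⊆ S := fun x hx => hdc x i hx.1 hx.2 hi
    have h2 : (Set.Icc 1 i).ncard ≤ S.ncard := Set.ncard_le_ncard hsub hfin
    rwa [← Finset.coe_Icc, Set.ncard_coe_finset, Nat.card_Icc, Nat.add_sub_cancel] at h2
  · rintro ⟨h1i, hle⟩
    by_contra hiS
    have hsub : S ⊆ Set.Icc 1 (i - 1) := by
      intro j hj
      refine ⟨h1 j hj, ?_⟩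
      by_contra hji
      exact hiS (hdc i j h1i (by omega) hj)
    have h2 := Set.ncard_le_ncard hsub (Set.finite_Icc _ _)
    rw [← Finset.coe_Icc, Set.ncard_coe_finset, Nat.card_Icc] at h2
    omega

private lemma tr_galois {p : ℕ → ℕ} {n : ℕ}
    (hmono : ∀ i j, 1 ≤ i → i ≤ j → p j ≤ p i)
    (hzero : ∀ i, n < i → p i = 0) {i k : ℕ} (hi : 1 ≤ i) (hk : 1 ≤ k) :
    k ≤ p i ↔ i ≤ transposeFn p k := by
  have hfin : {j : ℕ | 1 ≤ j ∧ k ≤ p j}.Finite := by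
    apply (Set.finite_Icc 1 n).subset
    rintro x ⟨hx1, hx2⟩
    have : x ≤ n := by
      by_contra h
      rw [hzero x (by omega)] at hx2
      omega
    exact ⟨hx1, this⟩
  have hset : {j : ℕ | 1 ≤ j ∧ k ≤ p j} = Set.Icc 1 ({j : ℕ | 1 ≤ j ∧ k ≤ p j}.ncard) :=
    downclosed_eq_Icc hfin (fun j hj => hj.1)
      (fun a b ha hab hb => ⟨ha, le_trans hb.2 (hmono a b ha hab)⟩)
  have h3 := Set.ext_iff.mp hset i
  simp only [Set.mem_setOf_eq, Set.mem_Icc] at h3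
  show k ≤ p i ↔ i ≤ {j : ℕ | 1 ≤ j ∧ k ≤ p j}.ncard
  omega

private lemma val_le {p : ℕ → ℕ} {n : ℕ} (hP : IsPartitionFn n p) : ∀ i, p i ≤ n := by
  obtain ⟨h0, hmono, hzero, hsum⟩ := hP
  intro i
  rcases Nat.eq_zero_or_pos i with hi | hi
  · simp [hi, h0]
  rcases le_or_gt i n with hin | hin
  · calc p i ≤ ∑ j ∈ Finset.Icc 1 n, p j :=
        Finset.single_le_sum (fun j _ => Nat.zero_le _) (by simp [Finset.mem_Icc]; omega)
      _ = n := hsum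
  · rw [hzero i hin]; exact Nat.zero_le n

private lemma tr_zero {p : ℕ → ℕ} (_hp0 : p 0 = 0) : transposeFn p 0 = 0 := by
  have : {i : ℕ | 1 ≤ i ∧ 0 ≤ p i} = Set.Ici 1 := by
    ext i; simp [Set.mem_Ici]
  show {i : ℕ | 1 ≤ i ∧ 0 ≤ p i}.ncard = 0
  rw [this]
  exact (Set.Ici_infinite 1).ncard

private lemma tr_large {p : ℕ → ℕ} {n : ℕ} (hP : IsPartitionFn n p) :
    ∀ k, n < k → transposeFn p k = 0 := by
  intro k hk
  have : {i : ℕ | 1 ≤ i ∧ k ≤ p i} = ∅ := by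
    ext i
    simp only [Set.mem_setOf_eq, Set.mem_empty_iff_false, iff_false, not_and]
    intro h1 h2
    have := val_le hP i
    omega
  show {i : ℕ | 1 ≤ i ∧ k ≤ p i}.ncard = 0
  rw [this]; simp

private lemma tr_mono {p : ℕ → ℕ} {n : ℕ}
    (hmono : ∀ i j, 1 ≤ i → i ≤ j → p j ≤ p i)
    (hzero : ∀ i, n < i → p i = 0) :
    ∀ k l, 1 ≤ k → k ≤ l → transposeFn p l ≤ transposeFn p k := by
  intro k l hk hkl
  rcases Nat.eq_zero_or_pos (transposeFn p l) with h | h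
  · omega
  have h1 : l ≤ p (transposeFn p l) :=
    (tr_galois hmono hzero (i := transposeFn p l) h (by omega)).mpr le_rfl
  have h2 : k ≤ p (transposeFn p l) := le_trans hkl h1
  exact (tr_galois hmono hzero h hk).mp h2

private lemma min_sum {p : ℕ → ℕ} {n : ℕ} (hP : IsPartitionFn n p) (K : ℕ) :
    ∑ k ∈ Finset.Icc 1 K, transposeFn p k = ∑ i ∈ Finset.Icc 1 n, min (p i) K := by
  obtain ⟨h0, hmono, hzero, hsum⟩ := hP
  have key : ∀ k, 1 ≤ k → transposeFn p k
      = ((Finset.Icc 1 n).filter (fun i => k ≤ p i)).card := by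
    intro k hk
    have hset : {i : ℕ | 1 ≤ i ∧ k ≤ p i}
        = (((Finset.Icc 1 n).filter (fun i => k ≤ p i)) : Finset ℕ) := by
      ext i
      simp only [Set.mem_setOf_eq, Finset.coe_filter, Finset.mem_Icc, Set.mem_setOf_eq]
      constructor
      · rintro ⟨h1, h2⟩
        refine ⟨⟨h1, ?_⟩, h2⟩
        by_contra h
        rw [hzero i (by omega)] at h2; omega
      · rintro ⟨⟨h1, _⟩, h2⟩; exact ⟨h1, h2⟩
    show {i : ℕ | 1 ≤ i ∧ k ≤ p i}.ncard = _
    rw [hset, Set.ncard_coe_finset]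
  calc ∑ k ∈ Finset.Icc 1 K, transposeFn p k
      = ∑ k ∈ Finset.Icc 1 K, ((Finset.Icc 1 n).filter (fun i => k ≤ p i)).card := by
        apply Finset.sum_congr rfl
        intro k hk
        simp only [Finset.mem_Icc] at hk
        exact key k hk.1
    _ = ∑ k ∈ Finset.Icc 1 K, ∑ i ∈ Finset.Icc 1 n, (if k ≤ p i then 1 else 0) := by
        apply Finset.sum_congr rfl
        intro k _
        rw [Finset.card_filter]
    _ = ∑ i ∈ Finset.Icc 1 n, ∑ k ∈ Finset.Icc 1 K, (if k ≤ p i then 1 else 0) :=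
        Finset.sum_comm
    _ = ∑ i ∈ Finset.Icc 1 n, min (p i) K := by
        apply Finset.sum_congr rfl
        intro i _
        rw [← Finset.card_filter]
        have : (Finset.Icc 1 K).filter (fun k => k ≤ p i) = Finset.Icc 1 (min (p i) K) := by
          ext x
          simp only [Finset.mem_filter, Finset.mem_Icc]
          omega
        rw [this, Nat.card_Icc]
        omega

private lemma tr_partition {p : ℕ → ℕ} {n : ℕ} (hP : IsPartitionFn n p) :
    IsPartitionFn n (transposeFn p) := by
  obtain ⟨h0, hmono, hzero, hsum⟩ := hP
  refine ⟨tr_zero h0, ?_, fun k hk => tr_large ⟨h0, hmono, hzero, hsum⟩ k hk, ?_⟩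
  · intro i j hi hij
    exact tr_mono hmono hzero i j hi hij
  · have h1 : ∑ i ∈ Finset.Icc 1 n, min (p i) n = ∑ i ∈ Finset.Icc 1 n, p i :=
      Finset.sum_congr rfl (fun i _ => by
        have := val_le (⟨h0, hmono, hzero, hsum⟩ : IsPartitionFn n p) i
        omega)
    rw [min_sum ⟨h0, hmono, hzero, hsum⟩ n, h1, hsum]

private lemma tr_tr {p : ℕ → ℕ} {n : ℕ} (hP : IsPartitionFn n p) :
    ∀ i, transposeFn (transposeFn p) i = p i := by
  obtain ⟨h0, hmono, hzero, hsum⟩ := hP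
  intro i
  rcases Nat.eq_zero_or_pos i with hi | hi
  · rw [hi, h0]
    exact tr_zero (tr_zero h0)
  have hset : {k : ℕ | 1 ≤ k ∧ i ≤ transposeFn p k} = Set.Icc 1 (p i) := by
    ext k
    simp only [Set.mem_setOf_eq, Set.mem_Icc]
    constructor
    · rintro ⟨hk, h2⟩
      exact ⟨hk, (tr_galois hmono hzero hi hk).mpr h2⟩
    · rintro ⟨hk, h2⟩
      exact ⟨hk, (tr_galois hmono hzero hi hk).mp h2⟩
  show {k : ℕ | 1 ≤ k ∧ i ≤ transposeFn p k}.ncard = p i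
  rw [hset, ← Finset.coe_Icc, Set.ncard_coe_finset, Nat.card_Icc]
  omega

private lemma partMult_eq {p : ℕ → ℕ} {n : ℕ}
    (hmono : ∀ i j, 1 ≤ i → i ≤ j → p j ≤ p i)
    (hzero : ∀ i, n < i → p i = 0) {k : ℕ} (hk : 1 ≤ k) :
    partMult p k + transposeFn p (k + 1) = transposeFn p k := by
  have hset : {i : ℕ | 1 ≤ i ∧ p i = k}
      = Set.Icc (transposeFn p (k+1) + 1) (transposeFn p k) := by
    ext i
    simp only [Set.mem_setOf_eq, Set.mem_Icc]
    constructor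
    · rintro ⟨h1, h2⟩
      have ha : i ≤ transposeFn p k := (tr_galois hmono hzero h1 hk).mp (by omega)
      have hb : ¬ (i ≤ transposeFn p (k+1)) := by
        intro h
        have := (tr_galois hmono hzero h1 (by omega)).mpr h
        omega
      omega
    · rintro ⟨h1, h2⟩
      have h1' : 1 ≤ i := by omega
      have ha : k ≤ p i := (tr_galois hmono hzero h1' hk).mpr h2
      have hb : ¬ (k + 1 ≤ p i) := by
        intro h
        have := (tr_galois hmono hzero h1' (by omega)).mp h
        omega
      exact ⟨h1', by omega⟩
  have hmono' := tr_mono hmono hzero k (k+1) hk (by omega)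
  show {i : ℕ | 1 ≤ i ∧ p i = k}.ncard + _ = _
  rw [hset, ← Finset.coe_Icc, Set.ncard_coe_finset, Nat.card_Icc]
  omega

private lemma partMult_zero {p : ℕ → ℕ} {n : ℕ} (hP : IsPartitionFn n p) :
    partMult p 0 = 0 := by
  have hsub : Set.Ici (n+1) ⊆ {i : ℕ | 1 ≤ i ∧ p i = 0} := by
    intro i hi
    simp only [Set.mem_Ici] at hi
    exact ⟨by omega, hP.2.2.1 i (by omega)⟩
  exact ((Set.Ici_infinite (n+1)).mono hsub).ncard









private lemma S_succ (p : ℕ → ℕ) (m : ℕ) :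
    ∑ i ∈ Finset.Icc 1 (m+1), p i = (∑ i ∈ Finset.Icc 1 m, p i) + p (m+1) :=
  Finset.sum_Icc_succ_top (by omega) p

private lemma S_split (p : ℕ → ℕ) {m n : ℕ} (h : m ≤ n) :
    ∑ i ∈ Finset.Icc 1 n, p i = (∑ i ∈ Finset.Icc 1 m, p i) + ∑ i ∈ Finset.Ioc m n, p i := by
  have h1 : Finset.Icc 1 n = Finset.Ioc 0 n := by
    ext x; simp only [Finset.mem_Icc, Finset.mem_Ioc]; omega
  have h2 : Finset.Icc 1 m = Finset.Ioc 0 m := by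
    ext x; simp only [Finset.mem_Icc, Finset.mem_Ioc]; omega
  rw [h1, h2, Finset.sum_Ioc_consecutive p (Nat.zero_le m) h]

private lemma dom_dual {f g : ℕ → ℕ} {n : ℕ} (hf : IsPartitionFn n f) (hg : IsPartitionFn n g)
    (h : DominatesFn f g) : DominatesFn (transposeFn g) (transposeFn f) := by
  intro K
  rcases Nat.eq_zero_or_pos K with hK | hK
  · simp [hK]
  have hgmono := hg.2.1
  have hgzero := hg.2.2.1
  set m := transposeFn g (K+1) with hm
  have hmn : m ≤ n := val_le (tr_partition hg) (K+1)
  have hup : ∀ i, 1 ≤ i → i ≤ m → min (g i) K = K := by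
    intro i h1 h2
    have := (tr_galois hgmono hgzero h1 (by omega)).mpr h2
    omega
  have hdn : ∀ i, m < i → min (g i) K = g i := by
    intro i h2
    have h1 : 1 ≤ i := by omega
    have : ¬ (K + 1 ≤ g i) := by
      intro hc
      have := (tr_galois hgmono hgzero h1 (by omega)).mp hc
      omega
    omega
  rw [min_sum hf K, min_sum hg K]
  have e1a : ∑ i ∈ Finset.Icc 1 m, min (g i) K = m * K := by
    rw [Finset.sum_congr rfl (fun i hi => hup i (Finset.mem_Icc.mp hi).1 (Finset.mem_Icc.mp hi).2)]
    simp [Nat.card_Icc, mul_comm]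
  have e1b : ∑ i ∈ Finset.Ioc m n, min (g i) K = ∑ i ∈ Finset.Ioc m n, g i :=
    Finset.sum_congr rfl (fun i hi => hdn i (Finset.mem_Ioc.mp hi).1)
  have e2a : ∀ i, min (f i) K ≤ K := fun i => by omega
  have e2b : ∀ i, min (f i) K ≤ f i := fun i => by omega
  have splitg := S_split (fun i => min (g i) K) hmn
  have splitf := S_split (fun i => min (f i) K) hmn
  have splitG := S_split g hmn
  have splitF := S_split f hmn
  have bf1 : ∑ i ∈ Finset.Icc 1 m, min (f i) K ≤ m * K := by
    calc ∑ i ∈ Finset.Icc 1 m, min (f i) K ≤ ∑ _i ∈ Finset.Icc 1 m, K :=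
          Finset.sum_le_sum (fun i _ => e2a i)
      _ = m * K := by simp [Nat.card_Icc, mul_comm]
  have bf2 : ∑ i ∈ Finset.Ioc m n, min (f i) K ≤ ∑ i ∈ Finset.Ioc m n, f i :=
    Finset.sum_le_sum (fun i _ => e2b i)
  have hdm := h m
  have htf : ∑ i ∈ Finset.Icc 1 n, f i = n := hf.2.2.2
  have htg : ∑ i ∈ Finset.Icc 1 n, g i = n := hg.2.2.2
  omega

private lemma collapse_unique {n : ℕ} {lam mu mu' : ℕ → ℕ}
    (h1 : IsDCollapseOf n lam mu) (h2 : IsDCollapseOf n lam mu') : mu = mu' := by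
  have d1 : DominatesFn mu mu' := h1.2.2 mu' h2.1 h2.2.1
  have d2 : DominatesFn mu' mu := h2.2.2 mu h1.1 h1.2.1
  have hs : ∀ m, ∑ i ∈ Finset.Icc 1 m, mu i = ∑ i ∈ Finset.Icc 1 m, mu' i :=
    fun m => le_antisymm (d2 m) (d1 m)
  funext i
  rcases Nat.eq_zero_or_pos i with h0 | h0
  · rw [h0, h1.1.1.1, h2.1.1.1]
  · obtain ⟨i', rfl⟩ : ∃ i', i = i' + 1 := ⟨i - 1, by omega⟩
    have ha := hs i'
    have hb := hs (i' + 1)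
    rw [S_succ mu i', S_succ mu' i'] at hb
    omega

private lemma Dcollapse_eq {n : ℕ} {lam mu : ℕ → ℕ} (h : IsDCollapseOf n lam mu) :
    Dcollapse n lam = mu := by
  have hex : ∃ m, IsDCollapseOf n lam m := ⟨mu, h⟩
  rw [Dcollapse, dif_pos hex]
  exact collapse_unique hex.choose_spec h

/-! ### The explicit collapse construction for special D-partitions -/

private def Dm (p : ℕ → ℕ) (m : ℕ) : ℕ :=
  if p m % 2 = 1 ∧ (m % 2 = 1 ∨ p m = p (m + 1)) then 1 else 0

private def cfun (p : ℕ → ℕ) (m : ℕ) : ℕ :=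
  if m = 0 then 0 else p m + Dm p m - Dm p (m - 1)

private lemma Dm_le (p : ℕ → ℕ) (m : ℕ) : Dm p m ≤ 1 := by
  unfold Dm; split <;> omega

private lemma Dm_one_iff (p : ℕ → ℕ) (m : ℕ) :
    Dm p m = 1 ↔ (p m % 2 = 1 ∧ (m % 2 = 1 ∨ p m = p (m + 1))) := by
  unfold Dm; split <;> simp_all

private lemma Dm_zero_iff (p : ℕ → ℕ) (m : ℕ) :
    Dm p m = 0 ↔ ¬ (p m % 2 = 1 ∧ (m % 2 = 1 ∨ p m = p (m + 1))) := by
  unfold Dm; split <;> simp_all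

section Special

variable {N : ℕ} {p : ℕ → ℕ}

private lemma spec_pair (hp : IsSpecialDPartition (2*N) p) :
    ∀ k, k % 2 = 1 → p k % 2 = p (k+1) % 2 := by
  intro k hk
  have hP := hp.1.1
  have hmult := partMult_eq (p := transposeFn p) (n := 2*N)
    (tr_partition hP).2.1 (tr_partition hP).2.2.1 (k := k) (by omega)
  rw [tr_tr hP (k+1), tr_tr hP k] at hmult
  have hev := hp.2 k (Nat.odd_iff.mpr hk)
  rw [Nat.even_iff] at hev
  have hle : p (k+1) ≤ p k := hP.2.1 k (k+1) (by omega) (by omega)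
  omega

private lemma P_even (hp : IsSpecialDPartition (2*N) p) :
    ∀ j, (∑ i ∈ Finset.Icc 1 (2*j), p i) % 2 = 0 := by
  intro j
  induction j with
  | zero => simp
  | succ j ih =>
    have e1 : 2*(j+1) = (2*j+1)+1 := by ring
    rw [e1, S_succ p (2*j+1), S_succ p (2*j)]
    have := spec_pair hp (2*j+1) (by omega)
    omega

private lemma K_a (hp : IsSpecialDPartition (2*N) p) :
    ∀ i, i % 2 = 1 → p i % 2 = 0 → 1 ≤ p i → p (i+1) = p i := by
  intro i
  induction i using Nat.strong_induction_on with
  | _ i IH =>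
    intro hodd heven hpos
    by_contra hne
    have hP := hp.1.1
    have hmono := hP.2.1
    have hzero := hP.2.2.1
    have hlt : p (i+1) < p i := lt_of_le_of_ne (hmono i (i+1) (by omega) (by omega)) hne
    have htrv : transposeFn p (p i) = i := by
      apply le_antisymm
      · by_contra hc
        push_neg at hc
        have := (tr_galois hmono hzero (i := i+1) (k := p i) (by omega) (by omega)).mpr hc
        omega
      · exact (tr_galois hmono hzero (by omega) (by omega)).mp le_rfl
    have hui : transposeFn p (p i + 1) < i := by
      have h2 : ¬ (i ≤ transposeFn p (p i + 1)) := by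
        intro hc
        have := (tr_galois hmono hzero (i := i) (k := p i + 1) (by omega) (by omega)).mpr hc
        omega
      omega
    set u := transposeFn p (p i + 1) + 1 with hu
    have hmult := partMult_eq hmono hzero (k := p i) (by omega)
    have hDv := hp.1.2 (p i) (Nat.even_iff.mpr heven)
    rw [Nat.even_iff] at hDv
    have hueven : u % 2 = 0 := by omega
    have hpu1 : p i ≤ p u := hmono u i (by omega) (by omega)
    have hpu2 : ¬ (p i + 1 ≤ p u) := by
      intro hc
      have := (tr_galois hmono hzero (i := u) (k := p i + 1) (by omega) (by omega)).mp hc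
      omega
    have hpu3 : p i + 1 ≤ p (u-1) :=
      (tr_galois hmono hzero (i := u-1) (k := p i + 1) (by omega) (by omega)).mpr (by omega)
    have hsp := spec_pair hp (u-1) (by omega)
    have e1 : u - 1 + 1 = u := by omega
    rw [e1] at hsp
    have hIH := IH (u-1) (by omega) (by omega) (by omega) (by omega)
    rw [e1] at hIH
    omega

private lemma K_b (hp : IsSpecialDPartition (2*N) p) :
    ∀ i, i % 2 = 1 → p (i+1) % 2 = 0 → p i = p (i+1) := by
  intro i hodd heven
  have hsp := spec_pair hp i hodd
  have hle : p (i+1) ≤ p i := hp.1.1.2.1 i (i+1) (by omega) (by omega)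
  rcases Nat.eq_zero_or_pos (p i) with h | h
  · omega
  · have := K_a hp i hodd (by omega) h
    omega

private lemma Dm_zero0 (hp : IsSpecialDPartition (2*N) p) : Dm p 0 = 0 := by
  rw [Dm_zero_iff, hp.1.1.1]
  omega

private lemma Dm_2N (hp : IsSpecialDPartition (2*N) p) : Dm p (2*N) = 0 := by
  rw [Dm_zero_iff]
  have h1 : p (2*N+1) = 0 := hp.1.1.2.2.1 _ (by omega)
  rintro ⟨ho, hor⟩
  rcases hor with h | h
  · omega
  · omega

private lemma sub_ok (hp : IsSpecialDPartition (2*N) p) :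
    ∀ m, 1 ≤ m → Dm p (m-1) ≤ p m + Dm p m := by
  intro m hm
  rcases Nat.eq_zero_or_pos (Dm p (m-1)) with h | h
  · omega
  have h1 : Dm p (m-1) = 1 := by have := Dm_le p (m-1); omega
  have h1' := h1
  rw [Dm_one_iff] at h1'
  have hDle2 := Dm_le p m
  obtain ⟨ho, hor⟩ := h1'
  have e1 : m - 1 + 1 = m := by omega
  rcases hor with hi | hv
  · have := spec_pair hp (m-1) hi
    rw [e1] at this
    omega
  · rw [e1] at hv
    omega

private lemma cval (hp : IsSpecialDPartition (2*N) p) :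
    ∀ m, 1 ≤ m → cfun p m + Dm p (m-1) = p m + Dm p m := by
  intro m hm
  have := sub_ok hp m hm
  unfold cfun
  rw [if_neg (by omega)]
  omega

private lemma csum (hp : IsSpecialDPartition (2*N) p) :
    ∀ m, ∑ i ∈ Finset.Icc 1 m, cfun p i = (∑ i ∈ Finset.Icc 1 m, p i) + Dm p m := by
  intro m
  induction m with
  | zero => simp [Dm_zero0 hp]
  | succ m ih =>
    rw [S_succ (cfun p) m, S_succ p m, ih]
    have := cval hp (m+1) (by omega)
    simp only [Nat.add_sub_cancel] at this
    omega

private lemma cmono (hp : IsSpecialDPartition (2*N) p) :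
    ∀ m, 1 ≤ m → cfun p (m+1) ≤ cfun p m := by
  intro m hm
  have e1 := cval hp m hm
  have e2 := cval hp (m+1) (by omega)
  simp only [Nat.add_sub_cancel] at e2
  have hle : p (m+1) ≤ p m := hp.1.1.2.1 m (m+1) hm (by omega)
  have hd1 := Dm_le p (m-1)
  have hd2 := Dm_le p m
  have hd3 := Dm_le p (m+1)
  by_cases hDm : Dm p m = 1
  · omega
  · have hDm0 : Dm p m = 0 := by omega
    rw [Dm_zero_iff] at hDm0
    by_cases hD1 : Dm p (m-1) = 1
    · rw [Dm_one_iff] at hD1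
      obtain ⟨ho, hor⟩ := hD1
      have e3 : m - 1 + 1 = m := by omega
      rcases Nat.even_or_odd m with hme | hmo
      · rw [Nat.even_iff] at hme
        have hsp := spec_pair hp (m-1) (by omega)
        rw [e3] at hsp
        -- p m odd, p m ≠ p (m+1)
        have hpmo : p m % 2 = 1 := by omega
        have hne : p m ≠ p (m+1) := by
          intro hc
          exact hDm0 ⟨hpmo, Or.inr hc⟩
        by_cases hD3 : Dm p (m+1) = 1
        · rw [Dm_one_iff] at hD3
          omega
        · omega
      · rw [Nat.odd_iff] at hmo
        rcases hor with h | h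
        · omega
        · rw [e3] at h
          exact absurd (hDm0 ⟨by omega, Or.inl hmo⟩) (by simp)
    · have hD10 : Dm p (m-1) = 0 := by omega
      by_cases hD3 : Dm p (m+1) = 1
      · rw [Dm_one_iff] at hD3
        have hne : p m ≠ p (m+1) := by
          intro hc
          exact hDm0 ⟨by omega, Or.inr hc⟩
        omega
      · omega

private lemma czero (hp : IsSpecialDPartition (2*N) p) :
    ∀ i, 2*N < i → cfun p i = 0 := by
  intro i hi
  have hzero := hp.1.1.2.2.1
  have hpi : p i = 0 := hzero i hi
  have hDi : Dm p i = 0 := by rw [Dm_zero_iff, hpi]; omega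
  have hDi1 : Dm p (i-1) = 0 := by
    rcases Nat.lt_or_ge (2*N) (i-1) with h | h
    · rw [Dm_zero_iff, hzero (i-1) h]; omega
    · have : i - 1 = 2*N := by omega
      rw [this]; exact Dm_2N hp
  unfold cfun
  rw [if_neg (by omega), hpi, hDi, hDi1]

private lemma cPartition (hp : IsSpecialDPartition (2*N) p) :
    IsPartitionFn (2*N) (cfun p) := by
  refine ⟨rfl, ?_, czero hp, ?_⟩
  · intro i j hi hij
    induction j with
    | zero => omega
    | succ j ih =>
      rcases Nat.lt_or_ge j i with h | h
      · have hij : i = j + 1 := by omega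
        rw [hij]
      · exact le_trans (cmono hp j (by omega)) (ih h)
  · rw [csum hp (2*N), Dm_2N hp, hp.1.1.2.2.2]
    omega

private lemma codd (hp : IsSpecialDPartition (2*N) p) :
    ∀ j, (∑ i ∈ Finset.Icc 1 (2*j+1), cfun p i) % 2 = 0 := by
  intro j
  rw [csum hp (2*j+1), S_succ p (2*j)]
  have h1 := P_even hp j
  have h2 : Dm p (2*j+1) = if p (2*j+1) % 2 = 1 then 1 else 0 := by
    rcases Nat.eq_zero_or_pos (Dm p (2*j+1)) with h | h
    · have h' := h
      rw [Dm_zero_iff] at h'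
      have hc : ¬ p (2*j+1) % 2 = 1 := fun hc => h' ⟨hc, Or.inl (by omega)⟩
      rw [if_neg hc, h]
    · have h' : Dm p (2*j+1) = 1 := by have := Dm_le p (2*j+1); omega
      have h'' := h'
      rw [Dm_one_iff] at h''
      rw [if_pos h''.1, h']
  split at h2 <;> omega

private lemma muD (hp : IsSpecialDPartition (2*N) p) :
    IsDPartition (2*N) (transposeFn (cfun p)) := by
  have hc := cPartition hp
  refine ⟨tr_partition hc, ?_⟩
  intro k hk
  rcases Nat.eq_zero_or_pos k with h0 | h0
  · rw [h0, partMult_zero (tr_partition hc)]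
    exact Even.zero
  · rw [Nat.even_iff] at hk
    obtain ⟨j, rfl⟩ : ∃ j, k = 2*j+2 := ⟨(k-2)/2, by omega⟩
    have hmult := partMult_eq (p := transposeFn (cfun p)) (n := 2*N)
      (tr_partition hc).2.1 (tr_partition hc).2.2.1 (k := 2*j+2) (by omega)
    rw [tr_tr hc (2*j+2+1), tr_tr hc (2*j+2)] at hmult
    have h1 := codd hp j
    have h2 := codd hp (j+1)
    have e1 : 2*(j+1)+1 = (2*j+1)+1+1 := by ring
    rw [e1, S_succ (cfun p) ((2*j+1)+1), S_succ (cfun p) (2*j+1)] at h2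
    have hmono := cmono hp (2*j+2) (by omega)
    rw [Nat.even_iff]
    have e2 : 2*j+1+1 = 2*j+2 := by omega
    rw [e2] at h2
    omega

private lemma coD_of_D {nu : ℕ → ℕ} {N : ℕ} (hnu : IsDPartition (2*N) nu) :
    ∀ j, (∑ k ∈ Finset.Icc 1 (2*j+1), transposeFn nu k) % 2 = 0 := by
  have hP := hnu.1
  have pair_even : ∀ e, 1 ≤ e →
      (transposeFn nu (2*e) + transposeFn nu (2*e+1)) % 2 = 0 := by
    intro e he
    have hmult := partMult_eq hP.2.1 hP.2.2.1 (k := 2*e) (by omega)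
    have hev := hnu.2 (2*e) (by exact ⟨e, by ring⟩)
    rw [Nat.even_iff] at hev
    omega
  have aux : ∀ t j, (∑ k ∈ Finset.Icc 1 (2*(j+t)+1), transposeFn nu k) % 2
      = (∑ k ∈ Finset.Icc 1 (2*j+1), transposeFn nu k) % 2 := by
    intro t
    induction t with
    | zero => simp
    | succ t ih =>
      intro j
      have e1 : 2*(j+(t+1))+1 = (2*(j+t)+1)+1+1 := by ring
      rw [e1, S_succ (transposeFn nu) ((2*(j+t)+1)+1), S_succ (transposeFn nu) (2*(j+t)+1)]
      have hpe := pair_even (j+t+1) (by omega)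
      have e2 : 2*(j+t)+1+1 = 2*(j+t+1) := by ring
      have e3 : 2*(j+t)+1+1+1 = 2*(j+t+1)+1 := by ring
      rw [e3, e2]
      have := ih j
      omega
  intro j
  have large : ∑ k ∈ Finset.Icc 1 (2*(j+N)+1), transposeFn nu k = 2*N := by
    have hsub : Finset.Icc 1 (2*N) ⊆ Finset.Icc 1 (2*(j+N)+1) := by
      apply Finset.Icc_subset_Icc le_rfl; omega
    have hout : ∀ x ∈ Finset.Icc 1 (2*(j+N)+1), x ∉ Finset.Icc 1 (2*N) →
        transposeFn nu x = 0 := by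
      intro x hx hnx
      simp only [Finset.mem_Icc] at hx hnx
      exact (tr_partition hP).2.2.1 x (by omega)
    rw [← Finset.sum_subset hsub hout]
    exact (tr_partition hP).2.2.2
  have := aux N j
  rw [large] at this
  omega

private lemma collapse_main (hp : IsSpecialDPartition (2*N) p) :
    IsDCollapseOf (2*N) (transposeFn p) (transposeFn (cfun p)) := by
  have hP := hp.1.1
  have hc := cPartition hp
  refine ⟨muD hp, ?_, ?_⟩
  · apply dom_dual hc hP
    intro m
    rw [csum hp m]
    omega
  · intro nu hnuD hnudom
    have h1 : DominatesFn (transposeFn nu) (transposeFn (transposeFn p)) :=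
      dom_dual (tr_partition hP) hnuD.1 hnudom
    rw [show transposeFn (transposeFn p) = p from funext (tr_tr hP)] at h1
    have hTmono := (tr_partition hnuD.1).2.1
    have hodd_case : ∀ m', m' % 2 = 1 → p m' % 2 = 1 →
        (∑ i ∈ Finset.Icc 1 m', p i) + 1 ≤ ∑ i ∈ Finset.Icc 1 m', transposeFn nu i := by
      intro m' hm' hpm'
      obtain ⟨j, rfl⟩ : ∃ j, m' = 2*j+1 := ⟨(m'-1)/2, by omega⟩
      have hPodd : (∑ i ∈ Finset.Icc 1 (2*j+1), p i) % 2 = 1 := by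
        rw [S_succ p (2*j)]
        have := P_even hp j
        omega
      have hTev := coD_of_D hnuD j
      have := h1 (2*j+1)
      omega
    have key : ∀ m, ∑ i ∈ Finset.Icc 1 m, cfun p i ≤ ∑ i ∈ Finset.Icc 1 m, transposeFn nu i := by
      intro m
      rw [csum hp m]
      have hDle := Dm_le p m
      rcases Nat.eq_zero_or_pos (Dm p m) with hD | hD
      · have := h1 m; omega
      have hD1 : Dm p m = 1 := by omega
      have hD1' := hD1
      rw [Dm_one_iff] at hD1'
      obtain ⟨hpm, hor⟩ := hD1'
      rcases Nat.even_or_odd m with hme | hmo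
      · rw [Nat.even_iff] at hme
        have hveq : p m = p (m+1) := by
          rcases hor with h | h
          · omega
          · exact h
        have hm2 : 2 ≤ m := by
          rcases Nat.eq_zero_or_pos m with h0 | h0
          · rw [h0, hp.1.1.1] at hpm; omega
          · omega
        have hsp := spec_pair hp (m-1) (by omega)
        rw [show m - 1 + 1 = m from by omega] at hsp
        have hL := hodd_case (m-1) (by omega) (by omega)
        have hR := hodd_case (m+1) (by omega) (by omega)
        have eL : ∑ i ∈ Finset.Icc 1 m, p i
            = (∑ i ∈ Finset.Icc 1 (m-1), p i) + p m := by
          rw [show m = (m-1)+1 from by omega, S_succ p (m-1)]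
          rw [show m - 1 + 1 = m from by omega]
        have eR := S_succ p m
        have eLT : ∑ i ∈ Finset.Icc 1 m, transposeFn nu i
            = (∑ i ∈ Finset.Icc 1 (m-1), transposeFn nu i) + transposeFn nu m := by
          rw [show m = (m-1)+1 from by omega, S_succ (transposeFn nu) (m-1)]
          rw [show m - 1 + 1 = m from by omega]
        have eRT := S_succ (transposeFn nu) m
        have hTm := hTmono m (m+1) (by omega) (by omega)
        omega
      · rw [Nat.odd_iff] at hmo
        have := hodd_case m hmo hpm
        omega
    have h2 : DominatesFn (transposeFn (cfun p)) (transposeFn (transposeFn nu)) :=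
      dom_dual (tr_partition hnuD.1) hc key
    rwa [show transposeFn (transposeFn nu) = nu from funext (tr_tr hnuD.1)] at h2

private lemma spalt_eval (hp : IsSpecialDPartition (2*N) p) :
    spaltDual (2*N) p = transposeFn (cfun p) := by
  rw [spaltDual]
  exact Dcollapse_eq (collapse_main hp)

private lemma gal_c (hp : IsSpecialDPartition (2*N) p) {i k : ℕ} (hi : 1 ≤ i) (hk : 1 ≤ k) :
    k ≤ cfun p i ↔ i ≤ transposeFn (cfun p) k :=
  tr_galois (cPartition hp).2.1 (cPartition hp).2.2.1 hi hk

private lemma partA (hp : IsSpecialDPartition (2*N) p) :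
    nsdSet (transposeFn (cfun p)) = (fun r => (p (2*r+1) + 1) / 2) '' markedSet p := by
  have hmono := hp.1.1.2.1
  ext j
  constructor
  · -- nsd ⊆ image
    rintro ⟨hj1, r, m, hr1, hmu2j, hrun, hmuend⟩
    -- c-facts via Galois
    have hcA : 2*j ≤ cfun p (2*r+1) :=
      (gal_c hp (by omega) (by omega)).mpr (by omega)
    have hm1 : transposeFn (cfun p) (2*j+1) ≤ 2*r := by
      rcases Nat.eq_zero_or_pos m with hm0 | hm0
      · rw [hm0] at hmuend
        simp only [Nat.mul_zero, Nat.add_zero] at hmuend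
        omega
      · have := hrun (2*j+1) le_rfl (by omega)
        omega
    have hcB : cfun p (2*r+1) ≤ 2*j := by
      by_contra hcon
      have := (gal_c hp (i := 2*r+1) (k := 2*j+1) (by omega) (by omega)).mp (by omega)
      omega
    have hcC1 : 2*j+2*m ≤ cfun p (2*r) := by
      apply (gal_c hp (i := 2*r) (k := 2*j+2*m) (by omega) (by omega)).mpr
      rcases Nat.eq_zero_or_pos m with hm0 | hm0
      · rw [hm0]
        simp only [Nat.mul_zero, Nat.add_zero]
        omega
      · have := hrun (2*j+2*m) (by omega) le_rfl
        omega
    have hcC2 : cfun p (2*r) ≤ 2*j+2*m := by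
      by_contra hcon
      have := (gal_c hp (i := 2*r) (k := 2*j+2*m+1) (by omega) (by omega)).mp (by omega)
      omega
    have hcD : 2*j+2*m+1 ≤ cfun p (2*r-1) :=
      (gal_c hp (by omega) (by omega)).mpr (by omega)
    have hcE : cfun p (2*r+2) < 2*j := by
      by_contra hcon
      have := (gal_c hp (i := 2*r+2) (k := 2*j) (by omega) (by omega)).mp (by omega)
      omega
    -- cval equations
    have hv1 := cval hp (2*r+1) (by omega)
    simp only [Nat.add_sub_cancel] at hv1
    have hv2 := cval hp (2*r) (by omega)
    have hv3 := cval hp (2*r+2) (by omega)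
    rw [show 2*r+2-1 = 2*r+1 from by omega] at hv3
    have hv4 := cval hp (2*r-1) (by omega)
    rw [show 2*r-1-1 = 2*r-2 from by omega] at hv4
    have hle1 := Dm_le p (2*r-2)
    have hle2 := Dm_le p (2*r-1)
    have hle3 := Dm_le p (2*r)
    have hle4 := Dm_le p (2*r+1)
    have hle5 := Dm_le p (2*r+2)
    have hsp2 := spec_pair hp (2*r-1) (by omega)
    rw [show 2*r-1+1 = 2*r from by omega] at hsp2
    rcases Nat.even_or_odd (p (2*r+1)) with he | ho
    · -- p (2r+1) even : contradiction
      exfalso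
      rw [Nat.even_iff] at he
      have hsp1 := spec_pair hp (2*r+1) (by omega)
      rw [show 2*r+1+1 = 2*r+2 from by omega] at hsp1
      have hD1 : Dm p (2*r+1) = 0 := by rw [Dm_zero_iff]; omega
      have hD2 : Dm p (2*r+2) = 0 := by rw [Dm_zero_iff]; rintro ⟨h1, _⟩; omega
      -- c (2r+1) = 2j, so p (2r+1) = 2j + Dm p (2r)
      have hDa : Dm p (2*r) = 0 := by have := Dm_le p (2*r); omega
      have hpj : p (2*r+1) = 2*j := by omega
      have hKa := K_a hp (2*r+1) (by omega) he (by omega)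
      rw [show 2*r+1+1 = 2*r+2 from by omega] at hKa
      omega
    · rw [Nat.odd_iff] at ho
      have hD1 : Dm p (2*r+1) = 1 := by rw [Dm_one_iff]; exact ⟨ho, Or.inl (by omega)⟩
      have hD2r0 : Dm p (2*r) = 0 ∧ p (2*r+1) = 2*j - 1 ∧ 2*j = p (2*r+1) + 1 := by
        refine ⟨?_, by omega, by omega⟩
        omega
      rcases Nat.even_or_odd (p (2*r)) with he2 | ho2
      · -- p (2r) even : contradiction
        exfalso
        rw [Nat.even_iff] at he2
        have hDm1 : Dm p (2*r-1) = 0 := by rw [Dm_zero_iff]; omega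
        have hDm2 : Dm p (2*r-2) = 0 := by
          rw [Dm_zero_iff]
          rintro ⟨h1, h2 | h2⟩
          · omega
          · rw [show 2*r-2+1 = 2*r-1 from by omega] at h2
            omega
        -- c (2r) = p (2r), c (2r-1) = p (2r-1)
        have hKb := K_b hp (2*r-1) (by omega) (by rw [show 2*r-1+1 = 2*r from by omega]; omega)
        rw [show 2*r-1+1 = 2*r from by omega] at hKb
        omega
      · rw [Nat.odd_iff] at ho2
        have hne : p (2*r+1) < p (2*r) := by
          have hD2r := hD2r0.1
          rw [Dm_zero_iff] at hD2r
          have hle : p (2*r+1) ≤ p (2*r) := hmono (2*r) (2*r+1) (by omega) (by omega)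
          by_contra hcon
          exact hD2r ⟨ho2, Or.inr (by omega)⟩
        refine ⟨r, ⟨hr1, Nat.odd_iff.mpr ho2, Nat.odd_iff.mpr ho, hne⟩, ?_⟩
        show (p (2*r+1) + 1) / 2 = j
        omega
  · -- image ⊆ nsd
    rintro ⟨r, ⟨hr1, ho1, ho2, hlt⟩, rfl⟩
    show (p (2*r+1) + 1) / 2 ∈ nsdSet (transposeFn (cfun p))
    rw [Nat.odd_iff] at ho1 ho2
    have hD2r1 : Dm p (2*r+1) = 1 := by rw [Dm_one_iff]; exact ⟨ho2, Or.inl (by omega)⟩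
    have hD2r : Dm p (2*r) = 0 := by
      rw [Dm_zero_iff]; rintro ⟨h1, h2 | h2⟩ <;> omega
    have hD2rm1 : Dm p (2*r-1) = 1 := by
      rw [Dm_one_iff]
      have := spec_pair hp (2*r-1) (by omega)
      rw [show 2*r-1+1 = 2*r from by omega] at this
      exact ⟨by omega, Or.inl (by omega)⟩
    have hle5 := Dm_le p (2*r+2)
    have hle1 := Dm_le p (2*r-2)
    have hv1 := cval hp (2*r+1) (by omega)
    simp only [Nat.add_sub_cancel] at hv1
    have hv2 := cval hp (2*r) (by omega)
    have hv3 := cval hp (2*r+2) (by omega)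
    rw [show 2*r+2-1 = 2*r+1 from by omega] at hv3
    have hv4 := cval hp (2*r-1) (by omega)
    rw [show 2*r-1-1 = 2*r-2 from by omega] at hv4
    have hc1 : cfun p (2*r+1) = p (2*r+1) + 1 := by omega
    have hc2 : cfun p (2*r) = p (2*r) - 1 := by omega
    have hp21 : p (2*r+2) ≤ p (2*r+1) := hmono (2*r+1) (2*r+2) (by omega) (by omega)
    have hp10 : p (2*r) ≤ p (2*r-1) := hmono (2*r-1) (2*r) (by omega) (by omega)
    have hc3 : cfun p (2*r+2) ≤ p (2*r+1) := by omega
    have hc4 : p (2*r-1) ≤ cfun p (2*r-1) := by omega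
    -- j and m
    set j := (p (2*r+1) + 1) / 2 with hj
    have h2j : 2*j = p (2*r+1) + 1 := by omega
    have hcge : cfun p (2*r+1) ≤ cfun p (2*r) := (cPartition hp).2.1 (2*r) (2*r+1) (by omega) (by omega)
    obtain ⟨m, hm⟩ : ∃ m, cfun p (2*r) = 2*j + 2*m := by
      have : (cfun p (2*r)) % 2 = 0 := by omega
      exact ⟨(cfun p (2*r) - 2*j)/2, by omega⟩
    refine ⟨by omega, r, m, hr1, ?_, ?_, ?_⟩
    · -- mu (2j) = 2r+1
      have hA : 2*r+1 ≤ transposeFn (cfun p) (2*j) :=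
        (gal_c hp (by omega) (by omega)).mp (by omega)
      have hB : ¬ (2*r+2 ≤ transposeFn (cfun p) (2*j)) := by
        intro hcon
        have := (gal_c hp (i := 2*r+2) (k := 2*j) (by omega) (by omega)).mpr hcon
        omega
      omega
    · -- run
      intro i hi1 hi2
      have hA : 2*r ≤ transposeFn (cfun p) i :=
        (gal_c hp (i := 2*r) (k := i) (by omega) (by omega)).mp (by omega)
      have hB : ¬ (2*r+1 ≤ transposeFn (cfun p) i) := by
        intro hcon
        have := (gal_c hp (i := 2*r+1) (k := i) (by omega) (by omega)).mpr hcon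
        omega
      omega
    · -- end
      have hA : 2*r-1 ≤ transposeFn (cfun p) (2*j+2*m+1) :=
        (gal_c hp (i := 2*r-1) (k := 2*j+2*m+1) (by omega) (by omega)).mp (by omega)
      have hB : ¬ (2*r ≤ transposeFn (cfun p) (2*j+2*m+1)) := by
        intro hcon
        have := (gal_c hp (i := 2*r) (k := 2*j+2*m+1) (by omega) (by omega)).mpr hcon
        omega
      omega

private lemma injA (hp : IsSpecialDPartition (2*N) p) :
    Set.InjOn (fun r => (p (2*r+1) + 1) / 2) (markedSet p) := by
  have hmono := hp.1.1.2.1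
  have key : ∀ r r', r ∈ markedSet p → r' ∈ markedSet p → r < r' →
      (p (2*r'+1) + 1) / 2 < (p (2*r+1) + 1) / 2 := by
    rintro r r' ⟨hr1, _, ho2, _⟩ ⟨hr1', _, ho2', hlt'⟩ hrr
    rw [Nat.odd_iff] at ho2 ho2'
    have h1 : p (2*r') ≤ p (2*r+1) := hmono (2*r+1) (2*r') (by omega) (by omega)
    omega
  intro r hr r' hr' heq
  simp only [] at heq
  rcases Nat.lt_trichotomy r r' with h | h | h
  · have := key r r' hr hr' h; omega
  · exact h
  · have := key r' r hr' hr h; omega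

private lemma partB (hp : IsSpecialDPartition (2*N) p) :
    markedSet (transposeFn (cfun p)) = (fun j => p (2*j) / 2) '' nsdSet p := by
  have hmono := hp.1.1.2.1
  have cmonoG := (cPartition hp).2.1
  ext q
  constructor
  · -- marked(mu) ⊆ image
    rintro ⟨hq1, ho1, ho2, hlt⟩
    rw [Nat.odd_iff] at ho1 ho2
    set a := transposeFn (cfun p) (2*q) with ha
    set b := transposeFn (cfun p) (2*q+1) with hb
    have hb1 : 1 ≤ b := by omega
    have ha1 : 1 ≤ a := by omega
    have hba2 : b + 2 ≤ a := by omega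
    have hc_a : 2*q ≤ cfun p a := (gal_c hp ha1 (by omega)).mpr (by omega)
    have hc_a1 : cfun p (a+1) < 2*q := by
      by_contra hcon
      have := (gal_c hp (i := a+1) (k := 2*q) (by omega) (by omega)).mp (by omega)
      omega
    have hc_b : 2*q+1 ≤ cfun p b := (gal_c hp hb1 (by omega)).mpr (by omega)
    have hc_b1 : cfun p (b+1) ≤ 2*q := by
      by_contra hcon
      have := (gal_c hp (i := b+1) (k := 2*q+1) (by omega) (by omega)).mp (by omega)
      omega
    have hrun : ∀ k, b+1 ≤ k → k ≤ a → cfun p k = 2*q := by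
      intro k h1 h2
      have hk1 : cfun p k ≤ cfun p (b+1) := cmonoG (b+1) k (by omega) h1
      have hk2 : cfun p a ≤ cfun p k := cmonoG k a (by omega) h2
      omega
    -- Step 1 : p a = 2q - 1
    have hca : cfun p a = 2*q := hrun a (by omega) le_rfl
    have hva := cval hp a (by omega)
    have hlea := Dm_le p a
    have hlea1 := Dm_le p (a-1)
    have hDa1 : Dm p (a-1) = 0 := by
      by_contra hcon
      have h1 : Dm p (a-1) = 1 := by omega
      rw [Dm_one_iff] at h1
      obtain ⟨hx1, hx2 | hx2⟩ := h1
      · omega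
      · rw [show a-1+1 = a from by omega] at hx2
        have hDa : Dm p a = 1 := by rw [Dm_one_iff]; exact ⟨by omega, Or.inl (by omega)⟩
        omega
    have hpa : p a = 2*q - 1 ∧ Dm p a = 1 := by
      rcases Nat.even_or_odd (p a) with he | ho
      · exfalso
        rw [Nat.even_iff] at he
        have hDa0 : Dm p a = 0 := by rw [Dm_zero_iff]; rintro ⟨h1, _⟩; omega
        have hpaw : p a = 2*q := by omega
        have hKa := K_a hp a (by omega) he (by omega)
        have hva1 := cval hp (a+1) (by omega)
        simp only [Nat.add_sub_cancel] at hva1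
        have hDa10 : Dm p (a+1) = 0 := by
          rw [Dm_zero_iff]; rintro ⟨h1, _⟩; omega
        omega
      · rw [Nat.odd_iff] at ho
        have hDa : Dm p a = 1 := by rw [Dm_one_iff]; exact ⟨ho, Or.inl (by omega)⟩
        omega
    -- Step 2 : p (b+1) = 2q + 1
    have hcu : cfun p (b+1) = 2*q := hrun (b+1) le_rfl (by omega)
    have hvu := cval hp (b+1) (by omega)
    simp only [Nat.add_sub_cancel] at hvu
    have hleb := Dm_le p b
    have hleu := Dm_le p (b+1)
    have hspb := spec_pair hp b (by omega)
    have hpu : p (b+1) = 2*q + 1 := by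
      rcases Nat.even_or_odd (p (b+1)) with he | ho
      · exfalso
        rw [Nat.even_iff] at he
        have hDb : Dm p b = 0 := by rw [Dm_zero_iff]; rintro ⟨h1, _⟩; omega
        have hDu : Dm p (b+1) = 0 := by rw [Dm_zero_iff]; rintro ⟨h1, _⟩; omega
        have hpb : p (b+1) ≤ p b := hmono b (b+1) (by omega) (by omega)
        rcases Nat.eq_or_lt_of_le hpb with heq | hltb
        · have hvb := cval hp b (by omega)
          have hDbm := Dm_le p (b-1)
          omega
        · have hKb := K_b hp b (by omega) (by omega)
          omega
      · rw [Nat.odd_iff] at ho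
        have hDb : Dm p b = 1 := by rw [Dm_one_iff]; exact ⟨by omega, Or.inl (by omega)⟩
        omega
    -- Step 3 : interior values
    have claim_odd : ∀ k, b+2 ≤ k → k ≤ a-1 → k % 2 = 1 → (p k = 2*q ∨ p k = 2*q - 1) := by
      intro k h1 h2 hk
      have hck : cfun p k = 2*q := hrun k (by omega) (by omega)
      have hvk := cval hp k (by omega)
      have hlek := Dm_le p k
      have hlek1 := Dm_le p (k-1)
      have hDk1 : Dm p (k-1) = 0 := by
        by_contra hcon
        have h1' : Dm p (k-1) = 1 := by omega
        rw [Dm_one_iff] at h1'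
        obtain ⟨hx1, hx2 | hx2⟩ := h1'
        · omega
        · rw [show k-1+1 = k from by omega] at hx2
          have hDk : Dm p k = 1 := by rw [Dm_one_iff]; exact ⟨by omega, Or.inl hk⟩
          omega
      rcases Nat.even_or_odd (p k) with he | ho
      · rw [Nat.even_iff] at he
        have hDk : Dm p k = 0 := by rw [Dm_zero_iff]; rintro ⟨hx, _⟩; omega
        omega
      · rw [Nat.odd_iff] at ho
        have hDk : Dm p k = 1 := by rw [Dm_one_iff]; exact ⟨ho, Or.inl hk⟩
        omega
    have claim_even : ∀ k, b+2 ≤ k → k ≤ a-1 → k % 2 = 0 → (p k = 2*q ∨ p k = 2*q + 1) := by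
      intro k h1 h2 hk
      have hck : cfun p k = 2*q := hrun k (by omega) (by omega)
      have hvk := cval hp k (by omega)
      have hlek := Dm_le p k
      have hlek1 := Dm_le p (k-1)
      have hspk := spec_pair hp (k-1) (by omega)
      rw [show k-1+1 = k from by omega] at hspk
      rcases Nat.even_or_odd (p k) with he | ho
      · rw [Nat.even_iff] at he
        have hDk : Dm p k = 0 := by rw [Dm_zero_iff]; rintro ⟨hx, _⟩; omega
        have hDk1 : Dm p (k-1) = 0 := by rw [Dm_zero_iff]; rintro ⟨hx, _⟩; omega
        omega
      · rw [Nat.odd_iff] at ho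
        have hDk1 : Dm p (k-1) = 1 := by
          rw [Dm_one_iff]; exact ⟨by omega, Or.inl (by omega)⟩
        omega
    have run_even : ∀ k, b+2 ≤ k → k ≤ a-1 → k % 2 = 0 → p k = 2*q := by
      intro k h1 h2 hk
      rcases claim_even k h1 h2 hk with h | h
      · exact h
      · exfalso
        have hodd := claim_odd (k-1) (by omega) (by omega) (by omega)
        have hm := hmono (k-1) k (by omega) (by omega)
        omega
    have run_all : ∀ k, b+2 ≤ k → k ≤ a-1 → p k = 2*q := by
      intro k h1 h2
      rcases Nat.even_or_odd k with he | ho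
      · exact run_even k h1 h2 (Nat.even_iff.mp he)
      · have hk1 := Nat.odd_iff.mp ho
        rcases claim_odd k h1 h2 hk1 with h | h
        · exact h
        · exfalso
          have hev := run_even (k+1) (by omega) (by omega) (by omega)
          have hm := hmono k (k+1) (by omega) (by omega)
          omega
    obtain ⟨jj, hjj⟩ : ∃ jj, b+1 = 2*jj := ⟨(b+1)/2, by omega⟩
    obtain ⟨mm, hmm⟩ : ∃ mm, a = 2*jj + 2*mm + 1 := ⟨(a - b - 2)/2, by omega⟩
    refine ⟨jj, ⟨by omega, q, mm, by omega, ?_, ?_, ?_⟩, ?_⟩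
    · rw [show 2*jj = b+1 from by omega]
      omega
    · intro i hi1 hi2
      exact run_all i (by omega) (by omega)
    · rw [show 2*jj+2*mm+1 = a from by omega]
      omega
    · show p (2*jj) / 2 = q
      rw [show 2*jj = b+1 from by omega]
      omega
  · -- image ⊆ marked(mu)
    rintro ⟨j, ⟨hj1, r, m, hr1, h2j, hrun, hend⟩, rfl⟩
    show p (2*j) / 2 ∈ markedSet (transposeFn (cfun p))
    rw [show p (2*j) / 2 = r from by omega]
    have hpj1 : p (2*j+1) ≤ 2*r := by
      rcases Nat.eq_zero_or_pos m with hm0 | hm0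
      · rw [hm0] at hend; simp only [Nat.mul_zero, Nat.add_zero] at hend; omega
      · have := hrun (2*j+1) le_rfl (by omega); omega
    have hD2j : Dm p (2*j) = 0 := by
      rw [Dm_zero_iff]; rintro ⟨h1, h2 | h2⟩ <;> omega
    have hspj := spec_pair hp (2*j-1) (by omega)
    rw [show 2*j-1+1 = 2*j from by omega] at hspj
    have hD2jm1 : Dm p (2*j-1) = 1 := by
      rw [Dm_one_iff]; exact ⟨by omega, Or.inl (by omega)⟩
    have hv2j := cval hp (2*j) (by omega)
    have hc2j : cfun p (2*j) = 2*r := by omega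
    have hDrun : ∀ i, 2*j+1 ≤ i → i ≤ 2*j+2*m → Dm p i = 0 := by
      intro i h1 h2
      rw [Dm_zero_iff]
      rintro ⟨h3, _⟩
      have := hrun i h1 h2
      omega
    have hcrun : ∀ i, 2*j+1 ≤ i → i ≤ 2*j+2*m → cfun p i = 2*r := by
      intro i h1 h2
      have hvi := cval hp i (by omega)
      have hDi := hDrun i h1 h2
      have hDim : Dm p (i-1) = 0 := by
        rcases Nat.eq_or_lt_of_le h1 with he | hlt2
        · rw [show i-1 = 2*j from by omega]; exact hD2j
        · exact hDrun (i-1) (by omega) (by omega)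
      have := hrun i h1 h2
      omega
    have hDa : Dm p (2*j+2*m+1) = 1 := by
      rw [Dm_one_iff]
      exact ⟨by omega, Or.inl (by omega)⟩
    have hva := cval hp (2*j+2*m+1) (by omega)
    simp only [Nat.add_sub_cancel] at hva
    have hDam : Dm p (2*j+2*m) = 0 := by
      rcases Nat.eq_zero_or_pos m with hm0 | hm0
      · rw [hm0]; simp only [Nat.mul_zero, Nat.add_zero]; exact hD2j
      · exact hDrun (2*j+2*m) (by omega) le_rfl
    have hca : cfun p (2*j+2*m+1) = 2*r := by omega
    have hva1 := cval hp (2*j+2*m+2) (by omega)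
    rw [show 2*j+2*m+2-1 = 2*j+2*m+1 from by omega] at hva1
    have hpa1 : p (2*j+2*m+2) ≤ 2*r-1 := by
      have := hmono (2*j+2*m+1) (2*j+2*m+2) (by omega) (by omega)
      omega
    have hlea2 := Dm_le p (2*j+2*m+2)
    have hca1 : cfun p (2*j+2*m+2) < 2*r := by omega
    have hv2jm1 := cval hp (2*j-1) (by omega)
    rw [show 2*j-1-1 = 2*j-2 from by omega] at hv2jm1
    have hle2jm2 := Dm_le p (2*j-2)
    have hp2jm1 : p (2*j) ≤ p (2*j-1) := hmono (2*j-1) (2*j) (by omega) (by omega)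
    have hcjm1 : 2*r+1 ≤ cfun p (2*j-1) := by omega
    have hmua : transposeFn (cfun p) (2*r) = 2*j+2*m+1 := by
      have hA : 2*j+2*m+1 ≤ transposeFn (cfun p) (2*r) :=
        (gal_c hp (by omega) (by omega)).mp (by omega)
      have hB : ¬ (2*j+2*m+2 ≤ transposeFn (cfun p) (2*r)) := by
        intro hcon
        have := (gal_c hp (i := 2*j+2*m+2) (k := 2*r) (by omega) (by omega)).mpr hcon
        omega
      omega
    have hmub : transposeFn (cfun p) (2*r+1) = 2*j-1 := by
      have hA : 2*j-1 ≤ transposeFn (cfun p) (2*r+1) :=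
        (gal_c hp (by omega) (by omega)).mp (by omega)
      have hB : ¬ (2*j ≤ transposeFn (cfun p) (2*r+1)) := by
        intro hcon
        have := (gal_c hp (i := 2*j) (k := 2*r+1) (by omega) (by omega)).mpr hcon
        omega
      omega
    refine ⟨hr1, ?_, ?_, ?_⟩
    · rw [hmua]; exact Nat.odd_iff.mpr (by omega)
    · rw [hmub]; exact Nat.odd_iff.mpr (by omega)
    · rw [hmua, hmub]; omega

private lemma injB (hp : IsSpecialDPartition (2*N) p) :
    Set.InjOn (fun j => p (2*j) / 2) (nsdSet p) := by
  have hmono := hp.1.1.2.1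
  have key : ∀ j j', j ∈ nsdSet p → j' ∈ nsdSet p → j < j' → p (2*j') / 2 < p (2*j) / 2 := by
    rintro j j' ⟨hj1, r, m, hr1, h2j, hrun, hend⟩ ⟨hj1', r', m', hr1', h2j', hrun', hend'⟩ hjj
    have hpj1 : p (2*j+1) ≤ 2*r := by
      rcases Nat.eq_zero_or_pos m with hm0 | hm0
      · rw [hm0] at hend; simp only [Nat.mul_zero, Nat.add_zero] at hend; omega
      · have := hrun (2*j+1) le_rfl (by omega); omega
    have h1 : p (2*j') ≤ p (2*j+1) := hmono (2*j+1) (2*j') (by omega) (by omega)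
    omega
  intro j hj j' hj' heq
  simp only [] at heq
  rcases Nat.lt_trichotomy j j' with h | h | h
  · have := key j j' hj hj' h; omega
  · exact h
  · have := key j' j hj' hj h; omega

end Special

/-- For a special D-partition `p` of `2N`, the number of marked pairs of `p`
equals `s(d(p))`, the number of (independent) non-special degenerations of the
Spaltenstein dual; equivalently, for every special D-partition `σ`, `s(σ)` equals
the number of marked pairs of `d(σ)`. -/
theorem marked_pairs_eq_nonspecial_degenerations (N : ℕ) :
    (∀ p : ℕ → ℕ, IsSpecialDPartition (2 * N) p →
      (markedSet p).ncard = (nsdSet (spaltDual (2 * N) p)).ncard) ∧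
    (∀ σ : ℕ → ℕ, IsSpecialDPartition (2 * N) σ →
      (nsdSet σ).ncard = (markedSet (spaltDual (2 * N) σ)).ncard) := by
  constructor
  · intro p hp
    rw [spalt_eval hp, partA hp, Set.ncard_image_of_injOn (injA hp)]
  · intro σ hσ
    rw [spalt_eval hσ, partB hσ, Set.ncard_image_of_injOn (injB hσ)]
end
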